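/- arXiv:1807.06262 — 8 statements merged into one kernel-verified Lean document; each statement's English description precedes it below -/
import Mathlib

section
/- Let λ : ℝ → ℝ be continuously differentiable with λ and λ' bounded on [0, ∞), and suppose λ does not tend to zero as τ → +∞. Let (α, u) : [0, ∞) → ℝ² be a solution of the reduced system α' = u², u' = −αu − λ(τ) with α(0) > 0. Then α(τ) → +∞ as τ → +∞. -/
open Filter Set

/-- Forward invariance: if `f 0 < c` and `f' < 0` whenever `f = c`, then `f < c` on `[0,∞)`. -/
lemma stays_below (f f' : ℝ → ℝ) (c : ℝ)
    (hf : ∀ t : ℝ, 0 ≤ t → HasDerivAt f (f' t) t)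
    (h0 : f 0 < c)
    (hbd : ∀ t : ℝ, 0 ≤ t → f t = c → f' t < 0) :
    ∀ t : ℝ, 0 ≤ t → f t < c := by
  intro t₁ ht₁
  by_contra hcon
  push_neg at hcon
  have hcontOn : ContinuousOn f (Set.Icc 0 t₁) := fun x hx =>
    ((hf x hx.1).continuousAt).continuousWithinAt
  set S := Set.Icc 0 t₁ ∩ f ⁻¹' Set.Ici c with hSdef
  have hclosed : IsClosed S :=
    hcontOn.preimage_isClosed_of_isClosed isClosed_Icc isClosed_Ici
  have hne : S.Nonempty := ⟨t₁, ⟨ht₁, le_refl t₁⟩, hcon⟩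
  have hbdd : BddBelow S := ⟨0, fun x hx => hx.1.1⟩
  set s := sInf S with hs_def
  have hsS : s ∈ S := hclosed.csInf_mem hne hbdd
  have hs0 : 0 ≤ s := hsS.1.1
  have hfs : c ≤ f s := hsS.2
  have hlt : ∀ t, 0 ≤ t → t < s → f t < c := by
    intro t ht hts
    by_contra h
    push_neg at h
    exact absurd (csInf_le hbdd ⟨⟨ht, hts.le.trans hsS.1.2⟩, h⟩) (not_le.mpr hts)
  have hspos : 0 < s := by
    rcases hs0.lt_or_eq with h | h
    · exact h
    · rw [← h] at hfs; linarith
  have hex : ∃ t, 0 < t ∧ t < s ∧ c ≤ f t := by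
    have hmem : Set.Ioo (0:ℝ) s ∈ nhdsWithin s (Set.Iio s) := by
      apply inter_mem
      · exact mem_nhdsWithin_of_mem_nhds (Ioi_mem_nhds hspos)
      · exact self_mem_nhdsWithin
    rcases eq_or_lt_of_le hfs with heq | hgt
    · have hd := hbd s hs0 heq.symm
      have hslope : Tendsto (slope f s) (nhdsWithin s {s}ᶜ) (nhds (f' s)) :=
        hasDerivAt_iff_tendsto_slope.mp (hf s hs0)
      have hslope' : Tendsto (slope f s) (nhdsWithin s (Set.Iio s)) (nhds (f' s)) :=
        hslope.mono_left (nhdsWithin_mono _ (fun x hx => ne_of_lt hx))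
      have hev : ∀ᶠ t in nhdsWithin s (Set.Iio s), slope f s t < 0 :=
        hslope'.eventually (eventually_lt_nhds hd)
      have : ∀ᶠ t in nhdsWithin s (Set.Iio s), 0 < t ∧ t < s ∧ c ≤ f t := by
        filter_upwards [hev, hmem] with t hst ht
        refine ⟨ht.1, ht.2, ?_⟩
        have hslopedef : slope f s t = (f t - f s) / (t - s) := slope_def_field f s t
        rw [hslopedef] at hst
        have hts : t - s < 0 := by linarith [ht.2]
        rcases div_neg_iff.mp hst with ⟨h1, h2⟩ | ⟨h1, h2⟩
        · linarith
        · linarith [heq]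
      exact this.exists
    · have hcont : Tendsto f (nhdsWithin s (Set.Iio s)) (nhds (f s)) :=
        ((hf s hs0).continuousAt.tendsto).mono_left nhdsWithin_le_nhds
      have hev : ∀ᶠ t in nhdsWithin s (Set.Iio s), c < f t :=
        hcont.eventually (eventually_gt_nhds hgt)
      have : ∀ᶠ t in nhdsWithin s (Set.Iio s), 0 < t ∧ t < s ∧ c ≤ f t := by
        filter_upwards [hev, hmem] with t hct ht
        exact ⟨ht.1, ht.2, hct.le⟩
      exact this.exists
  obtain ⟨t, ht0, hts, hftc⟩ := hex
  exact absurd hftc (not_le.mpr (hlt t ht0.le hts))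


lemma sub_ge_of_deriv_ge (G g : ℝ → ℝ) (a b c : ℝ) (hab : a ≤ b)
    (hG : ∀ s ∈ Set.Icc a b, HasDerivAt G (g s) s)
    (hge : ∀ s ∈ Set.Icc a b, c ≤ g s) :
    c * (b - a) ≤ G b - G a := by
  set F := fun s : ℝ => G s - c * s with hF_def
  have hF : ∀ s ∈ Set.Icc a b, HasDerivAt F (g s - c) s := by
    intro s hs
    have h1 : HasDerivAt (fun y : ℝ => c * y) c s := by
      simpa using (hasDerivAt_id s).const_mul c
    exact (hG s hs).sub h1
  have hmono : MonotoneOn F (Set.Icc a b) := by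
    apply monotoneOn_of_deriv_nonneg (convex_Icc a b)
    · exact fun x hx => ((hF x hx).continuousAt).continuousWithinAt
    · intro x hx
      rw [interior_Icc] at hx
      exact ((hF x (Set.Ioo_subset_Icc_self hx)).differentiableAt).differentiableWithinAt
    · intro x hx
      rw [interior_Icc] at hx
      rw [(hF x (Set.Ioo_subset_Icc_self hx)).deriv]
      linarith [hge x (Set.Ioo_subset_Icc_self hx)]
  have h := hmono (Set.left_mem_Icc.mpr hab) (Set.right_mem_Icc.mpr hab) hab
  simp only [hF_def] at h
  linarith

lemma barbalat (G g g' : ℝ → ℝ) (K L : ℝ)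
    (hG : ∀ t : ℝ, 0 ≤ t → HasDerivAt G (g t) t)
    (hg : ∀ t : ℝ, 0 ≤ t → HasDerivAt g (g' t) t)
    (hK : ∀ t : ℝ, 0 ≤ t → |g' t| ≤ K)
    (hGL : Tendsto G atTop (nhds L)) :
    Tendsto g atTop (nhds 0) := by
  have hK0 : 0 ≤ K := le_trans (abs_nonneg _) (hK 0 le_rfl)
  rw [Metric.tendsto_atTop]
  intro ε hε
  set h := ε / (2 * (K + 1)) with hh_def
  have hhpos : 0 < h := by positivity
  obtain ⟨N, hN⟩ := Metric.tendsto_atTop.mp hGL (ε * h / 4) (by positivity)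
  refine ⟨max N 0, fun t ht => ?_⟩
  have htN : N ≤ t := le_trans (le_max_left _ _) ht
  have ht0 : (0:ℝ) ≤ t := le_trans (le_max_right _ _) ht
  rw [Real.dist_eq, sub_zero]
  by_contra hcon
  push_neg at hcon
  -- MVT bound on [t, t+h]
  have hsub : Set.Icc t (t + h) ⊆ Set.Ici (0:ℝ) := fun s hs => le_trans ht0 hs.1
  have hmvt : ∀ s ∈ Set.Icc t (t + h), |g s - g t| ≤ ε / 2 := by
    intro s hs
    have hb := Convex.norm_image_sub_le_of_norm_hasDerivWithin_le
      (f := g) (f' := g') (s := Set.Icc t (t + h)) (C := K)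
      (fun x hx => (hg x (hsub hx)).hasDerivWithinAt)
      (fun x hx => by simpa [Real.norm_eq_abs] using hK x (hsub hx))
      (convex_Icc _ _) (Set.left_mem_Icc.mpr (by linarith)) hs
    rw [Real.norm_eq_abs, Real.norm_eq_abs] at hb
    have h1 : |s - t| ≤ h := by
      rw [abs_of_nonneg (by linarith [hs.1])]
      linarith [hs.2]
    have h2 : K * |s - t| ≤ K * h := mul_le_mul_of_nonneg_left h1 hK0
    have h3 : K * h ≤ ε / 2 := by
      rw [hh_def, ← mul_div_assoc, div_le_div_iff₀ (by positivity) (by norm_num)]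
      nlinarith
    linarith
  have hGdiff : |G (t + h) - G t| < ε * h / 2 := by
    have h1 := hN t htN
    have h2 := hN (t + h) (by linarith)
    rw [Real.dist_eq] at h1 h2
    have : |G (t + h) - G t| ≤ |G (t+h) - L| + |G t - L| := by
      have := abs_sub_abs_le_abs_sub (G (t+h) - L) (G t - L)
      calc |G (t + h) - G t| = |(G (t+h) - L) - (G t - L)| := by ring_nf
        _ ≤ |G (t+h) - L| + |G t - L| := abs_sub _ _
    linarith
  rcases le_or_gt ε (g t) with hpos | hneg
  · -- g ≥ ε/2 on the interval
    have hlow : ∀ s ∈ Set.Icc t (t + h), ε / 2 ≤ g s := by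
      intro s hs
      have := hmvt s hs
      have := abs_le.mp this
      linarith [this.1]
    have := sub_ge_of_deriv_ge G g t (t + h) (ε / 2) (by linarith)
      (fun s hs => hG s (hsub hs)) hlow
    have habs : G (t+h) - G t ≤ |G (t+h) - G t| := le_abs_self _
    have : ε / 2 * h ≤ G (t + h) - G t := by simpa using this
    nlinarith
  · -- g t ≤ -ε
    have hneg' : g t ≤ -ε := by
      rcases abs_cases (g t) with ⟨he, _⟩ | ⟨he, _⟩ <;> linarith [hcon]
    have hlow : ∀ s ∈ Set.Icc t (t + h), ε / 2 ≤ -(g s) := by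
      intro s hs
      have := abs_le.mp (hmvt s hs)
      linarith [this.2]
    have := sub_ge_of_deriv_ge (fun s => -(G s)) (fun s => -(g s)) t (t + h) (ε / 2) (by linarith)
      (fun s hs => (hG s (hsub hs)).neg) hlow
    have habs : -(G (t+h) - G t) ≤ |G (t+h) - G t| := neg_le_abs _
    have : ε / 2 * h ≤ -G (t + h) - -G t := by simpa using this
    nlinarith

/-- Theorem 1, conclusion 1: for the reduced system `α' = u²`, `u' = -αu - λ(τ)` of the
Chaplygin sleigh with oscillating rotor, with `λ` and `λ'` bounded on `[0, ∞)` and `λ` not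
tending to zero, every solution with `α(0) > 0` satisfies `α(τ) → +∞` as `τ → +∞`. -/
theorem alpha_tendsto_atTop
    (l α u : ℝ → ℝ)
    (hl : ContDiff ℝ 1 l)
    (hl_bdd : ∃ M : ℝ, ∀ τ : ℝ, 0 ≤ τ → |l τ| ≤ M)
    (hl'_bdd : ∃ M : ℝ, ∀ τ : ℝ, 0 ≤ τ → |deriv l τ| ≤ M)
    (hl_not0 : ¬ Tendsto l atTop (nhds 0))
    (hα : ∀ τ : ℝ, 0 ≤ τ → HasDerivAt α (u τ ^ 2) τ)
    (hu : ∀ τ : ℝ, 0 ≤ τ → HasDerivAt u (-(α τ * u τ) - l τ) τ)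
    (hα0 : 0 < α 0) :
    Tendsto α atTop atTop := by
  obtain ⟨M, hM⟩ := hl_bdd
  obtain ⟨M', hM'⟩ := hl'_bdd
  have hM0 : 0 ≤ M := le_trans (abs_nonneg _) (hM 0 le_rfl)
  have hM'0 : 0 ≤ M' := le_trans (abs_nonneg _) (hM' 0 le_rfl)
  have hldiff : Differentiable ℝ l := hl.differentiable one_ne_zero
  -- α is monotone on [0, ∞)
  have hmono : MonotoneOn α (Set.Ici 0) := by
    apply monotoneOn_of_deriv_nonneg (convex_Ici 0)
    · exact fun x hx => ((hα x hx).continuousAt).continuousWithinAt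
    · intro x hx
      rw [interior_Ici] at hx
      exact ((hα x hx.le).differentiableAt).differentiableWithinAt
    · intro x hx
      rw [interior_Ici] at hx
      rw [(hα x hx.le).deriv]
      positivity
  set A := fun t : ℝ => α (max t 0) with hA_def
  have hAmono : Monotone A := fun s t hst =>
    hmono (Set.mem_Ici.mpr (le_max_right _ _)) (Set.mem_Ici.mpr (le_max_right _ _)) (max_le_max hst le_rfl)
  have hAeq : α =ᶠ[atTop] A := by
    filter_upwards [eventually_ge_atTop (0:ℝ)] with t ht
    simp [hA_def, max_eq_left ht]
  rcases tendsto_of_monotone hAmono with hbig | ⟨L, hL⟩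
  · exact hbig.congr' hAeq.symm
  exfalso
  have hαL : Tendsto α atTop (nhds L) := hL.congr' hAeq.symm
  have hub : ∀ t : ℝ, 0 ≤ t → α t ≤ L := by
    intro t ht
    have := hAmono.ge_of_tendsto hL t
    simpa [hA_def, max_eq_left ht] using this
  have hlb : ∀ t : ℝ, 0 ≤ t → α 0 ≤ α t := fun t ht =>
    hmono (Set.self_mem_Ici (a := (0:ℝ))) ht ht
  have hL0 : 0 < L := lt_of_lt_of_le hα0 (hub 0 le_rfl)
  -- bound on u
  set C := max |u 0| (M / α 0) + 1 with hC_def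
  have hC1 : |u 0| ≤ C - 1 := by rw [hC_def]; simp [le_max_left]
  have hC2 : M / α 0 ≤ C - 1 := by rw [hC_def]; simp [le_max_right]
  have hCpos : 0 < C := by
    have := abs_nonneg (u 0); linarith
  have hCα : M < α 0 * C := by
    have h1 : M ≤ α 0 * (C - 1) := by
      rw [div_le_iff₀ hα0] at hC2; linarith [hC2]
    nlinarith
  have husqlt : ∀ t : ℝ, 0 ≤ t → u t ^ 2 < C ^ 2 := by
    apply stays_below (fun t => u t ^ 2) (fun t => 2 * u t * (-(α t * u t) - l t)) (C ^ 2)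
    · intro t ht
      have := (hu t ht).fun_pow 2
      refine this.congr_deriv ?_
      push_cast
      ring
    · nlinarith [abs_nonneg (u 0), sq_abs (u 0)]
    · intro t ht heq
      have habs : |u t| = C := by
        have h1 : |u t| ^ 2 = C ^ 2 := by rw [sq_abs]; exact heq
        nlinarith [abs_nonneg (u t)]
      have h1 : α 0 ≤ α t := hlb t ht
      have h2 : |l t| ≤ M := hM t ht
      have h3 : -(C * M) ≤ u t * l t := by
        have := neg_abs_le (u t * l t)
        have h4 : |u t * l t| ≤ C * M := by
          rw [abs_mul, habs]
          exact mul_le_mul_of_nonneg_left h2 hCpos.le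
        linarith
      nlinarith [heq]
  have huC : ∀ t : ℝ, 0 ≤ t → |u t| ≤ C := by
    intro t ht
    nlinarith [husqlt t ht, sq_abs (u t), abs_nonneg (u t), hCpos]
  -- bound on u'
  have hu'bd : ∀ t : ℝ, 0 ≤ t → |(-(α t * u t) - l t)| ≤ L * C + M := by
    intro t ht
    have h1 : |α t * u t| ≤ L * C := by
      rw [abs_mul, abs_of_pos (lt_of_lt_of_le hα0 (hlb t ht))]
      exact mul_le_mul (hub t ht) (huC t ht) (abs_nonneg _) hL0.le
    calc |(-(α t * u t) - l t)| = |-(α t * u t + l t)| := by ring_nf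
      _ = |α t * u t + l t| := abs_neg _
      _ ≤ |α t * u t| + |l t| := abs_add_le _ _
      _ ≤ L * C + M := add_le_add h1 (hM t ht)
  -- Barbalat I : u² → 0
  have husq0 : Tendsto (fun t => u t ^ 2) atTop (nhds 0) := by
    apply barbalat α (fun t => u t ^ 2)
      (fun t => 2 * u t * (-(α t * u t) - l t)) (2 * C * (L * C + M)) L hα
    · intro t ht
      have := (hu t ht).fun_pow 2
      refine this.congr_deriv ?_
      push_cast
      ring
    · intro t ht
      rw [abs_mul, abs_mul, abs_two]
      have := huC t ht
      have := hu'bd t ht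
      have h0 : (0:ℝ) ≤ L * C + M := le_trans (abs_nonneg _) (hu'bd 0 le_rfl)
      calc 2 * |u t| * |(-(α t * u t) - l t)| ≤ 2 * C * |(-(α t * u t) - l t)| := by nlinarith [abs_nonneg (u t), abs_nonneg (-(α t * u t) - l t)]
        _ ≤ 2 * C * (L * C + M) := by nlinarith
    · exact hαL
  -- u → 0
  have huabs0 : Tendsto (fun t => |u t|) atTop (nhds 0) := by
    have hsq : Tendsto (fun t => Real.sqrt (u t ^ 2)) atTop (nhds (Real.sqrt 0)) :=
      (Real.continuous_sqrt.tendsto 0).comp husq0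
    rw [Real.sqrt_zero] at hsq
    refine hsq.congr fun t => ?_
    exact Real.sqrt_sq_eq_abs (u t)
  have hu0 : Tendsto u atTop (nhds 0) :=
    squeeze_zero_norm (fun t => le_of_eq (Real.norm_eq_abs _)) huabs0
  -- αu → 0
  have hαu0 : Tendsto (fun t => α t * u t) atTop (nhds 0) := by
    apply squeeze_zero_norm' (a := fun t => L * |u t|)
    · filter_upwards [eventually_ge_atTop (0:ℝ)] with t ht
      rw [Real.norm_eq_abs, abs_mul, abs_of_pos (lt_of_lt_of_le hα0 (hlb t ht))]
      exact mul_le_mul_of_nonneg_right (hub t ht) (abs_nonneg _)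
    · simpa using huabs0.const_mul L
  -- Barbalat II : u' → 0
  have hw0 : Tendsto (fun t => -(α t * u t) - l t) atTop (nhds 0) := by
    apply barbalat u (fun t => -(α t * u t) - l t)
      (fun t => -(u t ^ 2 * u t + α t * (-(α t * u t) - l t)) - deriv l t)
      (C ^ 2 * C + L * (L * C + M) + M') 0 hu
    · intro t ht
      exact (((hα t ht).mul (hu t ht)).neg).sub ((hldiff t).hasDerivAt)
    · intro t ht
      have h1 : |u t ^ 2 * u t| ≤ C ^ 2 * C := by
        rw [abs_mul, abs_pow]
        have hc := huC t ht
        have h0 := abs_nonneg (u t)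
        have hsq : |u t| ^ 2 ≤ C ^ 2 := by nlinarith
        calc |u t| ^ 2 * |u t| ≤ C ^ 2 * |u t| := mul_le_mul_of_nonneg_right hsq h0
          _ ≤ C ^ 2 * C := mul_le_mul_of_nonneg_left hc (by positivity)
      have h2 : |α t * (-(α t * u t) - l t)| ≤ L * (L * C + M) := by
        rw [abs_mul, abs_of_pos (lt_of_lt_of_le hα0 (hlb t ht))]
        exact mul_le_mul (hub t ht) (hu'bd t ht) (abs_nonneg _) hL0.le
      have h3 : |deriv l t| ≤ M' := hM' t ht
      calc |(-(u t ^ 2 * u t + α t * (-(α t * u t) - l t)) - deriv l t)|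
          = |-(u t ^ 2 * u t + α t * (-(α t * u t) - l t) + deriv l t)| := by ring_nf
        _ = |u t ^ 2 * u t + α t * (-(α t * u t) - l t) + deriv l t| := abs_neg _
        _ ≤ |u t ^ 2 * u t + α t * (-(α t * u t) - l t)| + |deriv l t| := abs_add_le _ _
        _ ≤ (|u t ^ 2 * u t| + |α t * (-(α t * u t) - l t)|) + |deriv l t| :=
            add_le_add_left (abs_add_le _ _) _
        _ ≤ C ^ 2 * C + L * (L * C + M) + M' := by linarith
    · exact hu0
  -- conclude l → 0
  apply hl_not0
  have : Tendsto (fun t => -(α t * u t) - (-(α t * u t) - l t)) atTop (nhds (-0 - 0)) :=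
    (hαu0.neg).sub hw0
  simp only [neg_zero, sub_zero] at this
  refine this.congr fun t => by ring
end

section
/- Let λ : ℝ → ℝ be continuously differentiable with λ and λ' bounded on [0, ∞), and suppose λ does not tend to zero as τ → +∞. Let (α, u) : [0, ∞) → ℝ² be a solution of the reduced system α' = u², u' = −αu − λ(τ) with α(0) > 0. Then u(τ) → 0 as τ → +∞. -/
open Filter Set

/-- Endpoint comparison: if `g' ≤ 0` on the interior, `g t ≤ g s`. -/
lemma aux_antitone (g g' : ℝ → ℝ) (s t : ℝ) (hst : s ≤ t)
    (hg : ∀ τ ∈ Icc s t, HasDerivAt g (g' τ) τ)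
    (h : ∀ τ ∈ Ioo s t, g' τ ≤ 0) : g t ≤ g s := by
  have hA : AntitoneOn g (Icc s t) := by
    apply antitoneOn_of_deriv_nonpos (convex_Icc s t)
    · exact fun τ hτ => (hg τ hτ).continuousAt.continuousWithinAt
    · intro τ hτ
      rw [interior_Icc] at hτ
      exact (hg τ (Ioo_subset_Icc_self hτ)).differentiableAt.differentiableWithinAt
    · intro τ hτ
      rw [interior_Icc] at hτ
      rw [(hg τ (Ioo_subset_Icc_self hτ)).deriv]
      exact h τ hτ
  exact hA (left_mem_Icc.mpr hst) (right_mem_Icc.mpr hst) hst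

/-- Invariance: if `g' ≤ 0` whenever `g ≥ K`, then `g` stays below `max (g a) K`. -/
lemma aux_inv (g g' : ℝ → ℝ) (a K : ℝ)
    (hg : ∀ τ, a ≤ τ → HasDerivAt g (g' τ) τ)
    (h : ∀ τ, a ≤ τ → K ≤ g τ → g' τ ≤ 0) :
    ∀ t, a ≤ t → g t ≤ max (g a) K := by
  intro t hat
  by_contra hgt
  push_neg at hgt
  set B := max (g a) K with hB
  have hgaB : g a ≤ B := le_max_left _ _
  have hta : a < t := by
    rcases eq_or_lt_of_le hat with rfl | h'
    · exact absurd hgt (not_lt.mpr hgaB)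
    · exact h'
  -- continuous extension trick
  set G : ℝ → ℝ := fun τ => g (max a τ) with hGdef
  have hGc : Continuous G := by
    rw [continuous_iff_continuousAt]
    intro τ
    exact ((hg _ (le_max_left a τ)).continuousAt).comp
      ((continuous_const.max continuous_id).continuousAt)
  set S : Set ℝ := Icc a t ∩ G ⁻¹' (Iic B) with hS
  have hSclosed : IsClosed S := isClosed_Icc.inter (isClosed_Iic.preimage hGc)
  have haS : a ∈ S := ⟨left_mem_Icc.mpr hat, by simp [hGdef, hgaB]⟩
  have hSbdd : BddAbove S := BddAbove.mono (inter_subset_left) bddAbove_Icc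
  set s := sSup S with hs
  have hsS : s ∈ S := hSclosed.csSup_mem ⟨a, haS⟩ hSbdd
  have hsa : a ≤ s := hsS.1.1
  have hgsB : g s ≤ B := by
    have h2 : g (max a s) ≤ B := hsS.2
    rwa [max_eq_right hsa] at h2
  have hst : s < t :=
    lt_of_le_of_ne hsS.1.2 (fun he => absurd hgt (not_lt.mpr (he ▸ hgsB)))
  have hmid : ∀ τ ∈ Ioo s t, B < g τ := by
    intro τ hτ
    by_contra hc
    push_neg at hc
    have hτS : τ ∈ S := by
      refine ⟨⟨hsa.trans hτ.1.le, hτ.2.le⟩, ?_⟩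
      show g (max a τ) ≤ B
      rwa [max_eq_right (hsa.trans hτ.1.le)]
    exact absurd (le_csSup hSbdd hτS) (not_le.mpr hτ.1)
  have := aux_antitone g g' s t hst.le
    (fun τ hτ => hg τ (hsa.trans hτ.1))
    (fun τ hτ => h τ (hsa.trans hτ.1.le) ((le_max_right _ _).trans (hmid τ hτ).le))
  exact absurd hgt (not_lt.mpr (this.trans hgsB))

/-- Reaching + invariance: strict decrease pushes `g` below `K` eventually, forever. -/
lemma aux_reach (g g' : ℝ → ℝ) (a K c : ℝ) (hc : 0 < c)
    (hg : ∀ τ, a ≤ τ → HasDerivAt g (g' τ) τ)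
    (h : ∀ τ, a ≤ τ → K ≤ g τ → g' τ ≤ -c) :
    ∃ s, a ≤ s ∧ ∀ τ, s ≤ τ → g τ ≤ K := by
  have key : ∃ s0, a ≤ s0 ∧ g s0 ≤ K := by
    by_contra hno
    push_neg at hno
    have hgaK : K < g a := hno a le_rfl
    obtain ⟨t, ht⟩ : ∃ t, t = a + (g a - K) / c + 1 := ⟨_, rfl⟩
    have hq : 0 ≤ (g a - K) / c := div_nonneg (by linarith) hc.le
    have htpos : a ≤ t := by linarith
    have hmono := aux_antitone (fun τ => g τ + c * τ) (fun τ => g' τ + c) a t htpos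
      (fun τ hτ => by
        have hcid : HasDerivAt (fun τ : ℝ => c * τ) c τ := by
          simpa using (hasDerivAt_id τ).const_mul c
        exact (hg τ hτ.1).add hcid)
      (fun τ hτ => by
        have := h τ hτ.1.le (hno τ hτ.1.le).le
        show g' τ + c ≤ 0
        linarith)
    have hmono' : g t + c * t ≤ g a + c * a := hmono
    have hct : c * (t - a) = g a - K + c := by
      rw [ht]
      field_simp
      ring
    have : g t ≤ K - c := by nlinarith
    exact absurd (hno t htpos) (not_lt.mpr (by linarith))
  obtain ⟨s0, hs0a, hs0⟩ := key
  refine ⟨s0, hs0a, fun τ hτ => ?_⟩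
  have := aux_inv g g' s0 K (fun σ hσ => hg σ (hs0a.trans hσ))
    (fun σ hσ hK => (h σ (hs0a.trans hσ) hK).trans (by linarith)) τ hτ
  rwa [max_eq_right hs0] at this

/-- sign fact -/
lemma aux_sign {A L U e d : ℝ} (he : 0 < e) (hd : 0 ≤ d) (hA : 0 ≤ A)
    (hL : |L| ≤ A * e - d) (hU : e ≤ |U|) :
    2 * U * (-(A * U) - L) ≤ -(2 * e * d) := by
  have h1 := abs_le.mp hL
  rcases abs_cases U with ⟨h, h'⟩ | ⟨h, h'⟩ <;>
    rw [h] at hU <;> nlinarith [sq_nonneg U, mul_le_mul_of_nonneg_left hU hA]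

/-- Growth: if `g' ≥ c` on the interior, `g s + c*(t-s) ≤ g t`. -/
lemma aux_growth (g g' : ℝ → ℝ) (s t c : ℝ) (hst : s ≤ t)
    (hg : ∀ τ ∈ Icc s t, HasDerivAt g (g' τ) τ)
    (h : ∀ τ ∈ Ioo s t, c ≤ g' τ) : g s + c * (t - s) ≤ g t := by
  have := aux_antitone (fun τ => c * τ - g τ) (fun τ => c - g' τ) s t hst
    (fun τ hτ => by
      have hcid : HasDerivAt (fun τ : ℝ => c * τ) c τ := by
        simpa using (hasDerivAt_id τ).const_mul c
      exact hcid.sub (hg τ hτ))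
    (fun τ hτ => by
      have := h τ hτ
      show c - g' τ ≤ 0
      linarith)
  have h2 : c * t - g t ≤ c * s - g s := this
  nlinarith

lemma aux_sqrt_le {x e : ℝ} (he : 0 ≤ e) (hx : x ^ 2 ≤ e ^ 2) : |x| ≤ e := by
  nlinarith [abs_nonneg x, sq_abs x, sq_nonneg (|x| - e), sq_nonneg (|x| + e)]

lemma aux_le_abs {x e : ℝ} (he : 0 ≤ e) (hx : e ^ 2 ≤ x ^ 2) : e ≤ |x| := by
  nlinarith [abs_nonneg x, sq_abs x, sq_nonneg (|x| - e), sq_nonneg (|x| + e)]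

/-- Theorem 1: for the reduced system `α' = u²`, `u' = -αu - λ(τ)` of the
Chaplygin sleigh with oscillating rotor, with `λ` and `λ'` bounded on `[0, ∞)` and `λ` not
tending to zero, every solution with `α(0) > 0` satisfies: `u(τ) → 0` as `τ → +∞`. -/
theorem u_tendsto_zero
    (l α u : ℝ → ℝ)
    (hl : ContDiff ℝ 1 l)
    (hl_bdd : ∃ M : ℝ, ∀ τ : ℝ, 0 ≤ τ → |l τ| ≤ M)
    (hl'_bdd : ∃ M : ℝ, ∀ τ : ℝ, 0 ≤ τ → |deriv l τ| ≤ M)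
    (hl_not0 : ¬ Tendsto l atTop (nhds 0))
    (hα : ∀ τ : ℝ, 0 ≤ τ → HasDerivAt α (u τ ^ 2) τ)
    (hu : ∀ τ : ℝ, 0 ≤ τ → HasDerivAt u (-(α τ * u τ) - l τ) τ)
    (hα0 : 0 < α 0) :
    Tendsto u atTop (nhds 0) := by
  obtain ⟨M0, hM0⟩ := hl_bdd
  obtain ⟨M, hMdef⟩ : ∃ M : ℝ, M = max M0 0 + 1 := ⟨_, rfl⟩
  have hM1 : 1 ≤ M := by
    have : (0:ℝ) ≤ max M0 0 := le_max_right _ _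
    rw [hMdef]
    linarith
  have hMl : ∀ τ, 0 ≤ τ → |l τ| ≤ M - 1 :=
    fun τ hτ => (hM0 τ hτ).trans (by rw [hMdef]; simp)
  have hαmono : ∀ s t : ℝ, 0 ≤ s → s ≤ t → α s ≤ α t := by
    intro s t hs hst
    have h := aux_antitone (fun τ => -α τ) (fun τ => -(u τ ^ 2)) s t hst
      (fun τ hτ => (hα τ (hs.trans hτ.1)).neg)
      (fun τ hτ => by
        show -(u τ ^ 2) ≤ 0
        simp [sq_nonneg])
    have h2 : -α t ≤ -α s := h
    linarith
  have hα_lb : ∀ τ, 0 ≤ τ → α 0 ≤ α τ := fun τ h => hαmono 0 τ le_rfl h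
  have hg : ∀ τ, 0 ≤ τ → HasDerivAt (fun σ => u σ ^ 2)
      (2 * u τ * (-(α τ * u τ) - l τ)) τ := by
    intro τ hτ
    have h2 := (hu τ hτ).pow 2
    norm_num at h2
    first
      | exact h2
      | (convert h2 using 1; ring)
  by_cases hbdd : ∃ A, ∀ τ, 0 ≤ τ → α τ ≤ A
  · -- bounded case: Barbalat
    obtain ⟨A, hA⟩ := hbdd
    have hAa : α 0 ≤ A := hA 0 le_rfl
    have hA0 : 0 < A := lt_of_lt_of_le hα0 hAa
    obtain ⟨e1, he1def⟩ : ∃ e1 : ℝ, e1 = M / α 0 := ⟨_, rfl⟩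
    have he1 : 0 < e1 := he1def ▸ div_pos (by linarith) hα0
    -- u is bounded
    have hub : ∀ τ, 0 ≤ τ → u τ ^ 2 ≤ max (u 0 ^ 2) (e1 ^ 2) := by
      apply aux_inv (fun τ => u τ ^ 2) (fun τ => 2 * u τ * (-(α τ * u τ) - l τ)) 0
        (e1 ^ 2) hg
      intro τ hτ hK
      have h1 : e1 ≤ |u τ| := aux_le_abs he1.le hK
      have hαa := hα_lb τ hτ
      have h2 : |l τ| ≤ α τ * e1 - 0 := by
        have h3 : α 0 * e1 = M := by rw [he1def]; exact mul_div_cancel₀ _ hα0.ne'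
        have h4 := hMl τ hτ
        nlinarith
      have := aux_sign he1 le_rfl (by linarith) h2 h1
      linarith
    obtain ⟨C, hCdef⟩ : ∃ C : ℝ, C = max |u 0| e1 := ⟨_, rfl⟩
    have hC0 : 0 < C := hCdef ▸ lt_of_lt_of_le he1 (le_max_right _ _)
    have hC : ∀ τ, 0 ≤ τ → |u τ| ≤ C := by
      intro τ hτ
      apply aux_sqrt_le hC0.le
      refine (hub τ hτ).trans (max_le ?_ ?_)
      · have : |u 0| ≤ C := hCdef ▸ le_max_left _ _
        nlinarith [abs_nonneg (u 0), sq_abs (u 0)]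
      · have : e1 ≤ C := hCdef ▸ le_max_right _ _
        nlinarith
    obtain ⟨Kd, hKddef⟩ : ∃ Kd : ℝ, Kd = A * C + M := ⟨_, rfl⟩
    have hKd0 : 0 < Kd := by rw [hKddef]; positivity
    have hKd : ∀ τ, 0 ≤ τ → |(-(α τ * u τ) - l τ)| ≤ Kd := by
      intro τ hτ
      have h1 : 0 < α τ := lt_of_lt_of_le hα0 (hα_lb τ hτ)
      have h2 : α τ ≤ A := hA τ hτ
      have hau : |α τ * u τ| ≤ A * C := by
        rw [abs_mul, abs_of_nonneg h1.le]
        exact mul_le_mul h2 (hC τ hτ) (abs_nonneg _) hA0.le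
      have h3 := abs_le.mp hau
      have h4 := abs_le.mp (hMl τ hτ)
      rw [abs_le, hKddef]
      constructor <;> linarith
    by_contra hcon
    rw [NormedAddCommGroup.tendsto_nhds_zero] at hcon
    push_neg at hcon
    obtain ⟨ε, hε, hfreq⟩ := hcon
    have hfreq : ∃ᶠ x in atTop, ¬ ‖u x‖ < ε := hfreq.mono fun x hx => not_lt.mpr hx
    rw [frequently_atTop] at hfreq
    obtain ⟨δ, hδdef⟩ : ∃ δ : ℝ, δ = ε / (2 * Kd) := ⟨_, rfl⟩
    have hδ0 : 0 < δ := by rw [hδdef]; positivity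
    obtain ⟨c, hcdef⟩ : ∃ c : ℝ, c = ε ^ 2 / 4 * δ := ⟨_, rfl⟩
    have hc0 : 0 < c := by rw [hcdef]; positivity
    have step : ∀ τ0, 0 ≤ τ0 → ε ≤ |u τ0| → α τ0 + c ≤ α (τ0 + δ) := by
      intro τ0 h0 hε0
      have hbig : ∀ σ ∈ Set.Icc τ0 (τ0 + δ), ε / 2 ≤ |u σ| := by
        intro σ hσ
        have hup := aux_antitone (fun τ => u τ - Kd * τ)
          (fun τ => (-(α τ * u τ) - l τ) - Kd) τ0 σ hσ.1
          (fun τ hτ => by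
            have hcid : HasDerivAt (fun τ : ℝ => Kd * τ) Kd τ := by
              simpa using (hasDerivAt_id τ).const_mul Kd
            exact (hu τ (h0.trans hτ.1)).sub hcid)
          (fun τ hτ => by
            have := (abs_le.mp (hKd τ (h0.trans hτ.1.le))).2
            show (-(α τ * u τ) - l τ) - Kd ≤ 0
            linarith)
        have hdown := aux_antitone (fun τ => -u τ - Kd * τ)
          (fun τ => -((-(α τ * u τ) - l τ)) - Kd) τ0 σ hσ.1
          (fun τ hτ => by
            have hcid : HasDerivAt (fun τ : ℝ => Kd * τ) Kd τ := by
              simpa using (hasDerivAt_id τ).const_mul Kd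
            exact ((hu τ (h0.trans hτ.1)).neg).sub hcid)
          (fun τ hτ => by
            have := (abs_le.mp (hKd τ (h0.trans hτ.1.le))).1
            show -((-(α τ * u τ) - l τ)) - Kd ≤ 0
            linarith)
        have hup' : u σ - Kd * σ ≤ u τ0 - Kd * τ0 := hup
        have hdown' : -u σ - Kd * σ ≤ -u τ0 - Kd * τ0 := hdown
        have hKdδ : Kd * δ = ε / 2 := by
          rw [hδdef]
          field_simp
        have hσδ : Kd * (σ - τ0) ≤ ε / 2 := by
          rw [← hKdδ]
          have := hσ.2
          nlinarith
        have hrng : Kd * (σ - τ0) = Kd * σ - Kd * τ0 := by ring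
        have h3 : |u σ - u τ0| ≤ ε / 2 := by
          rw [abs_le]
          constructor <;> linarith
        have h4 : |u τ0| - |u σ| ≤ |u σ - u τ0| := by
          rw [abs_sub_comm]
          exact abs_sub_abs_le_abs_sub _ _
        linarith
      have hgr := aux_growth α (fun τ => u τ ^ 2) τ0 (τ0 + δ) (ε ^ 2 / 4)
        (by linarith)
        (fun τ hτ => hα τ (h0.trans hτ.1))
        (fun τ hτ => by
          have h4 := hbig τ (Set.Ioo_subset_Icc_self hτ)
          nlinarith [sq_abs (u τ)])
      have : τ0 + δ - τ0 = δ := by ring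
      rw [this] at hgr
      rw [hcdef]
      linarith
    have hiter : ∀ n : ℕ, ∃ τ, 0 ≤ τ ∧ α 0 + n * c ≤ α τ := by
      intro n
      induction n with
      | zero => exact ⟨0, le_rfl, by simp⟩
      | succ n ih =>
        obtain ⟨τn, hτn0, hτn⟩ := ih
        obtain ⟨τ, hττn, hτu⟩ := hfreq τn
        have hτ0 : 0 ≤ τ := hτn0.trans hττn
        have hτu' : ε ≤ |u τ| := by
          rw [← Real.norm_eq_abs]
          exact not_lt.mp hτu
        have hstep := step τ hτ0 hτu'
        refine ⟨τ + δ, by linarith, ?_⟩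
        have hmon := hαmono τn τ hτn0 hττn
        push_cast
        nlinarith
    obtain ⟨n, hn⟩ := exists_nat_gt ((A - α 0) / c)
    obtain ⟨τ, hτ0, hτ⟩ := hiter n
    have hτA := hA τ hτ0
    have hdc : (A - α 0) / c * c = A - α 0 := div_mul_cancel₀ _ hc0.ne'
    nlinarith
  · -- unbounded case
    push_neg at hbdd
    rw [NormedAddCommGroup.tendsto_nhds_zero]
    intro ε hε
    obtain ⟨e, hedef⟩ : ∃ e : ℝ, e = ε / 2 := ⟨_, rfl⟩
    have he : 0 < e := by rw [hedef]; positivity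
    obtain ⟨T, hT0, hTα⟩ := hbdd ((M + 1) / e)
    have hαT : ∀ τ, T ≤ τ → (M + 1) / e ≤ α τ :=
      fun τ h => le_trans hTα.le (hαmono T τ hT0 h)
    obtain ⟨s, hsT, hs⟩ := aux_reach (fun τ => u τ ^ 2)
      (fun τ => 2 * u τ * (-(α τ * u τ) - l τ)) T (e ^ 2) (2 * e * 1)
      (by positivity)
      (fun τ hτ => hg τ (hT0.trans hτ))
      (fun τ hτ hK => by
        have h1 : e ≤ |u τ| := aux_le_abs he.le hK
        have h5 := hαT τ hτ
        have h6 := hMl τ (hT0.trans hτ)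
        have h7 : (M + 1) / e * e = M + 1 := div_mul_cancel₀ _ he.ne'
        have h9 : (M + 1) / e * e ≤ α τ * e := mul_le_mul_of_nonneg_right h5 he.le
        rw [h7] at h9
        have h2 : |l τ| ≤ α τ * e - 1 := by linarith
        have hM0' : (0:ℝ) ≤ M + 1 := by linarith
        have hA0 : 0 ≤ α τ := le_trans (div_nonneg hM0' he.le) h5
        exact aux_sign he zero_le_one hA0 h2 h1)
    filter_upwards [eventually_ge_atTop s] with τ hτ
    have h8 := hs τ hτ
    have h9 : |u τ| ≤ e := aux_sqrt_le he.le h8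
    rw [Real.norm_eq_abs]
    rw [hedef] at h9
    linarith
end

section
/- Let λ : ℝ → ℝ be continuously differentiable with λ and λ' bounded on [0, ∞), and suppose λ does not tend to zero as τ → +∞. Let (α, u) : [0, ∞) → ℝ² be a solution of the reduced system α' = u², u' = −αu − λ(τ) with α(0) > 0. Then the product τ ↦ α(τ)·u(τ) is a bounded function on [0, ∞). -/
open Filter

/-- Decay lemma: if `f' ≤ -a f + b` on `[0,∞)` with `a > 0`, then
`f τ ≤ max (f 0) (b/a)` for all `τ ≥ 0`. -/
lemma decay_bound_aux (f f' : ℝ → ℝ) (a b : ℝ) (ha : 0 < a)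
    (hf : ∀ τ, 0 ≤ τ → HasDerivAt f (f' τ) τ)
    (hineq : ∀ τ, 0 ≤ τ → f' τ ≤ -a * f τ + b) :
    ∀ τ, 0 ≤ τ → f τ ≤ max (f 0) (b / a) := by
  set g : ℝ → ℝ := fun τ => Real.exp (a * τ) * (f τ - b / a) with hg
  have hgderiv : ∀ τ, 0 ≤ τ →
      HasDerivAt g (Real.exp (a * τ) * (a * (f τ - b / a) + f' τ)) τ := by
    intro τ hτ
    have h1 : HasDerivAt (fun τ : ℝ => Real.exp (a * τ)) (a * Real.exp (a * τ)) τ := by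
      have := (Real.hasDerivAt_exp (a * τ)).comp τ ((hasDerivAt_id τ).const_mul a)
      simpa [mul_comm, Function.comp_def] using this
    have h2 : HasDerivAt (fun τ => f τ - b / a) (f' τ) τ := (hf τ hτ).sub_const _
    have this : HasDerivAt (fun y => Real.exp (a * y) * (f y - b / a)) _ τ := h1.fun_mul h2
    convert this using 1
    ring
  have hanti : AntitoneOn g (Set.Ici 0) := by
    apply antitoneOn_of_deriv_nonpos (convex_Ici 0)
    · intro x hx
      exact (hgderiv x hx).continuousAt.continuousWithinAt
    · intro x hx
      rw [interior_Ici] at hx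
      exact (hgderiv x hx.le).differentiableAt.differentiableWithinAt
    · intro x hx
      rw [interior_Ici] at hx
      rw [(hgderiv x hx.le).deriv]
      have h3 : a * (f x - b / a) + f' x ≤ 0 := by
        have h4 := hineq x hx.le
        have h5 : a * (b / a) = b := mul_div_cancel₀ _ (ne_of_gt ha)
        nlinarith
      exact mul_nonpos_of_nonneg_of_nonpos (Real.exp_pos _).le h3
  intro τ hτ
  have h := hanti Set.self_mem_Ici hτ hτ
  have hg0 : g 0 = f 0 - b / a := by simp [hg]
  have hgτ : g τ = Real.exp (a * τ) * (f τ - b / a) := rfl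
  rw [hg0, hgτ] at h
  have hexp : (1 : ℝ) ≤ Real.exp (a * τ) := by
    apply Real.one_le_exp
    positivity
  rcases le_or_gt (f τ) (b / a) with hc | hc
  · exact le_max_of_le_right hc
  · apply le_max_of_le_left
    nlinarith

/-- Theorem 1: for the reduced system `α' = u²`, `u' = -αu - λ(τ)` of the
Chaplygin sleigh with oscillating rotor, with `λ` and `λ'` bounded on `[0, ∞)` and `λ` not
tending to zero, every solution with `α(0) > 0` satisfies: the product `α(τ)·u(τ)` is bounded on `[0, ∞)`. -/
theorem alpha_mul_u_bounded
    (l α u : ℝ → ℝ)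
    (hl : ContDiff ℝ 1 l)
    (hl_bdd : ∃ M : ℝ, ∀ τ : ℝ, 0 ≤ τ → |l τ| ≤ M)
    (hl'_bdd : ∃ M : ℝ, ∀ τ : ℝ, 0 ≤ τ → |deriv l τ| ≤ M)
    (hl_not0 : ¬ Tendsto l atTop (nhds 0))
    (hα : ∀ τ : ℝ, 0 ≤ τ → HasDerivAt α (u τ ^ 2) τ)
    (hu : ∀ τ : ℝ, 0 ≤ τ → HasDerivAt u (-(α τ * u τ) - l τ) τ)
    (hα0 : 0 < α 0) :
    ∃ M : ℝ, ∀ τ : ℝ, 0 ≤ τ → |α τ * u τ| ≤ M := by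
  obtain ⟨M, hM⟩ := hl_bdd
  obtain ⟨M', hM'⟩ := hl'_bdd
  have hM0 : 0 ≤ M := le_trans (abs_nonneg _) (hM 0 le_rfl)
  have hM'0 : 0 ≤ M' := le_trans (abs_nonneg _) (hM' 0 le_rfl)
  set a := α 0 with ha_def
  -- α is monotone on [0, ∞), hence α τ ≥ a > 0
  have hmono : MonotoneOn α (Set.Ici 0) := by
    apply monotoneOn_of_deriv_nonneg (convex_Ici 0)
    · intro x hx
      exact (hα x hx).continuousAt.continuousWithinAt
    · intro x hx
      rw [interior_Ici] at hx
      exact (hα x hx.le).differentiableAt.differentiableWithinAt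
    · intro x hx
      rw [interior_Ici] at hx
      rw [(hα x hx.le).deriv]
      positivity
  have hαge : ∀ τ, 0 ≤ τ → a ≤ α τ := fun τ hτ =>
    hmono Set.self_mem_Ici hτ hτ
  -- derivative of l
  have hlderiv : ∀ τ : ℝ, HasDerivAt l (deriv l τ) τ :=
    fun τ => ((hl.differentiable one_ne_zero) τ).hasDerivAt
  -- Step 1: u² is bounded
  have hu2 : ∀ τ, 0 ≤ τ → u τ ^ 2 ≤ max (u 0 ^ 2) (M ^ 2 / a / a) := by
    apply decay_bound_aux (fun τ => u τ ^ 2)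
      (fun τ => 2 * u τ * (-(α τ * u τ) - l τ)) a (M ^ 2 / a) hα0
    · intro τ hτ
      have := (hu τ hτ).fun_pow 2
      simpa [mul_comm, mul_assoc] using this
    · intro τ hτ
      have h1 := hαge τ hτ
      have h2 := abs_le.mp (hM τ hτ)
      have h5 : a * (M ^ 2 / a) = M ^ 2 := mul_div_cancel₀ _ (ne_of_gt hα0)
      have key : a * (2 * u τ * (-(α τ * u τ) - l τ)) ≤ a * (-a * u τ ^ 2 + M ^ 2 / a) := by
        have h6 : a * (-a * u τ ^ 2 + M ^ 2 / a) = -(a * a) * u τ ^ 2 + M ^ 2 := by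
          rw [mul_add, h5]; ring
        rw [h6]
        nlinarith [sq_nonneg (a * u τ + l τ), h2.1, h2.2,
          mul_nonneg (mul_nonneg hα0.le (sub_nonneg.2 h1)) (sq_nonneg (u τ)),
          mul_nonneg (sub_nonneg.2 h2.1) (sub_nonneg.2 h2.2)]
      exact le_of_mul_le_mul_left key hα0
  set Cu := max (u 0 ^ 2) (M ^ 2 / a / a) with hCu_def
  have hCu0 : 0 ≤ Cu := le_trans (sq_nonneg _) (le_max_left _ _)
  set C1 := Real.sqrt Cu with hC1_def
  have hC10 : 0 ≤ C1 := Real.sqrt_nonneg _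
  have huabs : ∀ τ, 0 ≤ τ → |u τ| ≤ C1 := by
    intro τ hτ
    have := hu2 τ hτ
    calc |u τ| = Real.sqrt (u τ ^ 2) := (Real.sqrt_sq_eq_abs _).symm
      _ ≤ Real.sqrt Cu := Real.sqrt_le_sqrt this
  -- bound on the forcing term u³ + l'
  set B := C1 ^ 3 + M' with hB_def
  have hB0 : 0 ≤ B := by positivity
  have hq : ∀ τ, 0 ≤ τ → |u τ ^ 3 + deriv l τ| ≤ B := by
    intro τ hτ
    calc |u τ ^ 3 + deriv l τ| ≤ |u τ ^ 3| + |deriv l τ| := abs_add_le _ _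
      _ = |u τ| ^ 3 + |deriv l τ| := by rw [abs_pow]
      _ ≤ C1 ^ 3 + M' :=
          add_le_add (pow_le_pow_left₀ (abs_nonneg _) (huabs τ hτ) 3) (hM' τ hτ)
  -- Step 2: w = αu + l satisfies w' = u³ - αw + l'
  set w : ℝ → ℝ := fun τ => α τ * u τ + l τ with hw_def
  have hwderiv : ∀ τ, 0 ≤ τ →
      HasDerivAt w (u τ ^ 3 - α τ * w τ + deriv l τ) τ := by
    intro τ hτ
    have h1 : HasDerivAt (fun y => α y * u y + l y) _ τ := ((hα τ hτ).fun_mul (hu τ hτ)).fun_add (hlderiv τ)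
    convert h1 using 1
    simp only [hw_def]
    ring
  -- Step 3: w² is bounded
  have hw2 : ∀ τ, 0 ≤ τ → w τ ^ 2 ≤ max (w 0 ^ 2) (B ^ 2 / a / a) := by
    apply decay_bound_aux (fun τ => w τ ^ 2)
      (fun τ => 2 * w τ * (u τ ^ 3 - α τ * w τ + deriv l τ)) a (B ^ 2 / a) hα0
    · intro τ hτ
      have := (hwderiv τ hτ).fun_pow 2
      simpa [mul_comm, mul_assoc] using this
    · intro τ hτ
      have h1 := hαge τ hτ
      have h2 := abs_le.mp (hq τ hτ)
      have h5 : a * (B ^ 2 / a) = B ^ 2 := mul_div_cancel₀ _ (ne_of_gt hα0)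
      have key : a * (2 * w τ * (u τ ^ 3 - α τ * w τ + deriv l τ)) ≤
          a * (-a * w τ ^ 2 + B ^ 2 / a) := by
        have h6 : a * (-a * w τ ^ 2 + B ^ 2 / a) = -(a * a) * w τ ^ 2 + B ^ 2 := by
          rw [mul_add, h5]; ring
        rw [h6]
        nlinarith [sq_nonneg (a * w τ + (u τ ^ 3 + deriv l τ)),
          sq_nonneg (a * w τ - (u τ ^ 3 + deriv l τ)), h2.1, h2.2,
          mul_nonneg (mul_nonneg hα0.le (sub_nonneg.2 h1)) (sq_nonneg (w τ)),
          mul_nonneg (sub_nonneg.2 h2.1) (sub_nonneg.2 h2.2)]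
      exact le_of_mul_le_mul_left key hα0
  set Cw := max (w 0 ^ 2) (B ^ 2 / a / a) with hCw_def
  have hwabs : ∀ τ, 0 ≤ τ → |w τ| ≤ Real.sqrt Cw := by
    intro τ hτ
    calc |w τ| = Real.sqrt (w τ ^ 2) := (Real.sqrt_sq_eq_abs _).symm
      _ ≤ Real.sqrt Cw := Real.sqrt_le_sqrt (hw2 τ hτ)
  refine ⟨Real.sqrt Cw + M, fun τ hτ => ?_⟩
  have h1 : α τ * u τ = w τ - l τ := by simp [hw_def]
  rw [h1]
  calc |w τ - l τ| ≤ |w τ| + |l τ| := abs_sub _ _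
    _ ≤ Real.sqrt Cw + M := add_le_add (hwabs τ hτ) (hM τ hτ)
end

section
/- Let λ : ℝ → ℝ be continuously differentiable with λ and λ' bounded on [0, ∞), and suppose λ does not tend to zero as τ → +∞. Let (α, u) : [0, ∞) → ℝ² be a solution of the reduced system α' = u², u' = −αu − λ(τ) with α(0) > 0. Then u'(τ) → 0 as τ → +∞; equivalently, α(τ)·u(τ) + λ(τ) → 0 as τ → +∞. -/
open Filter

section AuxiliaryLemmas
open Set

lemma incr_lower (f f' : ℝ → ℝ) {t t' : ℝ} (m : ℝ) (h : t ≤ t')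
    (hd : ∀ s ∈ Set.Icc t t', HasDerivAt f (f' s) s)
    (hm : ∀ s ∈ Set.Icc t t', m ≤ f' s) :
    m * (t' - t) ≤ f t' - f t := by
  have hd' : ∀ s ∈ Set.Icc t t', HasDerivAt (fun s => f s - m * s) (f' s - m) s := by
    intro s hs
    have := (hd s hs).sub ((hasDerivAt_id' s).const_mul m)
    rw [mul_one] at this
    exact this
  have hmono : MonotoneOn (fun s => f s - m * s) (Set.Icc t t') := by
    apply monotoneOn_of_deriv_nonneg (convex_Icc t t')
    · exact fun s hs => ((hd' s hs).continuousAt).continuousWithinAt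
    · intro s hs
      rw [interior_Icc] at hs
      exact ((hd' s (Ioo_subset_Icc_self hs)).differentiableAt).differentiableWithinAt
    · intro s hs
      rw [interior_Icc] at hs
      rw [(hd' s (Ioo_subset_Icc_self hs)).deriv]
      have := hm s (Ioo_subset_Icc_self hs)
      linarith
  have := hmono (Set.left_mem_Icc.2 h) (Set.right_mem_Icc.2 h) h
  simp only at this
  nlinarith

lemma incr_upper (f f' : ℝ → ℝ) {t t' : ℝ} (m : ℝ) (h : t ≤ t')
    (hd : ∀ s ∈ Set.Icc t t', HasDerivAt f (f' s) s)
    (hm : ∀ s ∈ Set.Icc t t', f' s ≤ m) :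
    f t' - f t ≤ m * (t' - t) := by
  have := incr_lower (fun s => -f s) (fun s => -f' s) (-m) h
    (fun s hs => (hd s hs).neg) (fun s hs => neg_le_neg (hm s hs))
  nlinarith

lemma barrier (f f' : ℝ → ℝ) (T c : ℝ)
    (hd : ∀ t ∈ Set.Ici T, HasDerivAt f (f' t) t)
    (hneg : ∀ t ∈ Set.Ici T, c ≤ f t → f' t < 0)
    (h0 : f T ≤ c) : ∀ t ∈ Set.Ici T, f t ≤ c := by
  intro t1 ht1
  by_contra hgt
  push_neg at hgt
  have hT1 : T < t1 := by
    rcases lt_or_eq_of_le (Set.mem_Ici.1 ht1) with h | h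
    · exact h
    · exfalso; rw [← h] at hgt; linarith
  set S : Set ℝ := Set.Icc T t1 ∩ f ⁻¹' Set.Iic c with hS
  have hcont : ContinuousOn f (Set.Icc T t1) := fun s hs =>
    ((hd s (Set.mem_Ici.2 hs.1)).continuousAt).continuousWithinAt
  have hSclosed : IsClosed S :=
    hcont.preimage_isClosed_of_isClosed isClosed_Icc isClosed_Iic
  have hSne : S.Nonempty := ⟨T, ⟨Set.left_mem_Icc.2 hT1.le, by simpa using h0⟩⟩
  have hScomp : IsCompact S :=
    (isCompact_Icc).of_isClosed_subset hSclosed Set.inter_subset_left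
  set s0 := sSup S with hs0
  have hs0S : s0 ∈ S := hScomp.sSup_mem hSne
  have hs0le : s0 ≤ t1 := hs0S.1.2
  have hfs0 : f s0 ≤ c := hs0S.2
  have hs0lt : s0 < t1 := by
    rcases lt_or_eq_of_le hs0le with h | h
    · exact h
    · exfalso; rw [h] at hfs0; linarith
  have hgtmid : ∀ s ∈ Set.Ioc s0 t1, c < f s := by
    intro s hs
    by_contra hle
    push_neg at hle
    have hsS : s ∈ S := ⟨⟨le_trans hs0S.1.1 hs.1.le, hs.2⟩, hle⟩
    have := le_csSup hScomp.bddAbove hsS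
    linarith [hs.1]
  have hanti : StrictAntiOn f (Set.Icc s0 t1) := by
    apply strictAntiOn_of_deriv_neg (convex_Icc s0 t1)
    · exact hcont.mono (Set.Icc_subset_Icc hs0S.1.1 le_rfl)
    · intro x hx
      rw [interior_Icc] at hx
      have hxI : x ∈ Set.Ici T := Set.mem_Ici.2 (le_trans hs0S.1.1 hx.1.le)
      rw [(hd x hxI).deriv]
      exact hneg x hxI (hgtmid x ⟨hx.1, hx.2.le⟩).le
  have := hanti (Set.left_mem_Icc.2 hs0lt.le) (Set.right_mem_Icc.2 hs0lt.le) hs0lt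
  linarith

lemma eventual_bound (f f' : ℝ → ℝ) (T c H : ℝ) (hH : 0 < H)
    (hd : ∀ t ∈ Set.Ici T, HasDerivAt f (f' t) t)
    (hneg : ∀ t ∈ Set.Ici T, c ≤ f t → f' t ≤ -H) :
    ∃ T' ≥ T, ∀ t ≥ T', f t ≤ c := by
  have hentry : ∃ t0 ≥ T, f t0 ≤ c := by
    by_contra hno
    push_neg at hno
    have hall : ∀ t ∈ Set.Ici T, f' t ≤ -H := fun t ht => hneg t ht (hno t ht).le
    set t1 := T + (f T - c) / H + 1 with ht1
    have hT1 : T ≤ t1 := by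
      have h2 : 0 ≤ (f T - c) / H := div_nonneg (by linarith [hno T le_rfl]) hH.le
      rw [ht1]; linarith
    have := incr_upper f f' (-H) hT1
      (fun s hs => hd s (Set.mem_Ici.2 hs.1))
      (fun s hs => hall s (Set.mem_Ici.2 hs.1))
    have hfc := hno t1 hT1
    have hmul : H * (t1 - T) = (f T - c) + H := by
      rw [ht1]; field_simp; ring
    linarith
  obtain ⟨t0, ht0, hft0⟩ := hentry
  refine ⟨t0, ht0, fun t ht => ?_⟩
  exact barrier f f' t0 c (fun s hs => hd s (le_trans ht0 hs))
    (fun s hs hc => lt_of_le_of_lt (hneg s (le_trans ht0 hs) hc) (by linarith)) hft0 t ht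

end AuxiliaryLemmas

set_option maxHeartbeats 4000000 in
/-- Theorem 1: for the reduced system `α' = u²`, `u' = -αu - λ(τ)` of the
Chaplygin sleigh with oscillating rotor, with `λ` and `λ'` bounded on `[0, ∞)` and `λ` not
tending to zero, every solution with `α(0) > 0` satisfies: `u′(τ) = -(α(τ)u(τ) + λ(τ)) → 0`, i.e. `α(τ)·u(τ) + λ(τ) → 0` as `τ → +∞`. -/
theorem u_deriv_tendsto_zero
    (l α u : ℝ → ℝ)
    (hl : ContDiff ℝ 1 l)
    (hl_bdd : ∃ M : ℝ, ∀ τ : ℝ, 0 ≤ τ → |l τ| ≤ M)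
    (hl'_bdd : ∃ M : ℝ, ∀ τ : ℝ, 0 ≤ τ → |deriv l τ| ≤ M)
    (hl_not0 : ¬ Tendsto l atTop (nhds 0))
    (hα : ∀ τ : ℝ, 0 ≤ τ → HasDerivAt α (u τ ^ 2) τ)
    (hu : ∀ τ : ℝ, 0 ≤ τ → HasDerivAt u (-(α τ * u τ) - l τ) τ)
    (hα0 : 0 < α 0) :
    Tendsto (fun τ => α τ * u τ + l τ) atTop (nhds 0) := by
  obtain ⟨M, hM⟩ := hl_bdd
  obtain ⟨M', hM'⟩ := hl'_bdd
  have hM0 : 0 ≤ M := le_trans (abs_nonneg _) (hM 0 le_rfl)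
  have hM'0 : 0 ≤ M' := le_trans (abs_nonneg _) (hM' 0 le_rfl)
  have hl' : ∀ τ : ℝ, HasDerivAt l (deriv l τ) τ := fun τ =>
    ((hl.differentiable one_ne_zero) τ).hasDerivAt
  -- α is monotone on [0, ∞)
  have hαmono : MonotoneOn α (Set.Ici 0) := by
    apply monotoneOn_of_deriv_nonneg (convex_Ici 0)
    · exact fun s hs => ((hα s hs).continuousAt).continuousWithinAt
    · intro s hs
      rw [interior_Ici] at hs
      exact ((hα s hs.le).differentiableAt).differentiableWithinAt
    · intro s hs
      rw [interior_Ici] at hs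
      rw [(hα s hs.le).deriv]
      positivity
  have hαlb : ∀ t : ℝ, 0 ≤ t → α 0 ≤ α t := fun t ht =>
    hαmono (Set.mem_Ici.2 le_rfl) (Set.mem_Ici.2 ht) ht
  -- bound on u
  obtain ⟨c, hc_def⟩ : ∃ c : ℝ, c = (max |u 0| (M / α 0)) ^ 2 + 1 := ⟨_, rfl⟩
  have hc1 : 1 ≤ c := by
    rw [hc_def]; nlinarith [sq_nonneg (max |u 0| (M / α 0))]
  have hub2 : ∀ t : ℝ, 0 ≤ t → u t ^ 2 ≤ c := by
    intro t ht
    refine barrier (fun s => u s ^ 2)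
      (fun s => 2 * u s * (-(α s * u s) - l s)) 0 c ?_ ?_ ?_ t ht
    · intro s hs
      have := (hu s hs).pow 2
      refine this.congr_deriv ?_
      ring
    · intro s hs hcle
      have hcle' : c ≤ u s ^ 2 := hcle
      show 2 * u s * (-(α s * u s) - l s) < 0
      have h2 : 0 ≤ M / α 0 := div_nonneg hM0 hα0.le
      have h1 : (M / α 0) ^ 2 < u s ^ 2 := by
        have hmax : (M / α 0) ^ 2 ≤ (max |u 0| (M / α 0)) ^ 2 :=
          pow_le_pow_left₀ h2 (le_max_right _ _) 2
        nlinarith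
      have hxabs : M / α 0 < |u s| :=
        lt_of_pow_lt_pow_left₀ 2 (abs_nonneg _) (by rw [sq_abs]; exact h1)
      have hxpos : 0 < |u s| := lt_of_le_of_lt h2 hxabs
      have hαx : M < α 0 * |u s| := by
        rw [div_lt_iff₀ hα0] at hxabs
        linarith [hxabs, mul_comm |u s| (α 0)]
      have hMx : M * |u s| < α 0 * u s ^ 2 := by
        have h3 := mul_lt_mul_of_pos_right hαx hxpos
        calc M * |u s| < α 0 * |u s| * |u s| := h3
          _ = α 0 * u s ^ 2 := by
            rw [mul_assoc, abs_mul_abs_self]; ring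
      have hαs : α 0 ≤ α s := hαlb s hs
      have hls : |l s| ≤ M := hM s hs
      have hlx : -(M * |u s|) ≤ l s * u s := by
        have h1 : |l s * u s| ≤ M * |u s| := by
          rw [abs_mul]
          exact mul_le_mul_of_nonneg_right hls (abs_nonneg _)
        linarith [neg_abs_le (l s * u s)]
      have hx2pos : 0 < u s ^ 2 := by nlinarith [sq_abs (u s)]
      have hαs2 : α 0 * u s ^ 2 ≤ α s * u s ^ 2 :=
        mul_le_mul_of_nonneg_right hαs hx2pos.le
      nlinarith
    · show u 0 ^ 2 ≤ c
      rw [hc_def]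
      nlinarith [le_max_left |u 0| (M / α 0), sq_abs (u 0), abs_nonneg (u 0)]
  obtain ⟨U, hU_def⟩ : ∃ U : ℝ, U = Real.sqrt c := ⟨_, rfl⟩
  have hU1 : 1 ≤ U := by
    rw [hU_def, show (1:ℝ) = Real.sqrt 1 by simp]
    exact Real.sqrt_le_sqrt hc1
  have hU0 : 0 < U := lt_of_lt_of_le one_pos hU1
  have hub : ∀ t : ℝ, 0 ≤ t → |u t| ≤ U := by
    intro t ht
    rw [hU_def, ← Real.sqrt_sq_eq_abs]
    exact Real.sqrt_le_sqrt (hub2 t ht)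
  -- the derivative of g t = α t * u t + l t
  have hg : ∀ t : ℝ, 0 ≤ t → HasDerivAt (fun r => α r * u r + l r)
      (u t ^ 3 + deriv l t - α t * (α t * u t + l t)) t := by
    intro t ht
    have := ((hα t ht).mul (hu t ht)).add (hl' t)
    refine this.congr_deriv ?_
    ring
  obtain ⟨H0, hH0_def⟩ : ∃ H0 : ℝ, H0 = U ^ 3 + M' := ⟨_, rfl⟩
  have hu3 : ∀ t : ℝ, 0 ≤ t → |u t ^ 3| ≤ U ^ 3 := by
    intro t ht
    rw [abs_pow]
    exact pow_le_pow_left₀ (abs_nonneg _) (hub t ht) 3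
  have hH0 : ∀ t : ℝ, 0 ≤ t → |u t ^ 3 + deriv l t| ≤ H0 := by
    intro t ht
    rw [hH0_def]
    calc |u t ^ 3 + deriv l t| ≤ |u t ^ 3| + |deriv l t| := abs_add_le _ _
      _ ≤ U ^ 3 + M' := add_le_add (hu3 t ht) (hM' t ht)
  have hH0pos : 0 < H0 := by rw [hH0_def]; positivity
  by_cases hbdd : ∃ L, ∀ t : ℝ, 0 ≤ t → α t ≤ L
  · -- bounded case: contradiction with hl_not0
    exfalso
    obtain ⟨L, hL⟩ := hbdd
    have hL0 : 0 < L := lt_of_lt_of_le hα0 (hL 0 le_rfl)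
    have hαabs : ∀ t : ℝ, 0 ≤ t → |α t| ≤ L := fun t ht =>
      abs_le.2 ⟨by linarith [hαlb t ht], hL t ht⟩
    obtain ⟨K, hK_def⟩ : ∃ K : ℝ, K = L * U + M + 1 := ⟨_, rfl⟩
    have hKpos : 0 < K := by
      rw [hK_def]; nlinarith [mul_pos hL0 hU0]
    have hαu_b : ∀ t : ℝ, 0 ≤ t → |α t * u t| ≤ L * U := by
      intro t ht
      rw [abs_mul]
      exact mul_le_mul (hαabs t ht) (hub t ht) (abs_nonneg _) hL0.le
    have hvb : ∀ t : ℝ, 0 ≤ t → |(-(α t * u t) - l t)| ≤ K := by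
      intro t ht
      have h1 := abs_le.1 (hαu_b t ht)
      have h2 := abs_le.1 (hM t ht)
      rw [hK_def]
      exact abs_le.2 ⟨by linarith, by linarith⟩
    -- the supremum of α
    have hAne : (α '' Set.Ici (0:ℝ)).Nonempty := ⟨α 0, Set.mem_image_of_mem α (Set.mem_Ici.2 le_rfl)⟩
    have hAbdd : BddAbove (α '' Set.Ici (0:ℝ)) :=
      ⟨L, by rintro x ⟨t, ht, rfl⟩; exact hL t ht⟩
    obtain ⟨aS, haS⟩ : ∃ x : ℝ, x = sSup (α '' Set.Ici (0:ℝ)) := ⟨_, rfl⟩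
    have hαle : ∀ t : ℝ, 0 ≤ t → α t ≤ aS := fun t ht => by
      rw [haS]; exact le_csSup hAbdd ⟨t, ht, rfl⟩
    have happrox : ∀ cc : ℝ, 0 < cc → ∃ T ≥ (0:ℝ), aS - cc < α T := by
      intro cc hcc
      obtain ⟨x, hxA, hx⟩ := exists_lt_of_lt_csSup hAne
        (show aS - cc < sSup (α '' Set.Ici (0:ℝ)) by rw [← haS]; linarith)
      obtain ⟨T, hT, rfl⟩ := hxA
      exact ⟨T, hT, hx⟩
    -- u tends to 0
    have hu0 : ∀ ε : ℝ, 0 < ε → ∃ T ≥ (0:ℝ), ∀ t ≥ T, |u t| < ε := by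
      intro ε hε
      obtain ⟨δ, hδ_def⟩ : ∃ δ : ℝ, δ = ε / (2 * K) := ⟨_, rfl⟩
      have hδpos : 0 < δ := by rw [hδ_def]; positivity
      have hKδ : K * δ = ε / 2 := by
        rw [hδ_def]; field_simp
      obtain ⟨T, hT0, hTα⟩ := happrox (δ * (ε ^ 2 / 4)) (by positivity)
      refine ⟨T, hT0, fun t ht => ?_⟩
      by_contra hcon
      push_neg at hcon
      have ht0 : (0:ℝ) ≤ t := le_trans hT0 ht
      have husq : ∀ s ∈ Set.Icc t (t + δ), ε ^ 2 / 4 ≤ u s ^ 2 := by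
        intro s hs
        have hKst : K * (s - t) ≤ K * δ :=
          mul_le_mul_of_nonneg_left (by linarith [hs.2]) hKpos.le
        rcases le_abs.1 hcon with hpos | hneg
        · have hlow := incr_lower u (fun r => -(α r * u r) - l r) (-K) hs.1
            (fun r hr => hu r (le_trans ht0 hr.1))
            (fun r hr => by
              have h9 := hvb r (le_trans ht0 hr.1)
              show -K ≤ -(α r * u r) - l r
              linarith [neg_abs_le (-(α r * u r) - l r)])
          have h1 : ε / 2 ≤ u s := by linarith
          calc ε ^ 2 / 4 = (ε / 2) ^ 2 := by ring
            _ ≤ u s ^ 2 := pow_le_pow_left₀ (by positivity) h1 2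
        · have hhigh := incr_upper u (fun r => -(α r * u r) - l r) K hs.1
            (fun r hr => hu r (le_trans ht0 hr.1))
            (fun r hr => by
              have h9 := hvb r (le_trans ht0 hr.1)
              show -(α r * u r) - l r ≤ K
              linarith [le_abs_self (-(α r * u r) - l r)])
          have h1 : ε / 2 ≤ -(u s) := by linarith
          calc ε ^ 2 / 4 = (ε / 2) ^ 2 := by ring
            _ ≤ (-(u s)) ^ 2 := pow_le_pow_left₀ (by positivity) h1 2
            _ = u s ^ 2 := by ring
      have hinc := incr_lower α (fun s => u s ^ 2) (ε ^ 2 / 4)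
        (by linarith : t ≤ t + δ)
        (fun s hs => hα s (le_trans ht0 hs.1)) husq
      have hαTt : α T ≤ α t := hαmono (Set.mem_Ici.2 hT0) (Set.mem_Ici.2 ht0) ht
      have hαtd : α (t + δ) ≤ aS := hαle _ (by linarith)
      nlinarith
    -- the derivative v' of v t = -(α t * u t) - l t
    obtain ⟨v', hv'def⟩ : ∃ v' : ℝ → ℝ,
        v' = fun t => -(u t ^ 3 + α t * (-(α t * u t) - l t)) - deriv l t := ⟨_, rfl⟩
    have hv'd : ∀ t : ℝ, 0 ≤ t →
        HasDerivAt (fun r => -(α r * u r) - l r) (v' t) t := by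
      intro t ht
      have := (((hα t ht).mul (hu t ht)).neg).sub (hl' t)
      refine this.congr_deriv ?_
      simp only [hv'def]
      ring
    obtain ⟨K2, hK2_def⟩ : ∃ K2 : ℝ, K2 = U ^ 3 + L * K + M' + 1 := ⟨_, rfl⟩
    have hK2pos : 0 < K2 := by
      rw [hK2_def]
      nlinarith [pow_pos hU0 3, mul_pos hL0 hKpos]
    have hv'b : ∀ t : ℝ, 0 ≤ t → |v' t| ≤ K2 := by
      intro t ht
      have h1 := abs_le.1 (hu3 t ht)
      have h2 : |α t * (-(α t * u t) - l t)| ≤ L * K := by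
        rw [abs_mul]
        exact mul_le_mul (hαabs t ht) (hvb t ht) (abs_nonneg _) hL0.le
      have h2' := abs_le.1 h2
      have h3 := abs_le.1 (hM' t ht)
      simp only [hv'def]
      rw [hK2_def]
      exact abs_le.2 ⟨by linarith, by linarith⟩
    -- v tends to 0
    have hv0 : ∀ ε : ℝ, 0 < ε → ∃ T ≥ (0:ℝ), ∀ t ≥ T, |(-(α t * u t) - l t)| < ε := by
      intro ε hε
      obtain ⟨δ, hδ_def⟩ : ∃ δ : ℝ, δ = ε / (2 * K2) := ⟨_, rfl⟩
      have hδpos : 0 < δ := by rw [hδ_def]; positivity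
      have hKδ : K2 * δ = ε / 2 := by
        rw [hδ_def]; field_simp
      obtain ⟨T, hT0, hT⟩ := hu0 (ε * δ / 8) (by positivity)
      refine ⟨T, hT0, fun t ht => ?_⟩
      by_contra hcon
      push_neg at hcon
      have ht0 : (0:ℝ) ≤ t := le_trans hT0 ht
      have ha := hT t ht
      have hb := hT (t + δ) (by linarith)
      have ha' := abs_lt.1 ha
      have hb' := abs_lt.1 hb
      rcases le_abs.1 hcon with hpos | hneg
      · have hlow : ∀ s ∈ Set.Icc t (t + δ), ε / 2 ≤ -(α s * u s) - l s := by
          intro s hs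
          have hKst : K2 * (s - t) ≤ K2 * δ :=
            mul_le_mul_of_nonneg_left (by linarith [hs.2]) hK2pos.le
          have := incr_lower (fun r => -(α r * u r) - l r) v' (-K2) hs.1
            (fun r hr => hv'd r (le_trans ht0 hr.1))
            (fun r hr => by
              have h9 := hv'b r (le_trans ht0 hr.1)
              linarith [neg_abs_le (v' r)])
          linarith
        have hinc := incr_lower u (fun r => -(α r * u r) - l r) (ε / 2)
          (by linarith : t ≤ t + δ)
          (fun s hs => hu s (le_trans ht0 hs.1)) hlow
        have h7 : ε / 2 * (t + δ - t) = ε * δ / 2 := by ring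
        have h8 : 0 < ε * δ := mul_pos hε hδpos
        linarith [ha'.1, ha'.2, hb'.1, hb'.2]
      · have hhigh : ∀ s ∈ Set.Icc t (t + δ), -(α s * u s) - l s ≤ -(ε / 2) := by
          intro s hs
          have hKst : K2 * (s - t) ≤ K2 * δ :=
            mul_le_mul_of_nonneg_left (by linarith [hs.2]) hK2pos.le
          have := incr_upper (fun r => -(α r * u r) - l r) v' K2 hs.1
            (fun r hr => hv'd r (le_trans ht0 hr.1))
            (fun r hr => by
              have h9 := hv'b r (le_trans ht0 hr.1)
              linarith [le_abs_self (v' r)])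
          linarith
        have hinc := incr_upper u (fun r => -(α r * u r) - l r) (-(ε / 2))
          (by linarith : t ≤ t + δ)
          (fun s hs => hu s (le_trans ht0 hs.1)) hhigh
        have h7 : -(ε / 2) * (t + δ - t) = -(ε * δ / 2) := by ring
        have h8 : 0 < ε * δ := mul_pos hε hδpos
        linarith [ha'.1, ha'.2, hb'.1, hb'.2]
    -- conclude l → 0, contradiction
    apply hl_not0
    rw [Metric.tendsto_atTop]
    intro ε hε
    obtain ⟨T1, hT10, h1⟩ := hv0 (ε / 2) (by positivity)
    obtain ⟨T2, hT20, h2⟩ := hu0 (ε / (2 * (L + 1))) (by positivity)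
    refine ⟨max T1 T2, fun t ht => ?_⟩
    have ht1 := h1 t (le_trans (le_max_left _ _) ht)
    have ht2 := h2 t (le_trans (le_max_right _ _) ht)
    have ht0 : (0:ℝ) ≤ t := le_trans hT10 (le_trans (le_max_left _ _) ht)
    rw [Real.dist_eq, sub_zero]
    have hαu : |α t * u t| ≤ L * |u t| := by
      rw [abs_mul]
      exact mul_le_mul_of_nonneg_right (hαabs t ht0) (abs_nonneg _)
    have hLu : L * |u t| ≤ L * (ε / (2 * (L + 1))) :=
      mul_le_mul_of_nonneg_left ht2.le hL0.le
    have hL2 : L * (ε / (2 * (L + 1))) < ε / 2 := by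
      rw [show ε / 2 = (L + 1) * (ε / (2 * (L + 1))) by field_simp]
      exact mul_lt_mul_of_pos_right (by linarith) (by positivity)
    have h4 : |α t * u t| < ε / 2 := lt_of_le_of_lt (hαu.trans hLu) hL2
    have h5 := abs_lt.1 ht1
    have h6 := abs_lt.1 h4
    exact abs_lt.2 ⟨by linarith, by linarith⟩
  · -- unbounded case
    push_neg at hbdd
    rw [Metric.tendsto_atTop]
    intro ε hε
    obtain ⟨T0, hT00, hT0α⟩ := hbdd (2 * (H0 + 1) / ε)
    have hCpos : 0 < 2 * (H0 + 1) / ε := by positivity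
    have hαT0 : ∀ t : ℝ, T0 ≤ t → 2 * (H0 + 1) / ε ≤ α t := by
      intro t ht
      exact le_trans hT0α.le
        (hαmono (Set.mem_Ici.2 hT00) (Set.mem_Ici.2 (le_trans hT00 ht)) ht)
    have hCε : 2 * (H0 + 1) / ε * (ε / 2) = H0 + 1 := by
      field_simp
    have hgd : ∀ t ∈ Set.Ici T0, HasDerivAt (fun r => α r * u r + l r)
        (u t ^ 3 + deriv l t - α t * (α t * u t + l t)) t :=
      fun t ht => hg t (le_trans hT00 ht)
    have hαnn : ∀ t : ℝ, T0 ≤ t → 0 ≤ α t := fun t ht =>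
      le_trans hCpos.le (hαT0 t ht)
    have hneg1 : ∀ t ∈ Set.Ici T0, ε / 2 ≤ (fun r => α r * u r + l r) t →
        (fun t => u t ^ 3 + deriv l t - α t * (α t * u t + l t)) t ≤ -1 := by
      intro t ht hge
      simp only at hge ⊢
      have ht0 : (0:ℝ) ≤ t := le_trans hT00 ht
      have habs := abs_le.1 (hH0 t ht0)
      have hα_t := hαT0 t ht
      have hmul : 2 * (H0 + 1) / ε * (ε / 2) ≤ α t * (α t * u t + l t) :=
        mul_le_mul hα_t hge (by positivity) (hαnn t ht)
      rw [hCε] at hmul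
      linarith
    have hneg2 : ∀ t ∈ Set.Ici T0, ε / 2 ≤ (fun r => -(α r * u r + l r)) t →
        (fun t => -(u t ^ 3 + deriv l t - α t * (α t * u t + l t))) t ≤ -1 := by
      intro t ht hge
      simp only at hge ⊢
      have ht0 : (0:ℝ) ≤ t := le_trans hT00 ht
      have habs := abs_le.1 (hH0 t ht0)
      have hα_t := hαT0 t ht
      have hg_le : α t * u t + l t ≤ -(ε / 2) := by linarith
      have hmul : α t * (α t * u t + l t) ≤ 2 * (H0 + 1) / ε * (-(ε / 2)) := by
        calc α t * (α t * u t + l t) ≤ α t * (-(ε / 2)) :=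
            mul_le_mul_of_nonneg_left hg_le (hαnn t ht)
          _ ≤ 2 * (H0 + 1) / ε * (-(ε / 2)) :=
            mul_le_mul_of_nonpos_right hα_t (by linarith)
      have hmul' : α t * (α t * u t + l t) ≤ -(H0 + 1) := by
        have h9 : 2 * (H0 + 1) / ε * (-(ε / 2)) = -(H0 + 1) := by
          field_simp
        linarith
      linarith
    obtain ⟨T1, hT1ge, hT1⟩ := eventual_bound (fun r => α r * u r + l r)
      (fun t => u t ^ 3 + deriv l t - α t * (α t * u t + l t)) T0 (ε / 2) 1
      one_pos hgd hneg1
    obtain ⟨T2, hT2ge, hT2⟩ := eventual_bound (fun r => -(α r * u r + l r))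
      (fun t => -(u t ^ 3 + deriv l t - α t * (α t * u t + l t))) T0 (ε / 2) 1
      one_pos (fun t ht => (hgd t ht).neg) hneg2
    refine ⟨max T1 T2, fun t ht => ?_⟩
    have h1 := hT1 t (le_trans (le_max_left _ _) ht)
    have h2 := hT2 t (le_trans (le_max_right _ _) ht)
    rw [Real.dist_eq, sub_zero]
    have h3 : |α t * u t + l t| ≤ ε / 2 := abs_le.2 ⟨by linarith, by linarith⟩
    linarith
end

section
/- Let λ : ℝ → ℝ be continuously differentiable with λ and λ' bounded on [0, ∞), suppose λ does not tend to zero as τ → +∞, and suppose the average ⟨λ²⟩ = lim_{τ→+∞} (1/τ)·∫₀^τ λ(p)² dp exists. Let (α, u) : [0, ∞) → ℝ² be a solution of the reduced system α' = u², u' = −αu − λ(τ) with α(0) > 0. Then α(τ)³/3 = ⟨λ²⟩·τ + o(τ) as τ → +∞; equivalently, α(τ) = (3⟨λ²⟩)^{1/3}·τ^{1/3} + o(τ^{1/3}). -/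
open Filter Asymptotics Set

/-- Barrier/persistence lemma: if `g T ≤ c` and `g' < 0` whenever `g = c`, then `g ≤ c` forever. -/
lemma persist_le {g g' : ℝ → ℝ} {T c : ℝ}
    (hg : ∀ t, T ≤ t → HasDerivAt g (g' t) t)
    (hneg : ∀ t, T ≤ t → g t = c → g' t < 0)
    (h0 : g T ≤ c) : ∀ t, T ≤ t → g t ≤ c := by
  intro t ht
  have hcont : ContinuousOn g (Icc T t) := fun x hx =>
    (hg x hx.1).continuousAt.continuousWithinAt
  have := image_le_of_deriv_right_lt_deriv_boundary' (f := g) (f' := g') (a := T) (b := t)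
    hcont (fun x hx => (hg x hx.1).hasDerivWithinAt)
    (B := fun _ => c) (B' := fun _ => 0) h0 continuousOn_const
    (fun x _ => hasDerivWithinAt_const x _ c)
    (fun x hx hgx => hneg x hx.1 hgx)
  exact this ⟨ht, le_rfl⟩

/-- Descent lemma: if `g' ≤ -ρ < 0` whenever `g ≥ c`, then eventually `g ≤ c` at some point. -/
lemma descend_le {g g' : ℝ → ℝ} {T c ρ : ℝ} (hρ : 0 < ρ)
    (hg : ∀ t, T ≤ t → HasDerivAt g (g' t) t)
    (hneg : ∀ t, T ≤ t → c ≤ g t → g' t ≤ -ρ) : ∃ s, T ≤ s ∧ g s ≤ c := by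
  by_contra h
  push_neg at h
  -- g > c for all s ≥ T
  obtain ⟨T', hT'⟩ : ∃ T', T' = T + (g T - c) / ρ + 1 := ⟨_, rfl⟩
  have h1 : 0 ≤ (g T - c) / ρ := div_nonneg (by linarith [h T le_rfl]) hρ.le
  have hTT' : T ≤ T' := by rw [hT']; linarith
  -- h2 : the function g + ρ * (· - T) is antitone on [T, T']
  have hanti : AntitoneOn (fun x => g x + ρ * (x - T)) (Icc T T') := by
    apply antitoneOn_of_deriv_nonpos (convex_Icc T T')
    · exact fun x hx => ((hg x hx.1).add
        (((hasDerivAt_id x).sub_const T).const_mul ρ)).continuousAt.continuousWithinAt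
    · intro x hx
      rw [interior_Icc] at hx
      exact ((hg x hx.1.le).add
        (((hasDerivAt_id x).sub_const T).const_mul ρ)).differentiableAt.differentiableWithinAt
    · intro x hx
      rw [interior_Icc] at hx
      have hd : HasDerivAt (fun x => g x + ρ * (x - T)) (g' x + ρ * 1) x :=
        (hg x hx.1.le).add (((hasDerivAt_id x).sub_const T).const_mul ρ)
      rw [hd.deriv]
      have := hneg x hx.1.le (h x hx.1.le).le
      linarith
  have := hanti (left_mem_Icc.2 hTT') (right_mem_Icc.2 hTT') hTT'
  simp only [sub_self, mul_zero, add_zero] at this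
  have hgt : c < g T' := h T' hTT'
  have h2 : ρ * (T' - T) = (g T - c) + ρ := by
    rw [hT']; field_simp; ring
  linarith

/-- If `ρ` is continuous on `[0,∞)` and tends to `0`, then `∫₀^τ ρ = o(τ)`. -/
lemma integral_isLittleO {ρ : ℝ → ℝ} (hc : ContinuousOn ρ (Ici 0))
    (h : Tendsto ρ atTop (nhds 0)) :
    (fun τ : ℝ => ∫ p in (0:ℝ)..τ, ρ p) =o[atTop] (fun τ : ℝ => τ) := by
  rw [isLittleO_iff]
  intro c hc0
  have hev : ∀ᶠ t in atTop, |ρ t| < c / 2 := by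
    have := (Metric.tendsto_nhds.1 h) (c / 2) (by positivity)
    simpa [Real.dist_eq] using this
  obtain ⟨T₀, hT₀⟩ := hev.exists_forall_of_atTop
  obtain ⟨T, hT1, hT2⟩ : ∃ T, 0 ≤ T ∧ ∀ t ≥ T, |ρ t| < c / 2 :=
    ⟨max T₀ 0, le_max_right _ _, fun t ht => hT₀ t (le_trans (le_max_left _ _) ht)⟩
  have hint : ∀ a b : ℝ, 0 ≤ a → a ≤ b → IntervalIntegrable ρ MeasureTheory.volume a b := by
    intro a b ha hab
    apply ContinuousOn.intervalIntegrable
    apply hc.mono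
    rw [uIcc_of_le hab]
    exact fun x hx => le_trans ha hx.1
  set C₀ : ℝ := |∫ p in (0:ℝ)..T, ρ p| with hC₀
  filter_upwards [eventually_ge_atTop (max T (2 * C₀ / c))] with τ hτ
  have hτT : T ≤ τ := le_trans (le_max_left _ _) hτ
  have hτ0 : 0 ≤ τ := le_trans hT1 hτT
  have hsplit : (∫ p in (0:ℝ)..τ, ρ p) = (∫ p in (0:ℝ)..T, ρ p) + ∫ p in T..τ, ρ p :=
    (intervalIntegral.integral_add_adjacent_intervals (hint 0 T le_rfl hT1)
      (hint T τ hT1 hτT)).symm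
  have htail : ‖∫ p in T..τ, ρ p‖ ≤ (c / 2) * |τ - T| := by
    apply intervalIntegral.norm_integral_le_of_norm_le_const
    intro x hx
    rw [uIoc_of_le hτT] at hx
    exact (hT2 x hx.1.le).le
  rw [Real.norm_eq_abs, abs_of_nonneg (by linarith : (0:ℝ) ≤ τ - T)] at htail
  have h2C : 2 * C₀ / c ≤ τ := le_trans (le_max_right _ _) hτ
  have hC : C₀ ≤ c * τ / 2 := by
    rw [div_le_iff₀ hc0] at h2C
    linarith
  calc ‖∫ p in (0:ℝ)..τ, ρ p‖ = |(∫ p in (0:ℝ)..T, ρ p) + ∫ p in T..τ, ρ p| := by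
        rw [hsplit]; rfl
    _ ≤ C₀ + (c / 2) * (τ - T) := le_trans (abs_add_le _ _) (by gcongr)
    _ ≤ c * τ / 2 + (c / 2) * τ := by
        have : (c / 2) * (τ - T) ≤ (c / 2) * τ := by nlinarith
        linarith
    _ ≤ c * ‖τ‖ := by
        rw [Real.norm_eq_abs, abs_of_nonneg hτ0]
        linarith

set_option maxHeartbeats 2000000 in
/-- Theorem 2: for the reduced system `α' = u²`, `u' = -αu - λ(τ)` of the Chaplygin sleigh
with oscillating rotor, with `λ` and `λ'` bounded on `[0, ∞)`, `λ` not tending to zero, and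
the average `⟨λ²⟩ = lim (1/τ)∫₀^τ λ² dp` existing, every solution with `α(0) > 0` satisfies
`α(τ)³/3 = ⟨λ²⟩·τ + o(τ)` as `τ → +∞`. -/
theorem alpha_cubed_growth
    (l α u : ℝ → ℝ)
    (hl : ContDiff ℝ 1 l)
    (hl_bdd : ∃ M : ℝ, ∀ τ : ℝ, 0 ≤ τ → |l τ| ≤ M)
    (hl'_bdd : ∃ M : ℝ, ∀ τ : ℝ, 0 ≤ τ → |deriv l τ| ≤ M)
    (hl_not0 : ¬ Tendsto l atTop (nhds 0))
    (lsq : ℝ)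
    (havg : Tendsto (fun τ : ℝ => (∫ p in (0:ℝ)..τ, (l p) ^ 2) / τ) atTop (nhds lsq))
    (hα : ∀ τ : ℝ, 0 ≤ τ → HasDerivAt α (u τ ^ 2) τ)
    (hu : ∀ τ : ℝ, 0 ≤ τ → HasDerivAt u (-(α τ * u τ) - l τ) τ)
    (hα0 : 0 < α 0) :
    (fun τ : ℝ => α τ ^ 3 / 3 - lsq * τ) =o[atTop] (fun τ : ℝ => τ) := by
  obtain ⟨M, hM⟩ := hl_bdd
  obtain ⟨M', hM'⟩ := hl'_bdd
  have hM0 : 0 ≤ M := le_trans (abs_nonneg _) (hM 0 le_rfl)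
  have hM'0 : 0 ≤ M' := le_trans (abs_nonneg _) (hM' 0 le_rfl)
  have hld : ∀ t : ℝ, HasDerivAt l (deriv l t) t :=
    fun t => (hl.differentiable one_ne_zero t).hasDerivAt
  have hlc : Continuous l := hl.continuous
  have hl'c : Continuous (deriv l) := hl.continuous_deriv le_rfl
  have hcα : ContinuousOn α (Ici 0) :=
    fun t ht => (hα t ht).continuousAt.continuousWithinAt
  have hcu : ContinuousOn u (Ici 0) :=
    fun t ht => (hu t ht).continuousAt.continuousWithinAt
  -- interval integrability of continuous-on-[0,∞) functions
  have hII : ∀ (f : ℝ → ℝ), ContinuousOn f (Ici 0) → ∀ a b : ℝ, 0 ≤ a → a ≤ b →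
      IntervalIntegrable f MeasureTheory.volume a b := by
    intro f hf a b ha hab
    apply ContinuousOn.intervalIntegrable
    apply hf.mono
    rw [uIcc_of_le hab]
    exact fun x hx => le_trans ha hx.1
  -- FTC for α on [a, b] ⊆ [0, ∞)
  have hFTC : ∀ a b : ℝ, 0 ≤ a → a ≤ b → α b - α a = ∫ p in a..b, u p ^ 2 := by
    intro a b ha hab
    symm
    apply intervalIntegral.integral_eq_sub_of_hasDerivAt
    · intro x hx
      rw [uIcc_of_le hab] at hx
      exact hα x (le_trans ha hx.1)
    · exact hII _ (hcu.pow 2) a b ha hab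
  -- α is monotone on [0, ∞)
  have hmono : ∀ a b : ℝ, 0 ≤ a → a ≤ b → α a ≤ α b := by
    intro a b ha hab
    have h1 : (0:ℝ) ≤ ∫ p in a..b, u p ^ 2 :=
      intervalIntegral.integral_nonneg hab (fun x _ => sq_nonneg _)
    have := hFTC a b ha hab
    linarith
  have hαpos : ∀ t : ℝ, 0 ≤ t → 0 < α t := fun t ht => lt_of_lt_of_le hα0 (hmono 0 t le_rfl ht)
  -- uniform bound on u
  obtain ⟨K, hK0, hKu⟩ : ∃ K : ℝ, 0 < K ∧ ∀ t : ℝ, 0 ≤ t → |u t| ≤ K := by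
    set K : ℝ := max |u 0| ((M + 1) / α 0) with hK
    have hKpos : 0 < K := lt_of_lt_of_le (by positivity) (le_max_right _ _)
    have hK1 : (M + 1) / α 0 ≤ K := le_max_right _ _
    have hK2 : M + 1 ≤ α 0 * K := by
      rw [div_le_iff₀ hα0] at hK1
      linarith [hK1]
    refine ⟨K, hKpos, ?_⟩
    have hper : ∀ t : ℝ, 0 ≤ t → u t ^ 2 ≤ K ^ 2 := by
      apply persist_le (g' := fun t => 2 * u t ^ 1 * (-(α t * u t) - l t))
      · intro t ht
        exact (hu t ht).pow 2
      · intro t ht heq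
        have habs : |u t| = K := by
          have h1 : |u t| ^ 2 = K ^ 2 := by rw [sq_abs]; exact heq
          nlinarith [abs_nonneg (u t), hKpos]
        have hul : |u t * l t| ≤ K * M := by
          rw [abs_mul, habs]
          exact mul_le_mul_of_nonneg_left (hM t ht) hKpos.le
        have h2 : u t * l t ≥ -(K * M) := neg_le_of_abs_le hul
        have h3 : α 0 ≤ α t := hmono 0 t le_rfl ht
        have h5 : α t * u t ^ 2 ≥ α 0 * K ^ 2 := by
          rw [heq]; exact mul_le_mul_of_nonneg_right h3 (sq_nonneg _)
        have h6 : α 0 * K ^ 2 ≥ (M + 1) * K := by nlinarith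
        nlinarith
      · have : |u 0| ≤ K := le_max_left _ _
        nlinarith [abs_nonneg (u 0), sq_abs (u 0)]
    intro t ht
    have := hper t ht
    nlinarith [abs_nonneg (u t), sq_abs (u t), hKpos]
  by_cases hbdd : ∃ A, ∀ t : ℝ, 0 ≤ t → α t ≤ A
  · -- bounded case: lsq = 0 and α³/3 is bounded
    obtain ⟨A₀, hA₀⟩ := hbdd
    obtain ⟨A, hA⟩ : ∃ A : ℝ, A = max A₀ (α 0) := ⟨_, rfl⟩
    have hAb : ∀ t : ℝ, 0 ≤ t → α t ≤ A := fun t ht => hA ▸ le_trans (hA₀ t ht) (le_max_left _ _)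
    have hAα : α 0 ≤ A := hA ▸ le_max_right _ _
    have hApos : 0 < A := lt_of_lt_of_le hα0 hAα
    -- bound on ∫ u²
    have hIu : ∀ τ : ℝ, 0 ≤ τ → (∫ p in (0:ℝ)..τ, u p ^ 2) ≤ A - α 0 := by
      intro τ hτ
      rw [← hFTC 0 τ le_rfl hτ]
      linarith [hAb τ hτ]
    -- bound on ∫ |u|
    have habsu : ∀ ε : ℝ, 0 < ε → ∀ τ : ℝ, 0 ≤ τ →
        (∫ p in (0:ℝ)..τ, |u p|) ≤ ε * τ + (A - α 0) / ε := by
      intro ε hε τ hτ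
      have hmono2 : (∫ p in (0:ℝ)..τ, |u p|) ≤ ∫ p in (0:ℝ)..τ, (ε + u p ^ 2 / ε) := by
        apply intervalIntegral.integral_mono_on hτ (hII _ hcu.abs 0 τ le_rfl hτ)
        · exact hII _ (continuousOn_const.add ((hcu.pow 2).div_const ε)) 0 τ le_rfl hτ
        · intro p hp
          have h1 := sq_abs (u p)
          have h2 := abs_nonneg (u p)
          have h3 := sq_nonneg (|u p| - ε)
          rw [← sub_nonneg]
          have : ε + u p ^ 2 / ε - |u p| = (ε ^ 2 - ε * |u p| + u p ^ 2) / ε := by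
            field_simp; ring
          rw [this]
          apply div_nonneg _ hε.le
          nlinarith
      have heq : (∫ p in (0:ℝ)..τ, (ε + u p ^ 2 / ε))
          = ε * τ + (∫ p in (0:ℝ)..τ, u p ^ 2) / ε := by
        rw [intervalIntegral.integral_add (show IntervalIntegrable (fun _ => ε) MeasureTheory.volume 0 τ by simp)
          ((hII (fun p => u p ^ 2) (hcu.pow 2) 0 τ le_rfl hτ).div_const ε), intervalIntegral.integral_div]
        simp [mul_comm]
      rw [heq] at hmono2
      have h4 : (∫ p in (0:ℝ)..τ, u p ^ 2) / ε ≤ (A - α 0) / ε := by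
        gcongr
        exact hIu τ hτ
      linarith
    -- FTC for l·u
    have hintc : ContinuousOn (fun p => deriv l p * u p + l p * (-(α p * u p) - l p)) (Ici 0) :=
      (hl'c.continuousOn.mul hcu).add
        (hlc.continuousOn.mul (((hcα.mul hcu).neg).sub hlc.continuousOn))
    have hparts : ∀ τ : ℝ, 0 ≤ τ → l τ * u τ - l 0 * u 0
        = ∫ p in (0:ℝ)..τ, (deriv l p * u p + l p * (-(α p * u p) - l p)) := by
      intro τ hτ
      symm
      apply intervalIntegral.integral_eq_sub_of_hasDerivAt
      · intro x hx
        rw [uIcc_of_le hτ] at hx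
        exact (hld x).mul (hu x hx.1)
      · exact hII _ hintc 0 τ le_rfl hτ
    -- rewrite: ∫ l² in terms of the rest
    have hgc : ContinuousOn (fun p => deriv l p * u p - l p * (α p * u p)) (Ici 0) :=
      (hl'c.continuousOn.mul hcu).sub (hlc.continuousOn.mul (hcα.mul hcu))
    have hl2eq : ∀ τ : ℝ, 0 ≤ τ → (∫ p in (0:ℝ)..τ, l p ^ 2)
        = (∫ p in (0:ℝ)..τ, (deriv l p * u p - l p * (α p * u p)))
          - (l τ * u τ - l 0 * u 0) := by
      intro τ hτ
      have h1 : (∫ p in (0:ℝ)..τ, (deriv l p * u p + l p * (-(α p * u p) - l p)))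
          = (∫ p in (0:ℝ)..τ, (deriv l p * u p - l p * (α p * u p)))
            - (∫ p in (0:ℝ)..τ, l p ^ 2) := by
        rw [← intervalIntegral.integral_sub (hII _ hgc 0 τ le_rfl hτ)
          (hII (fun p => l p ^ 2) ((hlc.continuousOn).pow 2) 0 τ le_rfl hτ)]
        apply intervalIntegral.integral_congr
        intro p _
        ring
      rw [hparts τ hτ] at *
      rw [h1] at *
      ring
    -- bound on ∫ l²
    have hbnd : ∀ τ : ℝ, 0 ≤ τ →
        |∫ p in (0:ℝ)..τ, (deriv l p * u p - l p * (α p * u p))|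
          ≤ (M' + A * M) * ∫ p in (0:ℝ)..τ, |u p| := by
      intro τ hτ
      have h1 : ‖∫ p in (0:ℝ)..τ, (deriv l p * u p - l p * (α p * u p))‖
          ≤ ∫ p in (0:ℝ)..τ, ‖deriv l p * u p - l p * (α p * u p)‖ :=
        intervalIntegral.norm_integral_le_integral_norm hτ
      have h2 : (∫ p in (0:ℝ)..τ, ‖deriv l p * u p - l p * (α p * u p)‖)
          ≤ ∫ p in (0:ℝ)..τ, (M' + A * M) * |u p| := by
        apply intervalIntegral.integral_mono_on hτ
          (hII _ hgc.norm 0 τ le_rfl hτ)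
          (((hII _ hcu.abs 0 τ le_rfl hτ).const_mul _))
        intro p hp
        have hp0 : (0:ℝ) ≤ p := hp.1
        have e1 : |deriv l p * u p| ≤ M' * |u p| := by
          rw [abs_mul]
          exact mul_le_mul_of_nonneg_right (hM' p hp0) (abs_nonneg _)
        have e2 : |l p * (α p * u p)| ≤ M * (A * |u p|) := by
          rw [abs_mul, abs_mul]
          have hαa : |α p| ≤ A := by
            rw [abs_of_pos (hαpos p hp0)]
            exact hAb p hp0
          have : |α p| * |u p| ≤ A * |u p| :=
            mul_le_mul_of_nonneg_right hαa (abs_nonneg _)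
          exact mul_le_mul (hM p hp0) this (by positivity) hM0
        calc ‖deriv l p * u p - l p * (α p * u p)‖
            ≤ |deriv l p * u p| + |l p * (α p * u p)| := abs_sub _ _
          _ ≤ M' * |u p| + M * (A * |u p|) := add_le_add e1 e2
          _ = (M' + A * M) * |u p| := by ring
      rw [intervalIntegral.integral_const_mul] at h2
      calc |∫ p in (0:ℝ)..τ, (deriv l p * u p - l p * (α p * u p))|
          ≤ ∫ p in (0:ℝ)..τ, ‖deriv l p * u p - l p * (α p * u p)‖ := h1
        _ ≤ (M' + A * M) * ∫ p in (0:ℝ)..τ, |u p| := h2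
    -- ∫ l² / τ → 0
    have hT0 : Tendsto (fun τ : ℝ => (∫ p in (0:ℝ)..τ, l p ^ 2) / τ) atTop (nhds 0) := by
      rw [Metric.tendsto_nhds]
      intro ε' hε'
      obtain ⟨D, hD⟩ : ∃ D : ℝ, D = M' + A * M := ⟨_, rfl⟩
      have hD0 : 0 ≤ D := by rw [hD]; positivity
      obtain ⟨ε, hεdef⟩ : ∃ ε : ℝ, ε = ε' / (2 * (D + 1)) := ⟨_, rfl⟩
      have hε : 0 < ε := by rw [hεdef]; positivity
      obtain ⟨C', hC'⟩ : ∃ C' : ℝ, C' = 2 * M * K + D * ((A - α 0) / ε) := ⟨_, rfl⟩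
      have hC'0 : 0 ≤ C' := by
        have h9 : 0 ≤ (A - α 0) / ε := div_nonneg (by linarith) hε.le
        rw [hC']; positivity
      filter_upwards [eventually_ge_atTop (max 1 (2 * C' / ε' + 1))] with τ hτ
      have hτ1 : (1:ℝ) ≤ τ := le_trans (le_max_left _ _) hτ
      have hτpos : (0:ℝ) < τ := lt_of_lt_of_le zero_lt_one hτ1
      have hτ0 : (0:ℝ) ≤ τ := hτpos.le
      have hτC : 2 * C' / ε' + 1 ≤ τ := le_trans (le_max_right _ _) hτ
      -- the integral of l² is nonneg
      have hnn : 0 ≤ ∫ p in (0:ℝ)..τ, l p ^ 2 :=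
        intervalIntegral.integral_nonneg hτ0 (fun x _ => sq_nonneg _)
      -- bound
      have hlu : ∀ s : ℝ, 0 ≤ s → |l s * u s| ≤ M * K := by
        intro s hs
        rw [abs_mul]
        exact mul_le_mul (hM s hs) (hKu s hs) (abs_nonneg _) hM0
      have hb1 : (∫ p in (0:ℝ)..τ, l p ^ 2) ≤ C' + D * ε * τ := by
        rw [hl2eq τ hτ0]
        have b1 := hbnd τ hτ0
        have b2 := habsu ε hε τ hτ0
        have b3 := hlu τ hτ0
        have b4 := hlu 0 le_rfl
        have b5 : (M' + A * M) * (∫ p in (0:ℝ)..τ, |u p|)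
            ≤ (M' + A * M) * (ε * τ + (A - α 0) / ε) :=
          mul_le_mul_of_nonneg_left b2 (by positivity)
        have b6 : (∫ p in (0:ℝ)..τ, (deriv l p * u p - l p * (α p * u p)))
            ≤ (M' + A * M) * (ε * τ + (A - α 0) / ε) :=
          le_trans (le_trans (le_abs_self _) b1) b5
        have b7 : -(l τ * u τ - l 0 * u 0) ≤ 2 * (M * K) := by
          have c1 := neg_le_of_abs_le b3
          have c2 := le_of_abs_le b4
          linarith
        have b8 : (M' + A * M) * (ε * τ + (A - α 0) / ε)
            = D * (ε * τ) + D * ((A - α 0) / ε) := by rw [hD]; ring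
        rw [hC']
        rw [b8] at b6
        linarith
      -- conclude
      rw [Real.dist_eq, sub_zero, abs_of_nonneg (div_nonneg hnn hτ0)]
      rw [div_lt_iff₀ hτpos]
      have k1 : D * ε ≤ ε' / 2 := by
        rw [hεdef]
        rw [mul_div_assoc', div_le_div_iff₀ (by positivity) (by norm_num : (0:ℝ) < 2)]
        nlinarith
      have k2 : C' < ε' / 2 * τ := by
        have : 2 * C' / ε' < τ := by linarith
        rw [div_lt_iff₀ hε'] at this
        nlinarith
      calc (∫ p in (0:ℝ)..τ, l p ^ 2) ≤ C' + D * ε * τ := hb1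
        _ < ε' / 2 * τ + ε' / 2 * τ := by
            have : D * ε * τ ≤ ε' / 2 * τ := mul_le_mul_of_nonneg_right k1 hτ0
            linarith
        _ = ε' * τ := by ring
    -- lsq = 0
    have hlsq0 : lsq = 0 := tendsto_nhds_unique havg hT0
    subst hlsq0
    -- conclusion: bounded + lsq = 0
    rw [isLittleO_iff]
    intro c hc
    filter_upwards [eventually_ge_atTop (max 0 (A ^ 3 / (3 * c)))] with τ hτ
    have hτ0 : (0:ℝ) ≤ τ := le_trans (le_max_left _ _) hτ
    have hτA : A ^ 3 / (3 * c) ≤ τ := le_trans (le_max_right _ _) hτ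
    have h1 : 0 < α τ := hαpos τ hτ0
    have h2 : α τ ≤ A := hAb τ hτ0
    have h3 : α τ ^ 3 ≤ A ^ 3 := pow_le_pow_left₀ h1.le h2 3
    have h4 : A ^ 3 ≤ 3 * c * τ := by
      rw [div_le_iff₀ (by positivity)] at hτA
      linarith
    rw [Real.norm_eq_abs, Real.norm_eq_abs]
    rw [zero_mul, sub_zero, abs_of_nonneg hτ0, abs_of_nonneg (by positivity : (0:ℝ) ≤ α τ ^ 3 / 3)]
    linarith
  · -- unbounded case
    push_neg at hbdd
    have hαtop : Tendsto α atTop atTop := by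
      rw [tendsto_atTop]
      intro b
      obtain ⟨t₀, ht₀0, ht₀⟩ := hbdd b
      filter_upwards [eventually_ge_atTop t₀] with τ hτ
      exact le_trans ht₀.le (hmono t₀ τ ht₀0 hτ)
    obtain ⟨w, hwdef⟩ : ∃ w : ℝ → ℝ, w = fun t => α t * u t + l t := ⟨_, rfl⟩
    have hweq : ∀ t, w t = α t * u t + l t := fun t => by rw [hwdef]
    have hwd : ∀ t : ℝ, 0 ≤ t → HasDerivAt w ((u t ^ 3 + deriv l t) - α t * w t) t := by
      intro t ht
      have h1 : HasDerivAt (fun s => α s * u s + l s)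
          (u t ^ 2 * u t + α t * (-(α t * u t) - l t) + deriv l t) t :=
        ((hα t ht).mul (hu t ht)).add (hld t)
      have h0 : HasDerivAt w (u t ^ 2 * u t + α t * (-(α t * u t) - l t) + deriv l t) t := by
        rw [hwdef]; exact h1
      have h2 : u t ^ 2 * u t + α t * (-(α t * u t) - l t) + deriv l t
          = (u t ^ 3 + deriv l t) - α t * w t := by rw [hweq]; ring
      exact h2 ▸ h0
    have hwc : ContinuousOn w (Ici 0) := by
      rw [hwdef]; exact (hcα.mul hcu).add hlc.continuousOn
    obtain ⟨B, hB⟩ : ∃ B : ℝ, B = K ^ 3 + M' := ⟨_, rfl⟩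
    have hB0 : 0 < B := by rw [hB]; positivity
    have hbB : ∀ t : ℝ, 0 ≤ t → |u t ^ 3 + deriv l t| ≤ B := by
      intro t ht
      have h1 : |u t ^ 3| ≤ K ^ 3 := by
        rw [abs_pow]
        exact pow_le_pow_left₀ (abs_nonneg _) (hKu t ht) 3
      calc |u t ^ 3 + deriv l t| ≤ |u t ^ 3| + |deriv l t| := abs_add_le _ _
        _ ≤ K ^ 3 + M' := add_le_add h1 (hM' t ht)
        _ = B := hB.symm
    -- w tends to 0
    have hw0 : Tendsto w atTop (nhds 0) := by
      rw [Metric.tendsto_nhds]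
      intro ε hε
      obtain ⟨δ, hδdef⟩ : ∃ δ : ℝ, δ = ε / 2 := ⟨_, rfl⟩
      have hδ : 0 < δ := by rw [hδdef]; positivity
      have hδε : δ < ε := by rw [hδdef]; linarith
      obtain ⟨T₀, hT₀⟩ := ((hαtop.eventually_ge_atTop ((B + 1) / δ)).and
        (eventually_ge_atTop (0:ℝ))).exists_forall_of_atTop
      have hgd : ∀ t, T₀ ≤ t → HasDerivAt (fun s => w s ^ 2)
          (2 * w t ^ 1 * ((u t ^ 3 + deriv l t) - α t * w t)) t :=
        fun t ht => (hwd t (hT₀ t ht).2).pow 2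
      have key : ∀ t, T₀ ≤ t → δ ^ 2 ≤ w t ^ 2 →
          2 * w t ^ 1 * ((u t ^ 3 + deriv l t) - α t * w t) ≤ -(2 * δ) := by
        intro t ht hwt
        have ht0 : (0:ℝ) ≤ t := (hT₀ t ht).2
        have hαt : (B + 1) / δ ≤ α t := (hT₀ t ht).1
        have hαt' : B + 1 ≤ α t * δ := by rw [div_le_iff₀ hδ] at hαt; linarith
        have habsw : δ ≤ |w t| := by
          nlinarith [abs_nonneg (w t), sq_abs (w t)]
        have h1 : w t * (u t ^ 3 + deriv l t) ≤ |w t| * B := by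
          calc w t * (u t ^ 3 + deriv l t) ≤ |w t * (u t ^ 3 + deriv l t)| := le_abs_self _
            _ = |w t| * |u t ^ 3 + deriv l t| := abs_mul _ _
            _ ≤ |w t| * B := mul_le_mul_of_nonneg_left (hbB t ht0) (abs_nonneg _)
        have h2a : α t * δ ≤ α t * |w t| :=
          mul_le_mul_of_nonneg_left habsw (hαpos t ht0).le
        have h2b : B + 1 ≤ α t * |w t| := le_trans hαt' h2a
        have h2 : (B + 1) * |w t| ≤ α t * w t ^ 2 := by
          nlinarith [sq_abs (w t), abs_nonneg (w t)]
        simp only [pow_one]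
        nlinarith [h1, h2, habsw]
      obtain ⟨s, hsT, hs⟩ := descend_le (T := T₀) (c := δ ^ 2) (ρ := 2 * δ)
        (by positivity) hgd key
      have hper := persist_le (T := s) (c := δ ^ 2)
        (g' := fun t => 2 * w t ^ 1 * ((u t ^ 3 + deriv l t) - α t * w t))
        (fun t ht => hgd t (le_trans hsT ht))
        (fun t ht heq => lt_of_le_of_lt (key t (le_trans hsT ht) heq.ge) (by linarith))
        hs
      filter_upwards [eventually_ge_atTop s] with τ hτ
      have hwτ := hper τ hτ
      rw [Real.dist_eq, sub_zero]
      nlinarith [abs_nonneg (w τ), sq_abs (w τ)]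
    -- the remainder r = w² - 2wl tends to 0
    obtain ⟨r, hrdef⟩ : ∃ r : ℝ → ℝ, r = fun t => w t ^ 2 - 2 * (w t * l t) := ⟨_, rfl⟩
    have hwl : Tendsto (fun t => w t * l t) atTop (nhds 0) := by
      apply squeeze_zero_norm' (a := fun t => M * |w t|)
      · filter_upwards [eventually_ge_atTop (0:ℝ)] with t ht
        rw [Real.norm_eq_abs, abs_mul]
        calc |w t| * |l t| ≤ |w t| * M :=
              mul_le_mul_of_nonneg_left (hM t ht) (abs_nonneg _)
          _ = M * |w t| := mul_comm _ _
      · have h1 : Tendsto (fun t => |w t|) atTop (nhds 0) := by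
          simpa using hw0.abs
        simpa using h1.const_mul M
    have hr0 : Tendsto r atTop (nhds 0) := by
      rw [hrdef]
      have h1 : Tendsto (fun t => w t ^ 2) atTop (nhds 0) := by
        have h2 := hw0.mul hw0
        simp only [mul_zero] at h2
        apply h2.congr
        intro t
        rw [sq]
      have h2 : Tendsto (fun t => 2 * (w t * l t)) atTop (nhds (2 * 0)) :=
        (tendsto_const_nhds : Tendsto (fun _ : ℝ => (2:ℝ)) atTop (nhds 2)).mul hwl
      rw [mul_zero] at h2
      simpa using h1.sub h2
    have hrc : ContinuousOn r (Ici 0) := by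
      rw [hrdef]
      exact (hwc.pow 2).sub (continuousOn_const.mul (hwc.mul hlc.continuousOn))
    have hIr := integral_isLittleO hrc hr0
    -- FTC for α³/3
    have hFTC3 : ∀ τ : ℝ, 0 ≤ τ →
        α τ ^ 3 / 3 - α 0 ^ 3 / 3 = ∫ p in (0:ℝ)..τ, (α p ^ 2 * u p ^ 2) := by
      intro τ hτ
      symm
      apply intervalIntegral.integral_eq_sub_of_hasDerivAt (f := fun t => α t ^ 3 / 3)
      · intro x hx
        rw [uIcc_of_le hτ] at hx
        have h1 : HasDerivAt (fun t => α t ^ 3) (3 * α x ^ 2 * u x ^ 2) x := by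
          have h2 := (hα x hx.1).pow 3
          norm_num at h2
          exact h2
        have h3 := h1.div_const 3
        exact h3.congr_deriv (by ring)
      · exact hII _ ((hcα.pow 2).mul (hcu.pow 2)) 0 τ le_rfl hτ
    -- pointwise identity α²u² = l² + r
    have hpt : ∀ p : ℝ, α p ^ 2 * u p ^ 2 = l p ^ 2 + r p := by
      intro p
      simp only [hrdef, hwdef]
      ring
    have hsplit : ∀ τ : ℝ, 0 ≤ τ → (∫ p in (0:ℝ)..τ, α p ^ 2 * u p ^ 2)
        = (∫ p in (0:ℝ)..τ, l p ^ 2) + ∫ p in (0:ℝ)..τ, r p := by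
      intro τ hτ
      rw [← intervalIntegral.integral_add
        (hII (fun p => l p ^ 2) ((hlc.continuousOn).pow 2) 0 τ le_rfl hτ) (hII _ hrc 0 τ le_rfl hτ)]
      exact intervalIntegral.integral_congr (fun p _ => hpt p)
    -- ∫ l² - lsq·τ = o(τ)
    have hIl : (fun τ : ℝ => (∫ p in (0:ℝ)..τ, l p ^ 2) - lsq * τ)
        =o[atTop] (fun τ : ℝ => τ) := by
      rw [isLittleO_iff_tendsto (fun x hx => by rw [hx]; simp)]
      have h1 : Tendsto (fun τ : ℝ => (∫ p in (0:ℝ)..τ, l p ^ 2) / τ - lsq)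
          atTop (nhds 0) := by simpa using havg.sub_const lsq
      apply h1.congr'
      filter_upwards [eventually_ne_atTop (0:ℝ)] with τ hτ
      field_simp
    -- assemble
    have hfin : (fun τ : ℝ => α τ ^ 3 / 3 - lsq * τ) =ᶠ[atTop]
        (fun τ : ℝ => α 0 ^ 3 / 3
          + (((∫ p in (0:ℝ)..τ, l p ^ 2) - lsq * τ) + ∫ p in (0:ℝ)..τ, r p)) := by
      filter_upwards [eventually_ge_atTop (0:ℝ)] with τ hτ
      have h1 := hFTC3 τ hτ
      rw [hsplit τ hτ] at h1
      linarith
    have ho : (fun τ : ℝ => α 0 ^ 3 / 3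
        + (((∫ p in (0:ℝ)..τ, l p ^ 2) - lsq * τ) + ∫ p in (0:ℝ)..τ, r p))
        =o[atTop] (fun τ : ℝ => τ) :=
      (isLittleO_const_id_atTop _).add (hIl.add hIr)
    exact ho.congr' hfin.symm EventuallyEq.rfl
end

section
/- Let K : ℝ → ℝ be a real-analytic function whose derivative λ = K' is bounded on [0, ∞) together with λ', and suppose λ does not tend to zero as τ → +∞ and that for every a > 0 the equation K(τ) = K(a) has a root τ strictly larger than a. Let (α, u) : [0, ∞) → ℝ² be a solution of the reduced system α' = u², u' = −αu − λ(τ) with α(0) > 0 and u(0) = 0. Then the set { τ > 0 : u(τ) = 0 } of zeros of u is infinite (u has infinitely many zeros as τ → +∞). -/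
open Filter Set Topology intervalIntegral MeasureTheory
set_option maxHeartbeats 1000000

private lemma contOn_aux {f : ℝ → ℝ} {x y : ℝ} (hx : 0 ≤ x) (hxy : x ≤ y)
    (h : ∀ t, 0 ≤ t → ContinuousAt f t) : ContinuousOn f (Set.uIcc x y) := by
  rw [Set.uIcc_of_le hxy]
  exact fun t ht => (h t (hx.trans ht.1)).continuousWithinAt

private lemma core (K α v : ℝ → ℝ)
    (hK : AnalyticOnNhd ℝ K Set.univ)
    (M : ℝ) (hM : ∀ τ, 0 ≤ τ → |deriv K τ| ≤ M)
    (M' : ℝ) (hM' : ∀ τ, 0 ≤ τ → |deriv (deriv K) τ| ≤ M')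
    (δ : ℝ) (hδ : 0 < δ) (hfreq : ∀ s : ℝ, ∃ t, s ≤ t ∧ δ ≤ |deriv K t|)
    (hroots : ∀ a : ℝ, 0 < a → ∀ b : ℝ, ∃ τ, b < τ ∧ a < τ ∧ K τ = K a)
    (hα : ∀ τ, 0 ≤ τ → HasDerivAt α (v τ ^ 2) τ)
    (hv : ∀ τ, 0 ≤ τ → HasDerivAt v (-(α τ * v τ) - deriv K τ) τ)
    (hα0 : 0 < α 0)
    (T : ℝ) (hT : 0 ≤ T) (hpos : ∀ τ, T < τ → 0 < v τ) : False := by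
  -- continuity facts
  have hVc : ∀ t, 0 ≤ t → ContinuousAt v t := fun t ht => (hv t ht).continuousAt
  have hAc : ∀ t, 0 ≤ t → ContinuousAt α t := fun t ht => (hα t ht).continuousAt
  have hKd : ∀ t : ℝ, HasDerivAt K (deriv K t) t :=
    fun t => ((hK t trivial).differentiableAt).hasDerivAt
  have hl_an : AnalyticOnNhd ℝ (deriv K) Set.univ := hK.deriv
  have hlc : Continuous (deriv K) := by
    rw [← continuousOn_univ]; exact hl_an.continuousOn
  have hld : ∀ t : ℝ, HasDerivAt (deriv K) (deriv (deriv K) t) t :=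
    fun t => ((hl_an t trivial).differentiableAt).hasDerivAt
  have hl2c : Continuous (deriv (deriv K)) := by
    rw [← continuousOn_univ]; exact hl_an.deriv.continuousOn
  -- interval integrability helpers
  have hIv : ∀ {x y : ℝ}, 0 ≤ x → x ≤ y → IntervalIntegrable v volume x y :=
    fun hx hxy => (contOn_aux hx hxy hVc).intervalIntegrable
  have hIv2 : ∀ {x y : ℝ}, 0 ≤ x → x ≤ y → IntervalIntegrable (fun t => v t ^ 2) volume x y :=
    fun hx hxy => ((contOn_aux hx hxy hVc).pow 2).intervalIntegrable
  have hIαv : ∀ {x y : ℝ}, 0 ≤ x → x ≤ y →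
      IntervalIntegrable (fun t => -(α t * v t)) volume x y :=
    fun hx hxy => (((contOn_aux hx hxy hAc).mul (contOn_aux hx hxy hVc)).neg).intervalIntegrable
  have hIl : ∀ {x y : ℝ}, IntervalIntegrable (deriv K) volume x y :=
    fun {x y} => hlc.intervalIntegrable x y
  have hIf : ∀ {x y : ℝ}, 0 ≤ x → x ≤ y →
      IntervalIntegrable (fun t => -(α t * v t) - deriv K t) volume x y :=
    fun hx hxy => (hIαv hx hxy).sub hIl
  -- FTC identities
  have hftcα : ∀ x y : ℝ, 0 ≤ x → x ≤ y → α y - α x = ∫ t in x..y, v t ^ 2 := by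
    intro x y hx hxy
    refine (integral_eq_sub_of_hasDerivAt (fun t ht => ?_) (hIv2 hx hxy)).symm
    rw [Set.uIcc_of_le hxy] at ht
    exact hα t (hx.trans ht.1)
  have hftcK : ∀ x y : ℝ, ∫ t in x..y, deriv K t = K y - K x :=
    fun x y => integral_eq_sub_of_hasDerivAt (fun t _ => hKd t) hIl
  have hftcv : ∀ x y : ℝ, 0 ≤ x → x ≤ y →
      v y - v x = (∫ t in x..y, -(α t * v t)) - (K y - K x) := by
    intro x y hx hxy
    have h1 : v y - v x = ∫ t in x..y, (-(α t * v t) - deriv K t) := by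
      refine (integral_eq_sub_of_hasDerivAt (fun t ht => ?_) (hIf hx hxy)).symm
      rw [Set.uIcc_of_le hxy] at ht
      exact hv t (hx.trans ht.1)
    rw [h1, integral_sub (hIαv hx hxy) hIl, hftcK]
  -- α is monotone on [0, ∞), bounded below by c
  set c := α 0 with hcdef
  have hαmono : ∀ x y : ℝ, 0 ≤ x → x ≤ y → α x ≤ α y := by
    intro x y hx hxy
    have := hftcα x y hx hxy
    have h2 : (0:ℝ) ≤ ∫ t in x..y, v t ^ 2 :=
      intervalIntegral.integral_nonneg hxy (fun t _ => sq_nonneg _)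
    linarith
  have hαge : ∀ x : ℝ, 0 ≤ x → c ≤ α x := fun x hx => hαmono 0 x le_rfl hx
  set a := T + 1 with hadef
  have ha : 0 < a := by linarith
  have haT : T < a := by linarith
  have hva : 0 < v a := hpos a haT
  have hVnn : ∀ t, a ≤ t → 0 ≤ v t := fun t ht => (hpos t (lt_of_lt_of_le haT ht)).le
  -- along roots, the integral of v is bounded
  have hE1 : ∀ y : ℝ, a ≤ y → K y = K a → (∫ t in a..y, v t) ≤ v a / c := by
    intro y hy hKy
    have h1 := hftcv a y ha.le hy
    rw [hKy, sub_self, sub_zero] at h1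
    have h2 : (∫ t in a..y, c * v t) ≤ ∫ t in a..y, α t * v t := by
      refine intervalIntegral.integral_mono_on hy
        (((contOn_aux ha.le hy hVc).const_smul c).intervalIntegrable)
        (((contOn_aux ha.le hy hAc).mul (contOn_aux ha.le hy hVc)).intervalIntegrable)
        (fun t ht => ?_)
      exact mul_le_mul_of_nonneg_right (hαge t (ha.le.trans ht.1)) (hVnn t ht.1)
    have h3 : (∫ t in a..y, c * v t) = c * ∫ t in a..y, v t := intervalIntegral.integral_const_mul c v
    have h4 : (∫ t in a..y, -(α t * v t)) = -∫ t in a..y, α t * v t := by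
      rw [intervalIntegral.integral_neg]
    have hvy : 0 ≤ v y := hVnn y hy
    rw [le_div_iff₀ hα0]
    nlinarith [h1, h2, h3, h4]
  set F : ℝ → ℝ := fun x => ∫ t in a..x, v t with hFdef
  have hFadd : ∀ x y : ℝ, a ≤ x → x ≤ y → F y - F x = ∫ t in x..y, v t := by
    intro x y hx hxy
    have := intervalIntegral.integral_add_adjacent_intervals
      (hIv ha.le hx) (hIv (ha.le.trans hx) hxy)
    simp only [hFdef]
    linarith [this]
  have hFmono : ∀ x y : ℝ, a ≤ x → x ≤ y → F x ≤ F y := by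
    intro x y hx hxy
    have h1 := hFadd x y hx hxy
    have h2 : (0:ℝ) ≤ ∫ t in x..y, v t :=
      intervalIntegral.integral_nonneg hxy (fun t ht => hVnn t (hx.trans ht.1))
    linarith
  have hFbdd : ∀ x : ℝ, a ≤ x → F x ≤ v a / c := by
    intro x hx
    obtain ⟨y, hy1, hy2, hy3⟩ := hroots a ha x
    exact le_trans (hFmono x y hx hy1.le) (hE1 y hy2.le hy3)
  -- tail smallness of F
  have htail : ∀ ε : ℝ, 0 < ε → ∃ s, a ≤ s ∧ ∀ x y : ℝ, s ≤ x → x ≤ y →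
      (∫ t in x..y, v t) < ε := by
    intro ε hε
    have hne : (F '' Set.Ici a).Nonempty := ⟨F a, a, Set.mem_Ici.2 le_rfl, rfl⟩
    have hbdd : BddAbove (F '' Set.Ici a) := ⟨v a / c, fun z ⟨x, hx, hxz⟩ => hxz ▸ hFbdd x (Set.mem_Ici.1 hx)⟩
    set Ls := sSup (F '' Set.Ici a) with hLs
    obtain ⟨z, ⟨s, hs0, rfl⟩, hz⟩ := exists_lt_of_lt_csSup hne (by linarith : Ls - ε < Ls)
    have hs : a ≤ s := Set.mem_Ici.1 hs0
    refine ⟨s, hs, fun x y hx hxy => ?_⟩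
    have h1 : F y ≤ Ls := le_csSup hbdd ⟨y, Set.mem_Ici.2 (hs.trans (hx.trans hxy)), rfl⟩
    have h2 : F s ≤ F x := hFmono s x hs hx
    have := hFadd x y (hs.trans hx) hxy
    linarith
  set Mb := max M 1 with hMbdef
  have hMb : 0 < Mb := lt_of_lt_of_le one_pos (le_max_right _ _)
  have hlMb : ∀ t : ℝ, 0 ≤ t → |deriv K t| ≤ Mb := fun t ht => (hM t ht).trans (le_max_left _ _)
  -- pointwise bound on v' from above
  have hv'le : ∀ t : ℝ, a ≤ t → -(α t * v t) - deriv K t ≤ Mb := by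
    intro t ht
    have h1 : 0 ≤ α t * v t := mul_nonneg ((hα0.le.trans (hαge t (ha.le.trans ht)))) (hVnn t ht)
    have h2 : -deriv K t ≤ Mb := (neg_le_abs _).trans (hlMb t (ha.le.trans ht))
    linarith
  -- v tends to zero
  have hsmall : ∀ ε : ℝ, 0 < ε → ∃ s, a ≤ s ∧ ∀ t, s ≤ t → v t < ε := by
    intro ε hε
    obtain ⟨s₀, hs₀a, hs₀⟩ := htail (ε ^ 2 / (4 * Mb)) (by positivity)
    set r := ε / (2 * Mb) with hrdef
    have hr : 0 < r := by positivity
    refine ⟨s₀ + r, by linarith, fun t ht => ?_⟩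
    by_contra hcon
    push_neg at hcon
    have htr : s₀ ≤ t - r := by linarith
    have hta : a ≤ t - r := hs₀a.trans htr
    -- v ≥ ε/2 on [t - r, t]
    have hlow : ∀ x, t - r ≤ x → x ≤ t → ε / 2 ≤ v x := by
      intro x hx1 hx2
      have hxa : a ≤ x := hta.trans hx1
      have h1 : v t - v x = ∫ z in x..t, (-(α z * v z) - deriv K z) := by
        refine (integral_eq_sub_of_hasDerivAt (fun z hz => ?_) (hIf (ha.le.trans hxa) hx2)).symm
        rw [Set.uIcc_of_le hx2] at hz
        exact hv z ((ha.le.trans hxa).trans hz.1)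
      have h2 : (∫ z in x..t, (-(α z * v z) - deriv K z)) ≤ ∫ z in x..t, Mb := by
        refine intervalIntegral.integral_mono_on hx2 (hIf (ha.le.trans hxa) hx2)
          (intervalIntegrable_const) (fun z hz => hv'le z (hxa.trans hz.1))
      rw [intervalIntegral.integral_const, smul_eq_mul] at h2
      have h3 : (t - x) * Mb ≤ r * Mb :=
        mul_le_mul_of_nonneg_right (by linarith) hMb.le
      have h4 : r * Mb = ε / 2 := by
        rw [hrdef]; field_simp
      nlinarith
    have h5 : (∫ z in t - r..t, (ε / 2)) ≤ ∫ z in t - r..t, v z := by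
      refine intervalIntegral.integral_mono_on (by linarith) intervalIntegrable_const
        (hIv (ha.le.trans hta) (by linarith)) (fun z hz => hlow z hz.1 hz.2)
    rw [intervalIntegral.integral_const, smul_eq_mul] at h5
    have h6 : (∫ z in t - r..t, v z) < ε ^ 2 / (4 * Mb) := hs₀ (t - r) t htr (by linarith)
    have h7 : (t - (t - r)) * (ε / 2) = ε ^ 2 / (4 * Mb) := by
      rw [hrdef]; field_simp; ring
    linarith
  -- α is bounded above on a tail
  obtain ⟨s₁, hs₁a, hs₁⟩ := hsmall 1 one_pos
  set A := α s₁ + v a / c with hAdef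
  have hA : ∀ x : ℝ, s₁ ≤ x → α x ≤ A := by
    intro x hx
    have h1 := hftcα s₁ x (ha.le.trans hs₁a) hx
    have h2 : (∫ t in s₁..x, v t ^ 2) ≤ ∫ t in s₁..x, v t := by
      refine intervalIntegral.integral_mono_on hx (hIv2 (ha.le.trans hs₁a) hx)
        (hIv (ha.le.trans hs₁a) hx) (fun t ht => ?_)
      have hv0 : 0 ≤ v t := hVnn t (hs₁a.trans ht.1)
      have hv1 : v t < 1 := hs₁ t ht.1
      nlinarith
    have h3 := hFadd s₁ x hs₁a hx
    have h4 : F x ≤ v a / c := hFbdd x (hs₁a.trans hx)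
    have h5 : 0 ≤ F s₁ := by
      have : (0:ℝ) ≤ ∫ t in a..s₁, v t :=
        intervalIntegral.integral_nonneg hs₁a (fun t ht => hVnn t ht.1)
      simpa [hFdef] using this
    simp only [hAdef]
    linarith
  have hApos : 0 < A := by
    have h1 : c ≤ α s₁ := hαge s₁ (ha.le.trans hs₁a)
    have h2 : 0 ≤ v a / c := div_nonneg hva.le hα0.le
    simp only [hAdef]; linarith
  clear_value A
  -- Lipschitz bound for deriv K on [0, ∞)
  set Mb' := max M' 1 with hMb'def
  have hMb' : 0 < Mb' := lt_of_lt_of_le one_pos (le_max_right _ _)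
  have hlip : ∀ x y : ℝ, 0 ≤ x → x ≤ y → |deriv K y - deriv K x| ≤ Mb' * (y - x) := by
    intro x y hx hxy
    have h1 : deriv K y - deriv K x = ∫ z in x..y, deriv (deriv K) z :=
      (integral_eq_sub_of_hasDerivAt (fun z _ => hld z) (hl2c.intervalIntegrable x y)).symm
    rw [h1]
    have h2 := intervalIntegral.norm_integral_le_of_norm_le_const
      (C := Mb') (f := fun z => deriv (deriv K) z) (a := x) (b := y) ?_
    · rw [Real.norm_eq_abs] at h2
      calc |∫ z in x..y, deriv (deriv K) z| ≤ Mb' * |y - x| := h2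
        _ = Mb' * (y - x) := by rw [abs_of_nonneg (by linarith)]
    · intro z hz
      rw [Set.uIoc_of_le hxy] at hz
      exact (hM' z (hx.trans hz.1.le)).trans (le_max_left _ _)
  -- final setup
  set l := δ / (2 * Mb') with hldef
  have hl : 0 < l := by positivity
  obtain ⟨ε₀, hε₀, hε₀A, hε₀l'⟩ : ∃ e : ℝ, 0 < e ∧ e ≤ δ / (4 * A) ∧ e ≤ δ * l / 4 :=
    ⟨min (δ / (4 * A)) (δ * l / 4), lt_min (by positivity) (by positivity),
      min_le_left _ _, min_le_right _ _⟩
  obtain ⟨s₂, hs₂a, hs₂⟩ := hsmall ε₀ hε₀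
  set s₃ := max s₂ s₁ with hs₃def
  obtain ⟨t, hts, hδt⟩ := hfreq s₃
  have hts₂ : s₂ ≤ t := (le_max_left _ _).trans hts
  have hts₁ : s₁ ≤ t := (le_max_right _ _).trans hts
  have hta : a ≤ t := hs₂a.trans hts₂
  have ht0 : 0 ≤ t := ha.le.trans hta
  have hvt : 0 < v t := hpos t (haT.trans_le hta)
  have hvtε : v t < ε₀ := hs₂ t hts₂
  have hvtl : 0 < v (t + l) := hpos (t + l) (by linarith [haT.trans_le hta])
  have hvtlε : v (t + l) < ε₀ := hs₂ (t + l) (by linarith)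
  rcases le_abs.1 hδt with hcase | hcase
  · -- deriv K t ≥ δ : v decreases by δ l / 2, going negative
    have hplow : ∀ z, t ≤ z → z ≤ t + l → -(α z * v z) - deriv K z ≤ -(δ / 2) := by
      intro z hz1 hz2
      have hzl : |deriv K z - deriv K t| ≤ Mb' * (z - t) := hlip t z ht0 hz1
      have h2 : Mb' * (z - t) ≤ Mb' * l := mul_le_mul_of_nonneg_left (by linarith) hMb'.le
      have h3 : Mb' * l = δ / 2 := by rw [hldef]; field_simp
      have h4 : δ / 2 ≤ deriv K z := by
        have := abs_le.1 hzl
        linarith [this.1]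
      have h5 : 0 ≤ α z * v z :=
        mul_nonneg (hα0.le.trans (hαge z (ht0.trans hz1))) (hVnn z (hta.trans hz1))
      linarith
    have h1 : v (t + l) - v t = ∫ z in t..t + l, (-(α z * v z) - deriv K z) := by
      refine (integral_eq_sub_of_hasDerivAt (fun z hz => ?_) (hIf ht0 (by linarith))).symm
      rw [Set.uIcc_of_le (by linarith : t ≤ t + l)] at hz
      exact hv z (ht0.trans hz.1)
    have h2 : (∫ z in t..t + l, (-(α z * v z) - deriv K z)) ≤ ∫ z in t..t + l, (-(δ/2)) := by
      refine intervalIntegral.integral_mono_on (by linarith) (hIf ht0 (by linarith))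
        intervalIntegrable_const (fun z hz => hplow z hz.1 hz.2)
    rw [intervalIntegral.integral_const, smul_eq_mul] at h2
    have h3 : (t + l - t) * -(δ/2) = -(δ * l / 2) := by ring
    linarith [hε₀l']
  · -- deriv K t ≤ -δ : v increases beyond ε₀
    have hcase' : deriv K t ≤ -δ := by linarith [hcase]
    have hplow : ∀ z, t ≤ z → z ≤ t + l → δ / 4 ≤ -(α z * v z) - deriv K z := by
      intro z hz1 hz2
      have hzl : |deriv K z - deriv K t| ≤ Mb' * (z - t) := hlip t z ht0 hz1
      have h2 : Mb' * (z - t) ≤ Mb' * l := mul_le_mul_of_nonneg_left (by linarith) hMb'.le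
      have h3 : Mb' * l = δ / 2 := by rw [hldef]; field_simp
      have h4 : deriv K z ≤ -(δ / 2) := by
        have := abs_le.1 hzl
        linarith [this.2]
      have h5 : α z * v z ≤ A * ε₀ := by
        have hαz : α z ≤ A := hA z (hts₁.trans hz1)
        have hvz : v z < ε₀ := hs₂ z (hts₂.trans hz1)
        have hvz0 : 0 ≤ v z := hVnn z (hta.trans hz1)
        have hαz0 : 0 < α z := hα0.trans_le (hαge z (ht0.trans hz1))
        exact mul_le_mul hαz hvz.le hvz0 (hαz0.le.trans hαz)
      have h6 : A * ε₀ ≤ δ / 4 := by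
        have h7 : A * ε₀ ≤ A * (δ / (4 * A)) := mul_le_mul_of_nonneg_left hε₀A hApos.le
        have h8 : A * (δ / (4 * A)) = δ / 4 := by
          field_simp
        linarith only [h7, h8]
      linarith only [h4, h5, h6]
    have h1 : v (t + l) - v t = ∫ z in t..t + l, (-(α z * v z) - deriv K z) := by
      refine (integral_eq_sub_of_hasDerivAt (fun z hz => ?_) (hIf ht0 (by linarith))).symm
      rw [Set.uIcc_of_le (by linarith : t ≤ t + l)] at hz
      exact hv z (ht0.trans hz.1)
    have h2 : (∫ z in t..t + l, (δ/4)) ≤ ∫ z in t..t + l, (-(α z * v z) - deriv K z) := by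
      refine intervalIntegral.integral_mono_on (by linarith) intervalIntegrable_const
        (hIf ht0 (by linarith)) (fun z hz => hplow z hz.1 hz.2)
    rw [intervalIntegral.integral_const, smul_eq_mul] at h2
    have h3 : (t + l - t) * (δ/4) = δ * l / 4 := by ring
    linarith [hε₀l']

private lemma roots_unbounded (K : ℝ → ℝ) (hK : AnalyticOnNhd ℝ K Set.univ)
    (hl_not0 : ¬ Tendsto (deriv K) atTop (nhds 0))
    (hroot : ∀ a : ℝ, 0 < a → ∃ τ : ℝ, a < τ ∧ K τ = K a)
    (a : ℝ) (ha : 0 < a) : ∀ b : ℝ, ∃ τ : ℝ, b < τ ∧ a < τ ∧ K τ = K a := by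
  by_contra hcon
  push_neg at hcon
  obtain ⟨b, hb⟩ := hcon
  -- S is nonempty and bounded above
  set S : Set ℝ := {τ | a < τ ∧ K τ = K a} with hS
  have hSne : S.Nonempty := (hroot a ha).imp fun τ h => h
  have hext : ∀ s ∈ S, ∃ s' ∈ S, s < s' := by
    intro s hs
    obtain ⟨τ, hτ1, hτ2⟩ := hroot s (ha.trans hs.1)
    exact ⟨τ, ⟨hs.1.trans hτ1, hτ2.trans hs.2⟩, hτ1⟩
  have hSbdd : BddAbove S := by
    refine ⟨b, fun τ hτ => ?_⟩
    by_contra h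
    push_neg at h
    exact hb τ h hτ.1 hτ.2
  set L := sSup S with hL
  have hLnotS : L ∉ S := by
    intro hLS
    obtain ⟨s', hs'S, hs'⟩ := hext L hLS
    exact absurd (le_csSup hSbdd hs'S) (not_le.2 hs')
  have hfreq : ∃ᶠ z in 𝓝[≠] L, K z = K a := by
    rw [Filter.frequently_iff]
    intro U hU
    rw [mem_nhdsWithin] at hU
    obtain ⟨V, hVopen, hLV, hVU⟩ := hU
    obtain ⟨ε, hε, hball⟩ := Metric.isOpen_iff.1 hVopen L hLV
    obtain ⟨x, hxS, hx⟩ := exists_lt_of_lt_csSup hSne (by linarith : L - ε < L)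
    have hxle : x ≤ L := le_csSup hSbdd hxS
    have hxne : x ≠ L := fun h => hLnotS (h ▸ hxS)
    refine ⟨x, hVU ⟨hball ?_, hxne⟩, hxS.2⟩
    rw [Metric.mem_ball, Real.dist_eq, abs_lt]
    constructor <;> linarith
  have heq : Set.EqOn K (fun _ => K a) Set.univ :=
    hK.eqOn_of_preconnected_of_frequently_eq (analyticOnNhd_const)
      isPreconnected_univ (Set.mem_univ L) hfreq
  have hKconst : K = fun _ => K a := funext fun x => heq (Set.mem_univ x)
  apply hl_not0
  rw [hKconst]
  simp only [deriv_const']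
  exact tendsto_const_nhds

/-- Theorem 3: let `K` be real-analytic with `λ = K'` and `λ'` bounded on `[0, ∞)`, `λ` not
tending to zero, and such that for every `a > 0` the equation `K(τ) = K(a)` has a root
strictly larger than `a`. Then the solution of the reduced system `α' = u²`,
`u' = -αu - λ(τ)` with `α(0) > 0`, `u(0) = 0` has infinitely many zeros of `u` on `(0, ∞)`. -/
theorem u_has_infinitely_many_zeros
    (K α u : ℝ → ℝ)
    (hK : AnalyticOnNhd ℝ K Set.univ)
    (hl_bdd : ∃ M : ℝ, ∀ τ : ℝ, 0 ≤ τ → |deriv K τ| ≤ M)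
    (hl'_bdd : ∃ M : ℝ, ∀ τ : ℝ, 0 ≤ τ → |deriv (deriv K) τ| ≤ M)
    (hl_not0 : ¬ Tendsto (deriv K) atTop (nhds 0))
    (hroot : ∀ a : ℝ, 0 < a → ∃ τ : ℝ, a < τ ∧ K τ = K a)
    (hα : ∀ τ : ℝ, 0 ≤ τ → HasDerivAt α (u τ ^ 2) τ)
    (hu : ∀ τ : ℝ, 0 ≤ τ → HasDerivAt u (-(α τ * u τ) - deriv K τ) τ)
    (hα0 : 0 < α 0) (hu0 : u 0 = 0) :
    {τ : ℝ | 0 < τ ∧ u τ = 0}.Infinite := by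
  obtain ⟨M, hM⟩ := hl_bdd
  obtain ⟨M', hM'⟩ := hl'_bdd
  by_contra hfin
  rw [Set.not_infinite] at hfin
  obtain ⟨B, hB⟩ := hfin.bddAbove
  set T := max B 0 with hTdef
  have hT : 0 ≤ T := le_max_right _ _
  have hne : ∀ τ : ℝ, T < τ → u τ ≠ 0 := by
    intro τ hτ h0
    have hτ0 : 0 < τ := lt_of_le_of_lt hT hτ
    have : τ ∈ {τ : ℝ | 0 < τ ∧ u τ = 0} := ⟨hτ0, h0⟩
    have := hB this
    have : τ ≤ T := this.trans (le_max_left _ _)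
    exact absurd hτ (not_lt.2 this)
  -- extract the frequently-large property of deriv K
  obtain ⟨δ, hδ, hfreq⟩ : ∃ δ : ℝ, 0 < δ ∧ ∀ s : ℝ, ∃ t, s ≤ t ∧ δ ≤ |deriv K t| := by
    by_contra h
    push_neg at h
    apply hl_not0
    rw [Metric.tendsto_atTop]
    intro ε hε
    obtain ⟨s, hs⟩ := h ε hε
    exact ⟨s, fun n hn => by
      rw [Real.dist_eq, sub_zero]
      exact hs n hn⟩
  have hcont : ∀ t : ℝ, 0 ≤ t → ContinuousAt u t := fun t ht => (hu t ht).continuousAt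
  -- sign dichotomy beyond T
  have ivt : ∀ σ τ : ℝ, T < σ → T < τ → u σ < 0 → 0 < u τ → False := by
    intro σ τ hσ hτ huσ huτ
    have hcl : ContinuousOn u (Set.uIcc σ τ) := by
      intro z hz
      rcases Set.mem_uIcc.1 hz with ⟨h1, _⟩ | ⟨h1, _⟩
      · exact (hcont z ((hT.trans hσ.le).trans h1)).continuousWithinAt
      · exact (hcont z ((hT.trans hτ.le).trans h1)).continuousWithinAt
    have h0m : (0:ℝ) ∈ Set.uIcc (u σ) (u τ) := Set.mem_uIcc.2 (Or.inl ⟨huσ.le, huτ.le⟩)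
    obtain ⟨z, hzI, hz0⟩ := intermediate_value_uIcc hcl h0m
    have hTz : T < z := by
      rcases Set.mem_uIcc.1 hzI with ⟨h1, _⟩ | ⟨h1, _⟩
      · exact lt_of_lt_of_le hσ h1
      · exact lt_of_lt_of_le hτ h1
    exact hne z hTz hz0
  have h1 : u (T + 1) ≠ 0 := hne (T + 1) (by linarith)
  have hsign : (∀ τ : ℝ, T < τ → 0 < u τ) ∨ (∀ τ : ℝ, T < τ → u τ < 0) := by
    rcases h1.lt_or_gt with hneg1 | hpos1
    · right
      intro τ hτ
      rcases (hne τ hτ).lt_or_gt with h | h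
      · exact h
      · exact absurd (ivt (T + 1) τ (by linarith) hτ hneg1 h) not_false
    · left
      intro τ hτ
      rcases (hne τ hτ).lt_or_gt with h | h
      · exact absurd (ivt τ (T + 1) hτ (by linarith) h hpos1) not_false
      · exact h
  rcases hsign with hpos | hneg
  · exact core K α u hK M hM M' hM' δ hδ hfreq
      (fun a ha => roots_unbounded K hK hl_not0 hroot a ha) hα hu hα0 T hT hpos
  · -- apply core to -K, -u
    have hKneg : AnalyticOnNhd ℝ (fun x => -K x) Set.univ := hK.neg
    have hdneg : (fun x => deriv (fun y => -K y) x) = fun x => -deriv K x :=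
      funext fun x => deriv.neg
    have hd2neg : ∀ τ : ℝ, deriv (deriv (fun y => -K y)) τ = -deriv (deriv K) τ := by
      intro τ
      rw [show deriv (fun y => -K y) = fun x => -deriv K x from hdneg]
      exact deriv.neg
    have hlnot0' : ¬ Tendsto (deriv (fun y => -K y)) atTop (nhds 0) := by
      intro h
      apply hl_not0
      have h2 : Tendsto (fun x => -(deriv (fun y => -K y) x)) atTop (nhds (-0)) := h.neg
      rw [neg_zero] at h2
      convert h2 using 1
      funext x
      rw [show deriv (fun y => -K y) = fun x => -deriv K x from hdneg, neg_neg]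
    refine core (fun x => -K x) α (fun x => -u x) hKneg M ?_ M' ?_ δ hδ ?_ ?_ ?_ ?_ hα0 T hT ?_
    · intro τ hτ
      rw [show deriv (fun y => -K y) = fun x => -deriv K x from hdneg, abs_neg]
      exact hM τ hτ
    · intro τ hτ
      rw [hd2neg τ, abs_neg]
      exact hM' τ hτ
    · intro s
      obtain ⟨t, ht1, ht2⟩ := hfreq s
      refine ⟨t, ht1, ?_⟩
      rw [show deriv (fun y => -K y) = fun x => -deriv K x from hdneg, abs_neg]
      exact ht2
    · intro a ha b
      have hroot' : ∀ a : ℝ, 0 < a → ∃ τ : ℝ, a < τ ∧ (fun x => -K x) τ = (fun x => -K x) a := by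
        intro a ha
        obtain ⟨τ, hτ1, hτ2⟩ := hroot a ha
        exact ⟨τ, hτ1, by simp [hτ2]⟩
      exact roots_unbounded (fun x => -K x) hKneg hlnot0' hroot' a ha b
    · intro τ hτ
      have := hα τ hτ
      rwa [show (-u τ) ^ 2 = u τ ^ 2 from neg_sq _]
    · intro τ hτ
      have h1 := (hu τ hτ).neg
      have h2 : -(α τ * -u τ) - deriv (fun y => -K y) τ = -(-(α τ * u τ) - deriv K τ) := by
        rw [show deriv (fun y => -K y) = fun x => -deriv K x from hdneg]
        ring
      rw [h2]
      exact h1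
    · intro τ hτ
      exact neg_pos.2 (hneg τ hτ)
end

section
/- Let K : ℝ → ℝ be a nonconstant real-analytic periodic function with period T > 0, let λ = K', and let (α, u) : [0, ∞) → ℝ² be a solution of the reduced system α' = u², u' = −αu − λ(τ) with α(0) > 0 and u(0) = 0. Then u has infinitely many zeros on (0, ∞), and the distance between neighboring zeros does not exceed T; in particular, for every zero a ≥ 0 of u there is another zero of u in the interval (a, a + T]. -/
open Filter

/-- Corollary to Theorem 3: let `K` be a nonconstant real-analytic `T`-periodic function,
`λ = K'`, and let `(α, u)` solve the reduced system `α' = u²`, `u' = -αu - λ(τ)` with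
`α(0) > 0`, `u(0) = 0`. Then `u` has infinitely many zeros on `(0, ∞)`, and the distance
between neighboring zeros does not exceed `T`: after every zero `a ≥ 0` of `u` there is
another zero in `(a, a + T]`. -/
theorem u_zeros_periodic_rotor
    (T : ℝ) (hT : 0 < T)
    (K α u : ℝ → ℝ)
    (hK : AnalyticOnNhd ℝ K Set.univ)
    (hKper : Function.Periodic K T)
    (hKnonconst : ∃ x y : ℝ, K x ≠ K y)
    (hα : ∀ τ : ℝ, 0 ≤ τ → HasDerivAt α (u τ ^ 2) τ)
    (hu : ∀ τ : ℝ, 0 ≤ τ → HasDerivAt u (-(α τ * u τ) - deriv K τ) τ)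
    (hα0 : 0 < α 0) (hu0 : u 0 = 0) :
    {τ : ℝ | 0 < τ ∧ u τ = 0}.Infinite ∧
      ∀ a : ℝ, 0 ≤ a → u a = 0 → ∃ b ∈ Set.Ioc a (a + T), u b = 0 := by
  have hKc : ContDiff ℝ 2 K := by
    have h := hK.contDiffOn (n := 2) uniqueDiffOn_univ
    rwa [contDiffOn_univ] at h
  have hKdc : Continuous (deriv K) := hKc.continuous_deriv (by norm_num)
  have huc : ∀ τ : ℝ, 0 ≤ τ → ContinuousAt u τ := fun τ hτ => (hu τ hτ).continuousAt
  have hαc : ∀ τ : ℝ, 0 ≤ τ → ContinuousAt α τ := fun τ hτ => (hα τ hτ).continuousAt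
  have hαmono : MonotoneOn α (Set.Ici 0) := by
    apply monotoneOn_of_deriv_nonneg (convex_Ici 0)
      (fun x hx => (hαc x hx).continuousWithinAt)
    · intro x hx
      rw [interior_Ici] at hx
      exact (hα x hx.le).differentiableAt.differentiableWithinAt
    · intro x hx
      rw [interior_Ici] at hx
      rw [(hα x hx.le).deriv]
      positivity
  have hαpos : ∀ τ : ℝ, 0 ≤ τ → 0 < α τ := fun τ hτ =>
    lt_of_lt_of_le hα0 (hαmono Set.self_mem_Ici hτ hτ)
  have key : ∀ a : ℝ, 0 ≤ a → u a = 0 → ∃ b ∈ Set.Ioc a (a + T), u b = 0 := by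
    intro a ha hua
    by_contra hcon
    push_neg at hcon
    have haT : a < a + T := by linarith
    have hIcc : Set.uIcc a (a + T) = Set.Icc a (a + T) := Set.uIcc_of_le haT.le
    have hsub : Set.Icc a (a + T) ⊆ Set.Ici (0 : ℝ) := fun x hx => le_trans ha hx.1
    have hucOn : ContinuousOn u (Set.Icc a (a + T)) :=
      fun x hx => (huc x (hsub hx)).continuousWithinAt
    have hαuOn : ContinuousOn (fun x => α x * u x) (Set.Icc a (a + T)) :=
      ContinuousOn.mul (fun x hx => (hαc x (hsub hx)).continuousWithinAt) hucOn
    have hderiv : ∀ x ∈ Set.uIcc a (a + T), HasDerivAt u (-(α x * u x) - deriv K x) x := by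
      intro x hx
      rw [hIcc] at hx
      exact hu x (hsub hx)
    have hint1 : IntervalIntegrable (fun x => α x * u x) MeasureTheory.volume a (a + T) := by
      apply ContinuousOn.intervalIntegrable
      rwa [hIcc]
    have hint2 : IntervalIntegrable (deriv K) MeasureTheory.volume a (a + T) :=
      hKdc.intervalIntegrable _ _
    have hint1' : IntervalIntegrable (fun x => -(α x * u x)) MeasureTheory.volume a (a + T) :=
      hint1.neg
    have hFint : IntervalIntegrable (fun x => -(α x * u x) - deriv K x)
        MeasureTheory.volume a (a + T) := hint1.neg.sub hint2
    have hFTC := intervalIntegral.integral_eq_sub_of_hasDerivAt hderiv hFint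
    have hK0 : (∫ x in a..(a + T), deriv K x) = 0 := by
      have hKd : ∀ x ∈ Set.uIcc a (a + T), HasDerivAt K (deriv K x) x := fun x _ =>
        ((hKc.differentiable two_ne_zero) x).hasDerivAt
      rw [intervalIntegral.integral_eq_sub_of_hasDerivAt hKd hint2, hKper a, sub_self]
    have hsplit : (∫ x in a..(a + T), (-(α x * u x) - deriv K x))
        = -(∫ x in a..(a + T), α x * u x) := by
      rw [intervalIntegral.integral_sub hint1' hint2, hK0, sub_zero,
        intervalIntegral.integral_neg]
    have hEq : u (a + T) = -(∫ x in a..(a + T), α x * u x) := by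
      rw [← hsplit, hFTC, hua, sub_zero]
    have hbT : a + T ∈ Set.Ioc a (a + T) := ⟨haT, le_refl _⟩
    have huT := hcon _ hbT
    rcases huT.lt_or_gt with hneg | hpos
    · -- u (a+T) < 0 : show u < 0 on Ioc
      have hall : ∀ b ∈ Set.Ioc a (a + T), u b < 0 := by
        intro b hb
        rcases (hcon b hb).lt_or_gt with hb' | hb'
        · exact hb'
        · exfalso
          have hmem : (0 : ℝ) ∈ Set.Icc (u (a + T)) (u b) := ⟨hneg.le, hb'.le⟩
          have hsub2 : Set.Icc b (a + T) ⊆ Set.Icc a (a + T) :=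
            Set.Icc_subset_Icc hb.1.le le_rfl
          have := intermediate_value_Icc' hb.2 (hucOn.mono hsub2) hmem
          obtain ⟨c, hc, hc0⟩ := this
          exact hcon c ⟨lt_of_lt_of_le hb.1 hc.1, hc.2⟩ hc0
      have hpos' : 0 < ∫ x in a..(a + T), -(α x * u x) := by
        apply intervalIntegral.intervalIntegral_pos_of_pos_on hint1' _ haT
        intro x hx
        have hx' : x ∈ Set.Ioc a (a + T) := ⟨hx.1, hx.2.le⟩
        have := mul_neg_of_pos_of_neg (hαpos x (le_trans ha hx.1.le)) (hall x hx')
        linarith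
      rw [intervalIntegral.integral_neg] at hpos'
      -- hEq : u (a+T) = -∫ αu, hpos' : 0 < -∫, so u (a+T) > 0, contradiction
      linarith [hEq ▸ hneg]
    · -- u (a+T) > 0 : show u > 0 on Ioc
      have hall : ∀ b ∈ Set.Ioc a (a + T), 0 < u b := by
        intro b hb
        rcases (hcon b hb).lt_or_gt with hb' | hb'
        · exfalso
          have hmem : (0 : ℝ) ∈ Set.Icc (u b) (u (a + T)) := ⟨hb'.le, hpos.le⟩
          have hsub2 : Set.Icc b (a + T) ⊆ Set.Icc a (a + T) :=
            Set.Icc_subset_Icc hb.1.le le_rfl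
          have := intermediate_value_Icc hb.2 (hucOn.mono hsub2) hmem
          obtain ⟨c, hc, hc0⟩ := this
          exact hcon c ⟨lt_of_lt_of_le hb.1 hc.1, hc.2⟩ hc0
        · exact hb'
      have hpos' : 0 < ∫ x in a..(a + T), α x * u x := by
        apply intervalIntegral.intervalIntegral_pos_of_pos_on hint1 _ haT
        intro x hx
        exact mul_pos (hαpos x (le_trans ha hx.1.le)) (hall x ⟨hx.1, hx.2.le⟩)
      linarith
  refine ⟨?_, key⟩
  intro hfin
  obtain ⟨b0, hb0, hub0⟩ := key 0 le_rfl hu0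
  have hb0' : b0 ∈ {τ : ℝ | 0 < τ ∧ u τ = 0} := ⟨by simpa using hb0.1, hub0⟩
  obtain ⟨m, hm, hmax⟩ := Set.Finite.exists_maximalFor id _ hfin ⟨b0, hb0'⟩
  obtain ⟨b, hb, hub⟩ := key m hm.1.le hm.2
  have : m = b := le_antisymm hb.1.le (hmax (j := b) ⟨lt_trans hm.1 hb.1, hub⟩ hb.1.le)
  exact absurd this (ne_of_lt hb.1)
end

section
/- Let λ : ℝ → ℝ be a continuous T-periodic function with λ_m = sup_τ |λ(τ)| > 0 and let μ > 0. Then the reduced system with viscous friction α' = u² − α, u' = −αu − λ(τ) − μu has at least one T-periodic solution whose values remain in the rectangle D = { (α, u) : 0 ≤ α ≤ (λ_m/μ)², |u| ≤ λ_m/μ }. -/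
open Filter

section FrictionAux

open Set Real

/-- Clamp a real number to the interval `[lo, hi]`. -/
noncomputable def fclamp (lo hi y : ℝ) : ℝ := min (max y lo) hi

lemma fclamp_mem {lo hi : ℝ} (h : lo ≤ hi) (y : ℝ) : fclamp lo hi y ∈ Set.Icc lo hi := by
  unfold fclamp
  constructor
  · exact le_min (le_max_right _ _) h
  · exact min_le_right _ _

lemma fclamp_eq {lo hi y : ℝ} (h1 : lo ≤ y) (h2 : y ≤ hi) : fclamp lo hi y = y := by
  unfold fclamp
  rw [max_eq_left h1, min_eq_left h2]

lemma min_lip (x y c : ℝ) : |min x c - min y c| ≤ |x - y| := by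
  have h1 : x - y ≤ |x - y| := le_abs_self _
  have h2 : -|x - y| ≤ x - y := neg_abs_le _
  have h3 : (0 : ℝ) ≤ |x - y| := abs_nonneg _
  rcases le_total x c with h | h <;> rcases le_total y c with h' | h'
  · rw [min_eq_left h, min_eq_left h']
  · rw [min_eq_left h, min_eq_right h', abs_sub_le_iff]; constructor <;> linarith
  · rw [min_eq_right h, min_eq_left h', abs_sub_le_iff]; constructor <;> linarith
  · rw [min_eq_right h, min_eq_right h']; simpa using h3

lemma fclamp_lip (lo hi a b : ℝ) : |fclamp lo hi a - fclamp lo hi b| ≤ |a - b| := by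
  unfold fclamp
  exact (min_lip _ _ _).trans (abs_max_sub_max_le_abs a b lo)

/-- The clamped vector field for the reduced system with friction. -/
noncomputable def vfF (μ M : ℝ) (l : ℝ → ℝ) (τ : ℝ) (x : ℝ × ℝ) : ℝ × ℝ :=
  (fclamp (-M) M x.2 ^ 2 - fclamp 0 (M ^ 2) x.1,
   -(fclamp 0 (M ^ 2) x.1 * fclamp (-M) M x.2) - l τ - μ * fclamp (-M) M x.2)

/-- The invariant rectangle. -/
def boxD (M : ℝ) : Set (ℝ × ℝ) := Set.Icc 0 (M ^ 2) ×ˢ Set.Icc (-M) M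

lemma vfF_eq_of_mem (μ M : ℝ) (l : ℝ → ℝ) (τ : ℝ) {x : ℝ × ℝ} (hx : x ∈ boxD M) :
    vfF μ M l τ x = (x.2 ^ 2 - x.1, -(x.1 * x.2) - l τ - μ * x.2) := by
  obtain ⟨⟨h1, h2⟩, h3, h4⟩ := hx
  simp only [vfF, fclamp_eq h1 h2, fclamp_eq h3 h4]

lemma vfF_lip {μ M : ℝ} (hM : 0 ≤ M) (hμ : 0 ≤ μ) (l : ℝ → ℝ) (τ : ℝ) :
    LipschitzWith (2 * M + 1 + (M ^ 2 + M + μ)).toNNReal (vfF μ M l τ) := by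
  apply LipschitzWith.of_dist_le_mul
  intro x y
  rw [Real.coe_toNNReal _ (by positivity)]
  set pax := fclamp 0 (M ^ 2) x.1 with hpax
  set pay := fclamp 0 (M ^ 2) y.1 with hpay
  set pux := fclamp (-M) M x.2 with hpux
  set puy := fclamp (-M) M y.2 with hpuy
  have hd : 0 ≤ dist x y := dist_nonneg
  have hx1 : |x.1 - y.1| ≤ dist x y := by
    rw [Prod.dist_eq, ← Real.dist_eq]; exact le_max_left _ _
  have hx2 : |x.2 - y.2| ≤ dist x y := by
    rw [Prod.dist_eq, ← Real.dist_eq]; exact le_max_right _ _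
  have hpa : |pax - pay| ≤ dist x y := (fclamp_lip _ _ _ _).trans hx1
  have hpu : |pux - puy| ≤ dist x y := (fclamp_lip _ _ _ _).trans hx2
  have hMM : (0:ℝ) ≤ M ^ 2 := by positivity
  have hmx := fclamp_mem (neg_le_self hM) x.2
  have hmy := fclamp_mem (neg_le_self hM) y.2
  have hax := fclamp_mem hMM x.1
  have hay := fclamp_mem hMM y.1
  have hbx : |pux| ≤ M := abs_le.2 ⟨hmx.1, hmx.2⟩
  have hby : |puy| ≤ M := abs_le.2 ⟨hmy.1, hmy.2⟩
  have hbax : |pax| ≤ M ^ 2 := abs_le.2 ⟨by linarith [hax.1], hax.2⟩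
  have hgoal : dist (vfF μ M l τ x) (vfF μ M l τ y) =
      max (|(vfF μ M l τ x).1 - (vfF μ M l τ y).1|)
        (|(vfF μ M l τ x).2 - (vfF μ M l τ y).2|) := by
    rw [Prod.dist_eq, Real.dist_eq, Real.dist_eq]
  rw [hgoal]
  apply max_le
  · have e1 : (vfF μ M l τ x).1 - (vfF μ M l τ y).1
        = (pux + puy) * (pux - puy) - (pax - pay) := by
      simp only [vfF, ← hpax, ← hpay, ← hpux, ← hpuy]; ring
    have h5 : |pux + puy| ≤ 2 * M := (abs_add_le _ _).trans (by linarith)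
    have t0 : |pux + puy| * |pux - puy| ≤ (2 * M) * dist x y :=
      mul_le_mul h5 hpu (abs_nonneg _) (by linarith)
    calc |(vfF μ M l τ x).1 - (vfF μ M l τ y).1|
        ≤ |(pux + puy) * (pux - puy)| + |pax - pay| := by rw [e1]; exact abs_sub _ _
      _ = |pux + puy| * |pux - puy| + |pax - pay| := by rw [abs_mul]
      _ ≤ (2 * M) * dist x y + dist x y := by linarith
      _ ≤ (2 * M + 1 + (M ^ 2 + M + μ)) * dist x y := by nlinarith
  · have e2 : (vfF μ M l τ x).2 - (vfF μ M l τ y).2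
        = -(pax * (pux - puy)) + (-(puy * (pax - pay))) + (-(μ * (pux - puy))) := by
      simp only [vfF, ← hpax, ← hpay, ← hpux, ← hpuy]; ring
    have t1 : |pax| * |pux - puy| ≤ M ^ 2 * dist x y :=
      mul_le_mul hbax hpu (abs_nonneg _) hMM
    have t2 : |puy| * |pax - pay| ≤ M * dist x y :=
      mul_le_mul hby hpa (abs_nonneg _) hM
    have t3 : μ * |pux - puy| ≤ μ * dist x y := mul_le_mul_of_nonneg_left hpu hμ
    calc |(vfF μ M l τ x).2 - (vfF μ M l τ y).2|
        ≤ |(-(pax * (pux - puy)) + (-(puy * (pax - pay))))| + |(-(μ * (pux - puy)))| := by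
          rw [e2]; exact abs_add_le _ _
      _ ≤ |(-(pax * (pux - puy)))| + |(-(puy * (pax - pay)))| + |(-(μ * (pux - puy)))| := by
          linarith [abs_add_le (-(pax * (pux - puy))) (-(puy * (pax - pay)))]
      _ = |pax| * |pux - puy| + |puy| * |pax - pay| + μ * |pux - puy| := by
          simp [abs_mul, abs_of_nonneg hμ]
      _ ≤ M ^ 2 * dist x y + M * dist x y + μ * dist x y := by linarith
      _ ≤ (2 * M + 1 + (M ^ 2 + M + μ)) * dist x y := by nlinarith

lemma vfF_bound {μ M : ℝ} (hM : 0 ≤ M) (hμ : 0 ≤ μ) {l : ℝ → ℝ}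
    (hlb : ∀ τ, |l τ| ≤ μ * M) (τ : ℝ) (x : ℝ × ℝ) :
    ‖vfF μ M l τ x‖ ≤ 2 * M ^ 2 + M ^ 2 * M + μ * M + μ * M := by
  have hMM : (0:ℝ) ≤ M ^ 2 := by positivity
  have hmx := fclamp_mem (neg_le_self hM) x.2
  have hax := fclamp_mem hMM x.1
  have hbx : |fclamp (-M) M x.2| ≤ M := abs_le.2 ⟨hmx.1, hmx.2⟩
  have hbax : |fclamp 0 (M ^ 2) x.1| ≤ M ^ 2 := abs_le.2 ⟨by linarith [hax.1], hax.2⟩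
  have hl' := hlb τ
  have h1 : |(vfF μ M l τ x).1| ≤ 2 * M ^ 2 := by
    have hsq : |fclamp (-M) M x.2 ^ 2| ≤ M ^ 2 := by
      rw [abs_pow]
      nlinarith [abs_nonneg (fclamp (-M) M x.2)]
    calc |(vfF μ M l τ x).1| ≤ |fclamp (-M) M x.2 ^ 2| + |fclamp 0 (M ^ 2) x.1| := abs_sub _ _
      _ ≤ 2 * M ^ 2 := by linarith [hsq]
  have h2 : |(vfF μ M l τ x).2| ≤ M ^ 2 * M + μ * M + μ * M := by
    have e : (vfF μ M l τ x).2
        = -(fclamp 0 (M ^ 2) x.1 * fclamp (-M) M x.2) + (-(l τ)) + (-(μ * fclamp (-M) M x.2)) := by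
      simp only [vfF]; ring
    have t1 : |fclamp 0 (M ^ 2) x.1 * fclamp (-M) M x.2| ≤ M ^ 2 * M := by
      rw [abs_mul]; exact mul_le_mul hbax hbx (abs_nonneg _) hMM
    have t3 : |μ * fclamp (-M) M x.2| ≤ μ * M := by
      rw [abs_mul, abs_of_nonneg hμ]; exact mul_le_mul_of_nonneg_left hbx hμ
    calc |(vfF μ M l τ x).2|
        ≤ |(-(fclamp 0 (M ^ 2) x.1 * fclamp (-M) M x.2) + (-(l τ)))| + |(-(μ * fclamp (-M) M x.2))| := by
          rw [e]; exact abs_add_le _ _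
      _ ≤ |(-(fclamp 0 (M ^ 2) x.1 * fclamp (-M) M x.2))| + |(-(l τ))| + |(-(μ * fclamp (-M) M x.2))| := by
          linarith [abs_add_le (-(fclamp 0 (M ^ 2) x.1 * fclamp (-M) M x.2)) (-(l τ))]
      _ = |fclamp 0 (M ^ 2) x.1 * fclamp (-M) M x.2| + |l τ| + |μ * fclamp (-M) M x.2| := by
          simp [abs_neg]
      _ ≤ M ^ 2 * M + μ * M + μ * M := by linarith
  rw [Prod.norm_def]
  apply max_le
  · rw [Real.norm_eq_abs]; nlinarith
  · rw [Real.norm_eq_abs]; nlinarith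

lemma exists_global_sol {μ M : ℝ} (hM : 0 ≤ M) (hμ : 0 ≤ μ) {l : ℝ → ℝ}
    (hl : Continuous l) (hlb : ∀ τ, |l τ| ≤ μ * M) (x₀ : ℝ × ℝ) :
    ∃ f : ℝ → ℝ × ℝ, f 0 = x₀ ∧ ∀ t, HasDerivAt f (vfF μ M l t (f t)) t := by
  have Hn : ∀ n : ℕ, ∃ f : ℝ → ℝ × ℝ, f 0 = x₀ ∧
      ∀ t ∈ Set.Icc (-((n : ℝ) + 1)) ((n : ℝ) + 1), HasDerivWithinAt f (vfF μ M l t (f t))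
        (Set.Icc (-((n : ℝ) + 1)) ((n : ℝ) + 1)) t := by
    intro n
    have hn1 : (0:ℝ) ≤ (n : ℝ) + 1 := by positivity
    have hC0nn : (0:ℝ) ≤ 2 * M ^ 2 + M ^ 2 * M + μ * M + μ * M := by positivity
    obtain ⟨f, hf0, hf⟩ := IsPicardLindelof.exists_eq_forall_mem_Icc_hasDerivWithinAt₀
      (tmin := -((n : ℝ) + 1)) (tmax := (n : ℝ) + 1)
      (t₀ := ⟨0, by constructor <;> linarith⟩) (x₀ := x₀)
      (a := ((2 * M ^ 2 + M ^ 2 * M + μ * M + μ * M) * ((n : ℝ) + 1)).toNNReal)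
      (L := (2 * M ^ 2 + M ^ 2 * M + μ * M + μ * M).toNNReal)
      (K := (2 * M + 1 + (M ^ 2 + M + μ)).toNNReal)
      (f := vfF μ M l)
      { lipschitzOnWith := fun t _ => (vfF_lip hM hμ l t).lipschitzOnWith
        continuousOn := fun x _ => by
          apply Continuous.continuousOn
          unfold vfF
          exact continuous_const.prodMk ((continuous_const.sub hl).sub continuous_const)
        norm_le := fun t _ x _ => by
          rw [Real.coe_toNNReal _ hC0nn]; exact vfF_bound hM hμ hlb t x
        mul_max_le := by
          simp only [Real.coe_toNNReal _ hC0nn, NNReal.coe_zero, sub_zero, zero_sub, neg_neg,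
            max_self]
          rw [Real.coe_toNNReal _ (by positivity)] }
    exact ⟨f, hf0, hf⟩
  choose F hF0 hFd using Hn
  have hopen : ∀ n : ℕ, ∀ t ∈ Set.Ioo (-((n : ℝ) + 1)) ((n : ℝ) + 1),
      HasDerivAt (F n) (vfF μ M l t (F n t)) t := by
    intro n t ht
    exact (hFd n t (Set.Ioo_subset_Icc_self ht)).hasDerivAt (Icc_mem_nhds ht.1 ht.2)
  have hagree : ∀ m n : ℕ, m ≤ n → ∀ t ∈ Set.Ioo (-((m : ℝ) + 1)) ((m : ℝ) + 1),
      F m t = F n t := by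
    intro m n hmn t ht
    have hcast : (m : ℝ) ≤ (n : ℝ) := Nat.cast_le.2 hmn
    have hsub : Set.Ioo (-((m : ℝ) + 1)) ((m : ℝ) + 1) ⊆
        Set.Ioo (-((n : ℝ) + 1)) ((n : ℝ) + 1) :=
      Set.Ioo_subset_Ioo (by linarith) (by linarith)
    have := ODE_solution_unique_of_mem_Ioo (v := vfF μ M l) (s := fun _ => Set.univ)
      (f := F m) (g := F n) (t₀ := 0) (a := -((m : ℝ) + 1)) (b := (m : ℝ) + 1)
      (fun s _ => (vfF_lip hM hμ l s).lipschitzOnWith)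
      ⟨by linarith [Nat.cast_nonneg (α := ℝ) m], by linarith [Nat.cast_nonneg (α := ℝ) m]⟩
      (fun s hs => ⟨hopen m s hs, trivial⟩)
      (fun s hs => ⟨hopen n s (hsub hs), trivial⟩)
      ((hF0 m).trans (hF0 n).symm)
    exact this ht
  refine ⟨fun t => F ⌊|t|⌋₊ t, ?_, ?_⟩
  · simpa using hF0 0
  · have hmemIoo : ∀ t : ℝ, t ∈ Set.Ioo (-((⌊|t|⌋₊ : ℝ) + 1)) ((⌊|t|⌋₊ : ℝ) + 1) := by
      intro t
      have h := Nat.lt_floor_add_one |t|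
      have h2 := abs_lt.1 h
      exact ⟨h2.1, h2.2⟩
    have hfeq : ∀ n : ℕ, ∀ t ∈ Set.Ioo (-((n : ℝ) + 1)) ((n : ℝ) + 1),
        F ⌊|t|⌋₊ t = F n t := by
      intro n t ht
      rcases le_total (⌊|t|⌋₊) n with h | h
      · exact hagree _ _ h t (hmemIoo t)
      · exact (hagree n _ h t ht).symm
    intro t
    have h1 : HasDerivAt (F ⌊|t|⌋₊) (vfF μ M l t (F ⌊|t|⌋₊ t)) t := hopen _ t (hmemIoo t)
    have hev : (fun s => F ⌊|s|⌋₊ s) =ᶠ[nhds t] F ⌊|t|⌋₊ := by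
      refine Filter.eventuallyEq_of_mem (isOpen_Ioo.mem_nhds (hmemIoo t)) ?_
      intro s hs
      exact hfeq _ s hs
    exact h1.congr_of_eventuallyEq hev

lemma uniq_sol {μ M : ℝ} (hM : 0 ≤ M) (hμ : 0 ≤ μ) {l : ℝ → ℝ}
    {f g : ℝ → ℝ × ℝ} (hf : ∀ t, HasDerivAt f (vfF μ M l t (f t)) t)
    (hg : ∀ t, HasDerivAt g (vfF μ M l t (g t)) t) {t₀ : ℝ} (h0 : f t₀ = g t₀) : f = g := by
  funext t
  have hb : (0:ℝ) < |t| + |t₀| + 1 := by positivity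
  have htmem : t ∈ Set.Ioo (-(|t| + |t₀| + 1)) (|t| + |t₀| + 1) :=
    ⟨by linarith [neg_abs_le t, abs_nonneg t₀], by linarith [le_abs_self t, abs_nonneg t₀]⟩
  have ht0mem : t₀ ∈ Set.Ioo (-(|t| + |t₀| + 1)) (|t| + |t₀| + 1) :=
    ⟨by linarith [neg_abs_le t₀, abs_nonneg t], by linarith [le_abs_self t₀, abs_nonneg t]⟩
  exact ODE_solution_unique_of_mem_Ioo (v := vfF μ M l) (s := fun _ => Set.univ)
    (fun s _ => (vfF_lip hM hμ l s).lipschitzOnWith) ht0mem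
    (fun s _ => ⟨hf s, trivial⟩) (fun s _ => ⟨hg s, trivial⟩) h0 htmem

lemma relu_sq_deriv (y : ℝ) : HasDerivAt (fun z : ℝ => max z 0 ^ 2) (2 * max y 0) y := by
  rcases lt_trichotomy y 0 with h | h | h
  · have hm : max y 0 = 0 := max_eq_right h.le
    rw [hm, mul_zero]
    have hev : (fun z : ℝ => max z 0 ^ 2) =ᶠ[nhds y] fun _ => (0:ℝ) := by
      refine Filter.eventuallyEq_of_mem (Iio_mem_nhds h) ?_
      intro z hz
      simp [max_eq_right (le_of_lt (Set.mem_Iio.1 hz))]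
    exact (hasDerivAt_const y 0).congr_of_eventuallyEq hev
  · subst h
    have hz : (2:ℝ) * max 0 0 = 0 := by norm_num
    rw [hz, hasDerivAt_iff_isLittleO_nhds_zero]
    refine Asymptotics.isLittleO_iff.2 ?_
    intro c hc
    filter_upwards [eventually_abs_sub_lt 0 hc] with z hz2
    have hz3 : |z| < c := by simpa using hz2
    have h1 : max z 0 ≤ |z| := max_le (le_abs_self z) (abs_nonneg z)
    have h0 : (0:ℝ) ≤ max z 0 := le_max_right _ _
    have he : max (0 + z) 0 ^ 2 - max 0 0 ^ 2 - z • (0:ℝ) = max z 0 ^ 2 := by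
      simp
    rw [he, Real.norm_eq_abs, Real.norm_eq_abs, abs_of_nonneg (by positivity : (0:ℝ) ≤ max z 0 ^ 2)]
    nlinarith [abs_nonneg z]
  · have hm : max y 0 = y := max_eq_left h.le
    rw [hm]
    have hev : (fun z : ℝ => max z 0 ^ 2) =ᶠ[nhds y] fun z => z ^ 2 := by
      refine Filter.eventuallyEq_of_mem (Ioi_mem_nhds h) ?_
      intro z hz
      simp [max_eq_left (le_of_lt (Set.mem_Ioi.1 hz))]
    have hp : HasDerivAt (fun z : ℝ => z ^ 2) (2 * y) y := by
      simpa using hasDerivAt_pow 2 y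
    exact hp.congr_of_eventuallyEq hev

lemma fst_deriv {f : ℝ → ℝ × ℝ} {d : ℝ × ℝ} {t : ℝ} (hf : HasDerivAt f d t) :
    HasDerivAt (fun s => (f s).1) d.1 t := by
  have := (hasFDerivAt_fst (𝕜 := ℝ) (E := ℝ) (F := ℝ) (p := f t)).comp_hasDerivAt t hf
  exact this

lemma snd_deriv {f : ℝ → ℝ × ℝ} {d : ℝ × ℝ} {t : ℝ} (hf : HasDerivAt f d t) :
    HasDerivAt (fun s => (f s).2) d.2 t := by
  have := (hasFDerivAt_snd (𝕜 := ℝ) (E := ℝ) (F := ℝ) (p := f t)).comp_hasDerivAt t hf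
  exact this

lemma invariant {μ M : ℝ} (hM : 0 ≤ M) (hμ : 0 ≤ μ) {l : ℝ → ℝ}
    (hlb : ∀ τ, |l τ| ≤ μ * M) {f : ℝ → ℝ × ℝ}
    (hf : ∀ t, HasDerivAt f (vfF μ M l t (f t)) t) (h0 : f 0 ∈ boxD M) :
    ∀ t, 0 ≤ t → f t ∈ boxD M := by
  have hMM : (0:ℝ) ≤ M ^ 2 := by positivity
  have hfa : ∀ s, HasDerivAt (fun r => (f r).1) ((vfF μ M l s (f s)).1) s :=
    fun s => fst_deriv (hf s)
  have hfu : ∀ s, HasDerivAt (fun r => (f r).2) ((vfF μ M l s (f s)).2) s :=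
    fun s => snd_deriv (hf s)
  have hG' : ∀ s, HasDerivAt
      (fun r => max ((f r).1 - M ^ 2) 0 ^ 2 + max (-(f r).1) 0 ^ 2
        + max ((f r).2 - M) 0 ^ 2 + max (-(f r).2 - M) 0 ^ 2)
      (2 * max ((f s).1 - M ^ 2) 0 * (vfF μ M l s (f s)).1
       + 2 * max (-(f s).1) 0 * (-(vfF μ M l s (f s)).1)
       + 2 * max ((f s).2 - M) 0 * (vfF μ M l s (f s)).2
       + 2 * max (-(f s).2 - M) 0 * (-(vfF μ M l s (f s)).2)) s := by
    intro s
    have d1 : HasDerivAt (fun r => max ((f r).1 - M ^ 2) 0 ^ 2)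
        (2 * max ((f s).1 - M ^ 2) 0 * (vfF μ M l s (f s)).1) s := by
      have := (relu_sq_deriv ((f s).1 - M ^ 2)).comp s ((hfa s).sub_const (M ^ 2))
      exact this
    have d2 : HasDerivAt (fun r => max (-(f r).1) 0 ^ 2)
        (2 * max (-(f s).1) 0 * (-(vfF μ M l s (f s)).1)) s := by
      have := (relu_sq_deriv (-(f s).1)).comp s (hfa s).neg
      exact this
    have d3 : HasDerivAt (fun r => max ((f r).2 - M) 0 ^ 2)
        (2 * max ((f s).2 - M) 0 * (vfF μ M l s (f s)).2) s := by
      have := (relu_sq_deriv ((f s).2 - M)).comp s ((hfu s).sub_const M)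
      exact this
    have d4 : HasDerivAt (fun r => max (-(f r).2 - M) 0 ^ 2)
        (2 * max (-(f s).2 - M) 0 * (-(vfF μ M l s (f s)).2)) s := by
      have := (relu_sq_deriv (-(f s).2 - M)).comp s ((hfu s).neg.sub_const M)
      exact this
    exact ((d1.add d2).add d3).add d4
  have hle : ∀ s,
      (2 * max ((f s).1 - M ^ 2) 0 * (vfF μ M l s (f s)).1
       + 2 * max (-(f s).1) 0 * (-(vfF μ M l s (f s)).1)
       + 2 * max ((f s).2 - M) 0 * (vfF μ M l s (f s)).2
       + 2 * max (-(f s).2 - M) 0 * (-(vfF μ M l s (f s)).2)) ≤ 0 := by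
    intro s
    have hpa := fclamp_mem hMM (f s).1
    have hpu := fclamp_mem (neg_le_self hM) (f s).2
    have hls1 := abs_le.1 (hlb s)
    simp only [vfF]
    set pa := fclamp 0 (M ^ 2) (f s).1 with hpadef
    set pu := fclamp (-M) M (f s).2 with hpudef
    have hpu2 : pu ^ 2 ≤ M ^ 2 := by nlinarith [hpu.1, hpu.2]
    have t1 : 2 * max ((f s).1 - M ^ 2) 0 * (pu ^ 2 - pa) ≤ 0 := by
      rcases le_or_gt (f s).1 (M ^ 2) with h | h
      · rw [max_eq_right (sub_nonpos.2 h)]; simp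
      · have hpa_eq : pa = M ^ 2 := by
          rw [hpadef]; unfold fclamp
          rw [max_eq_left (by linarith), min_eq_right (by linarith)]
        apply mul_nonpos_of_nonneg_of_nonpos
        · have := le_max_right ((f s).1 - M ^ 2) (0:ℝ); linarith
        · rw [hpa_eq]; linarith
    have t2 : 2 * max (-(f s).1) 0 * (-(pu ^ 2 - pa)) ≤ 0 := by
      rcases le_or_gt 0 (f s).1 with h | h
      · rw [max_eq_right (neg_nonpos.2 h)]; simp
      · have hpa_eq : pa = 0 := by
          rw [hpadef]; unfold fclamp
          rw [max_eq_right h.le, min_eq_left hMM]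
        apply mul_nonpos_of_nonneg_of_nonpos
        · have := le_max_right (-(f s).1) (0:ℝ); linarith
        · rw [hpa_eq]; nlinarith [sq_nonneg pu]
    have t3 : 2 * max ((f s).2 - M) 0 * (-(pa * pu) - l s - μ * pu) ≤ 0 := by
      rcases le_or_gt (f s).2 M with h | h
      · rw [max_eq_right (sub_nonpos.2 h)]; simp
      · have hpu_eq : pu = M := by
          rw [hpudef]; unfold fclamp
          rw [max_eq_left (by linarith), min_eq_right h.le]
        apply mul_nonpos_of_nonneg_of_nonpos
        · have := le_max_right ((f s).2 - M) (0:ℝ); linarith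
        · rw [hpu_eq]; nlinarith [mul_nonneg hpa.1 hM, hls1.1]
    have t4 : 2 * max (-(f s).2 - M) 0 * (-(-(pa * pu) - l s - μ * pu)) ≤ 0 := by
      rcases le_or_gt (-M) (f s).2 with h | h
      · rw [max_eq_right (by linarith)]; simp
      · have hpu_eq : pu = -M := by
          rw [hpudef]; unfold fclamp
          rw [max_eq_right h.le, min_eq_left (by linarith)]
        apply mul_nonpos_of_nonneg_of_nonpos
        · have := le_max_right (-(f s).2 - M) (0:ℝ); linarith
        · rw [hpu_eq]; nlinarith [mul_nonneg hpa.1 hM, hls1.2]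
    linarith
  have hGanti : Antitone (fun r => max ((f r).1 - M ^ 2) 0 ^ 2 + max (-(f r).1) 0 ^ 2
      + max ((f r).2 - M) 0 ^ 2 + max (-(f r).2 - M) 0 ^ 2) := by
    apply antitone_of_deriv_nonpos
    · exact fun s => (hG' s).differentiableAt
    · intro s
      rw [(hG' s).deriv]
      exact hle s
  obtain ⟨⟨ha1, ha2⟩, hu1, hu2⟩ := h0
  have hG0 : (fun r => max ((f r).1 - M ^ 2) 0 ^ 2 + max (-(f r).1) 0 ^ 2
      + max ((f r).2 - M) 0 ^ 2 + max (-(f r).2 - M) 0 ^ 2) 0 = 0 := by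
    simp only
    rw [max_eq_right (sub_nonpos.2 ha2), max_eq_right (neg_nonpos.2 ha1),
      max_eq_right (sub_nonpos.2 hu2), max_eq_right (by linarith : -(f 0).2 - M ≤ 0)]
    norm_num
  intro t ht
  have hGt : max ((f t).1 - M ^ 2) 0 ^ 2 + max (-(f t).1) 0 ^ 2
      + max ((f t).2 - M) 0 ^ 2 + max (-(f t).2 - M) 0 ^ 2 ≤ 0 := by
    have := hGanti ht
    rw [hG0] at this
    exact this
  have q1 := sq_nonneg (max ((f t).1 - M ^ 2) 0)
  have q2 := sq_nonneg (max (-(f t).1) 0)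
  have q3 := sq_nonneg (max ((f t).2 - M) 0)
  have q4 := sq_nonneg (max (-(f t).2 - M) 0)
  have m1 : max ((f t).1 - M ^ 2) 0 = 0 := by
    nlinarith [le_max_right ((f t).1 - M ^ 2) (0:ℝ)]
  have m2 : max (-(f t).1) 0 = 0 := by
    nlinarith [le_max_right (-(f t).1) (0:ℝ)]
  have m3 : max ((f t).2 - M) 0 = 0 := by
    nlinarith [le_max_right ((f t).2 - M) (0:ℝ)]
  have m4 : max (-(f t).2 - M) 0 = 0 := by
    nlinarith [le_max_right (-(f t).2 - M) (0:ℝ)]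
  have b1 := le_max_left ((f t).1 - M ^ 2) (0:ℝ)
  have b2 := le_max_left (-(f t).1) (0:ℝ)
  have b3 := le_max_left ((f t).2 - M) (0:ℝ)
  have b4 := le_max_left (-(f t).2 - M) (0:ℝ)
  rw [m1] at b1; rw [m2] at b2; rw [m3] at b3; rw [m4] at b4
  exact ⟨⟨by linarith, by linarith⟩, by linarith, by linarith⟩

lemma contractV {μ M : ℝ} (hμ : 0 < μ) {l : ℝ → ℝ}
    {f g : ℝ → ℝ × ℝ} (hf : ∀ t, HasDerivAt f (vfF μ M l t (f t)) t)
    (hg : ∀ t, HasDerivAt g (vfF μ M l t (g t)) t)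
    {S : ℝ} (hS : 0 ≤ S) (hfD : ∀ t ∈ Set.Icc 0 S, f t ∈ boxD M)
    (hgD : ∀ t ∈ Set.Icc 0 S, g t ∈ boxD M) :
    ((f S).1 - (g S).1) ^ 2 + 2 * ((f S).2 - (g S).2) ^ 2 ≤
      Real.exp (-(2 * min 1 μ) * S) *
        (((f 0).1 - (g 0).1) ^ 2 + 2 * ((f 0).2 - (g 0).2) ^ 2) := by
  set c := min 1 μ with hc
  have hc0 : 0 < c := lt_min one_pos hμ
  have hc1 : c ≤ 1 := min_le_left _ _
  have hc2 : c ≤ μ := min_le_right _ _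
  have hfa : ∀ s, HasDerivAt (fun r => (f r).1) ((vfF μ M l s (f s)).1) s :=
    fun s => fst_deriv (hf s)
  have hfu : ∀ s, HasDerivAt (fun r => (f r).2) ((vfF μ M l s (f s)).2) s :=
    fun s => snd_deriv (hf s)
  have hga : ∀ s, HasDerivAt (fun r => (g r).1) ((vfF μ M l s (g s)).1) s :=
    fun s => fst_deriv (hg s)
  have hgu : ∀ s, HasDerivAt (fun r => (g r).2) ((vfF μ M l s (g s)).2) s :=
    fun s => snd_deriv (hg s)
  have hW' : ∀ s, HasDerivAt
      (fun r => Real.exp (2 * c * r) * (((f r).1 - (g r).1) ^ 2 + 2 * ((f r).2 - (g r).2) ^ 2))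
      (Real.exp (2 * c * s) * (2 * c * (((f s).1 - (g s).1) ^ 2 + 2 * ((f s).2 - (g s).2) ^ 2)
        + (2 * ((f s).1 - (g s).1) * ((vfF μ M l s (f s)).1 - (vfF μ M l s (g s)).1)
           + 4 * ((f s).2 - (g s).2) * ((vfF μ M l s (f s)).2 - (vfF μ M l s (g s)).2)))) s := by
    intro s
    have dV := ((((hfa s).sub (hga s)).pow 2).add ((((hfu s).sub (hgu s)).pow 2).const_mul 2))
    have dE : HasDerivAt (fun r : ℝ => Real.exp (2 * c * r)) (Real.exp (2 * c * s) * (2 * c)) s := by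
      simpa using ((hasDerivAt_id s).const_mul (2 * c)).exp
    have := dE.mul dV
    refine this.congr_deriv ?_
    simp only [Pi.add_apply, Pi.sub_apply, Pi.pow_apply]
    push_cast
    ring
  have hanti : AntitoneOn
      (fun r => Real.exp (2 * c * r) * (((f r).1 - (g r).1) ^ 2 + 2 * ((f r).2 - (g r).2) ^ 2))
      (Set.Icc 0 S) := by
    apply antitoneOn_of_deriv_nonpos (convex_Icc 0 S)
    · exact continuousOn_of_forall_continuousAt fun s _ => (hW' s).differentiableAt.continuousAt
    · intro s hs
      exact (hW' s).differentiableAt.differentiableWithinAt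
    · intro s hs
      rw [interior_Icc] at hs
      rw [(hW' s).deriv]
      have hmf := hfD s (Set.Ioo_subset_Icc_self hs)
      have hmg := hgD s (Set.Ioo_subset_Icc_self hs)
      rw [vfF_eq_of_mem μ M l s hmf, vfF_eq_of_mem μ M l s hmg]
      obtain ⟨⟨ha1, _⟩, _, _⟩ := hmf
      obtain ⟨⟨ha1', _⟩, _, _⟩ := hmg
      apply mul_nonpos_of_nonneg_of_nonpos (Real.exp_pos _).le
      simp only
      nlinarith [mul_nonneg (sub_nonneg.2 hc1) (sq_nonneg ((f s).1 - (g s).1)),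
        mul_nonneg (sub_nonneg.2 hc2) (sq_nonneg ((f s).2 - (g s).2)),
        mul_nonneg ha1 (sq_nonneg ((f s).2 - (g s).2)),
        mul_nonneg ha1' (sq_nonneg ((f s).2 - (g s).2))]
  have hWS : Real.exp (2 * c * S) * (((f S).1 - (g S).1) ^ 2 + 2 * ((f S).2 - (g S).2) ^ 2)
      ≤ ((f 0).1 - (g 0).1) ^ 2 + 2 * ((f 0).2 - (g 0).2) ^ 2 := by
    have := hanti (Set.left_mem_Icc.2 hS) ⟨hS, le_refl S⟩ hS
    simpa using this
  have hE : (0:ℝ) < Real.exp (2 * c * S) := Real.exp_pos _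
  have step := mul_le_mul_of_nonneg_left hWS (le_of_lt (inv_pos.2 hE))
  rw [← mul_assoc, inv_mul_cancel₀ (ne_of_gt hE), one_mul] at step
  rw [show -(2 * c) * S = -(2 * c * S) by ring, Real.exp_neg]
  exact step

lemma dist_sq_le_V (p q : ℝ × ℝ) :
    dist p q ^ 2 ≤ (p.1 - q.1) ^ 2 + 2 * (p.2 - q.2) ^ 2 := by
  rw [Prod.dist_eq, Real.dist_eq, Real.dist_eq]
  rcases max_cases |p.1 - q.1| |p.2 - q.2| with ⟨h, _⟩ | ⟨h, _⟩ <;> rw [h] <;>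
    nlinarith [sq_abs (p.1 - q.1), sq_abs (p.2 - q.2), sq_nonneg (p.1 - q.1),
      sq_nonneg (p.2 - q.2)]

lemma V_le_three_dist_sq (p q : ℝ × ℝ) :
    (p.1 - q.1) ^ 2 + 2 * (p.2 - q.2) ^ 2 ≤ 3 * dist p q ^ 2 := by
  rw [Prod.dist_eq, Real.dist_eq, Real.dist_eq]
  have h1 := le_max_left |p.1 - q.1| |p.2 - q.2|
  have h2 := le_max_right |p.1 - q.1| |p.2 - q.2|
  nlinarith [sq_abs (p.1 - q.1), sq_abs (p.2 - q.2), abs_nonneg (p.1 - q.1),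
    abs_nonneg (p.2 - q.2)]

end FrictionAux

/-- Existence of a periodic solution for the reduced system with viscous friction
`α' = u² - α`, `u' = -αu - λ(τ) - μu`, where `λ` is continuous and `T`-periodic with
`λ_m = sup |λ| > 0` and `μ > 0`: there is at least one `T`-periodic solution whose values
stay in the rectangle `D = {(α, u) : 0 ≤ α ≤ (λ_m/μ)², |u| ≤ λ_m/μ}`. -/
theorem exists_periodic_solution_friction
    (T μ lm : ℝ) (hT : 0 < T) (hμ : 0 < μ)
    (l : ℝ → ℝ) (hl : Continuous l) (hlper : Function.Periodic l T)
    (hlm : IsLUB (Set.range fun τ : ℝ => |l τ|) lm) (hlmpos : 0 < lm) :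
    ∃ α u : ℝ → ℝ,
      (∀ τ : ℝ, HasDerivAt α (u τ ^ 2 - α τ) τ) ∧
      (∀ τ : ℝ, HasDerivAt u (-(α τ * u τ) - l τ - μ * u τ) τ) ∧
      (∀ τ : ℝ, α (τ + T) = α τ ∧ u (τ + T) = u τ) ∧
      (∀ τ : ℝ, 0 ≤ α τ ∧ α τ ≤ (lm / μ) ^ 2 ∧ |u τ| ≤ lm / μ) := by
  set M := lm / μ with hMdef
  have hM0 : 0 < M := div_pos hlmpos hμ
  have hμM : μ * M = lm := by rw [hMdef]; field_simp
  have hlb : ∀ τ, |l τ| ≤ μ * M := by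
    intro τ
    rw [hμM]
    exact hlm.1 ⟨τ, rfl⟩
  choose sol hsol0 hsolD using fun x => exists_global_sol hM0.le hμ.le hl hlb x
  set P : ℝ × ℝ → ℝ × ℝ := fun x => sol x T with hPdef
  have hvfper : ∀ (t : ℝ) (x : ℝ × ℝ), vfF μ M l (t + T) x = vfF μ M l t x := by
    intro t x
    simp only [vfF, hlper t]
  have hshift : ∀ (x : ℝ × ℝ) (t : ℝ),
      HasDerivAt (fun s => sol x (s + T)) (vfF μ M l t (sol x (t + T))) t := by
    intro x t
    have h1 : HasDerivAt (fun s : ℝ => s + T) 1 t := (hasDerivAt_id t).add_const T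
    have h2 := (hsolD x (t + T)).scomp t h1
    rw [one_smul, hvfper t] at h2; exact h2
  have hflow : ∀ x : ℝ × ℝ, sol (P x) = fun s => sol x (s + T) := by
    intro x
    apply uniq_sol hM0.le hμ.le (hsolD (P x)) (hshift x) (t₀ := 0)
    rw [hsol0 (P x)]
    simp [hPdef]
  have hiter : ∀ (x : ℝ × ℝ) (k : ℕ) (s : ℝ), sol (P^[k] x) s = sol x (s + k * T) := by
    intro x k
    induction k generalizing x with
    | zero => intro s; simp
    | succ k ih =>
      intro s
      rw [Function.iterate_succ_apply, ih (P x) s, hflow x]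
      congr 1
      push_cast
      ring
  have hinv : ∀ x ∈ boxD M, ∀ t, 0 ≤ t → sol x t ∈ boxD M := by
    intro x hx t ht
    exact invariant hM0.le hμ.le hlb (hsolD x) (by rw [hsol0 x]; exact hx) t ht
  have hPmaps : ∀ x ∈ boxD M, P x ∈ boxD M := fun x hx => hinv x hx T hT.le
  have hPk : ∀ (k : ℕ), ∀ x ∈ boxD M, P^[k] x ∈ boxD M := by
    intro k
    induction k with
    | zero => intro x hx; simpa using hx
    | succ k ih =>
      intro x hx
      rw [Function.iterate_succ_apply]
      exact ih _ (hPmaps x hx)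
  have hVest : ∀ x ∈ boxD M, ∀ y ∈ boxD M, ∀ k : ℕ,
      ((P^[k] x).1 - (P^[k] y).1) ^ 2 + 2 * ((P^[k] x).2 - (P^[k] y).2) ^ 2 ≤
        Real.exp (-(2 * min 1 μ) * ((k : ℝ) * T)) *
          ((x.1 - y.1) ^ 2 + 2 * (x.2 - y.2) ^ 2) := by
    intro x hx y hy k
    have hkT : (0:ℝ) ≤ (k : ℝ) * T := by positivity
    have h1 := contractV (μ := μ) (M := M) hμ (hsolD x) (hsolD y) hkT
      (fun t ht => hinv x hx t ht.1) (fun t ht => hinv y hy t ht.1)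
    have e1 : sol x ((k : ℝ) * T) = P^[k] x := by
      have h2 := hiter x k 0
      rw [hsol0 (P^[k] x)] at h2
      simpa using h2.symm
    have e2 : sol y ((k : ℝ) * T) = P^[k] y := by
      have h2 := hiter y k 0
      rw [hsol0 (P^[k] y)] at h2
      simpa using h2.symm
    rw [e1, e2, hsol0 x, hsol0 y] at h1
    exact h1
  have hclosed : IsClosed (boxD M) := isClosed_Icc.prod isClosed_Icc
  haveI : CompleteSpace (boxD M) := hclosed.completeSpace_coe
  have hmem00 : ((0:ℝ), (0:ℝ)) ∈ boxD M := by
    refine ⟨⟨le_refl _, by positivity⟩, ⟨?_, ?_⟩⟩ <;> simp <;> linarith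
  haveI : Nonempty (boxD M) := ⟨⟨((0:ℝ), (0:ℝ)), hmem00⟩⟩
  set Φ : boxD M → boxD M := fun x => ⟨P x.1, hPmaps x.1 x.2⟩ with hΦdef
  have hΦk : ∀ (k : ℕ) (x : boxD M), ((Φ^[k] x : boxD M) : ℝ × ℝ) = P^[k] (x : ℝ × ℝ) := by
    intro k
    induction k with
    | zero => intro x; simp
    | succ k ih =>
      intro x
      rw [Function.iterate_succ_apply, Function.iterate_succ_apply]
      exact ih (Φ x)
  have hc0 : 0 < min 1 μ := lt_min one_pos hμ
  have hcT : 0 < min 1 μ * T := by positivity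
  have hnT : 1 ≤ min 1 μ * (((⌈1 / (min 1 μ * T)⌉₊ + 1 : ℕ) : ℝ) * T) := by
    have h1 : 1 / (min 1 μ * T) ≤ ((⌈1 / (min 1 μ * T)⌉₊ + 1 : ℕ) : ℝ) := by
      calc 1 / (min 1 μ * T) ≤ (⌈1 / (min 1 μ * T)⌉₊ : ℝ) := Nat.le_ceil _
        _ ≤ ((⌈1 / (min 1 μ * T)⌉₊ + 1 : ℕ) : ℝ) := by push_cast; linarith
    calc (1:ℝ) = (1 / (min 1 μ * T)) * (min 1 μ * T) := by field_simp
      _ ≤ ((⌈1 / (min 1 μ * T)⌉₊ + 1 : ℕ) : ℝ) * (min 1 μ * T) :=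
          mul_le_mul_of_nonneg_right h1 hcT.le
      _ = min 1 μ * (((⌈1 / (min 1 μ * T)⌉₊ + 1 : ℕ) : ℝ) * T) := by ring
  set n : ℕ := ⌈1 / (min 1 μ * T)⌉₊ + 1 with hndef
  have hθ0 : (0:ℝ) ≤ Real.sqrt 3 * Real.exp (-(min 1 μ * ((n : ℝ) * T))) := by positivity
  have hEx : (0:ℝ) < Real.exp (min 1 μ * ((n : ℝ) * T)) := Real.exp_pos _
  have hθ1 : Real.sqrt 3 * Real.exp (-(min 1 μ * ((n : ℝ) * T))) < 1 := by
    have h2 : Real.sqrt 3 < 2 := by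
      nlinarith [Real.sq_sqrt (by norm_num : (0:ℝ) ≤ 3), Real.sqrt_nonneg 3]
    have h3 : (2:ℝ) ≤ Real.exp (min 1 μ * ((n : ℝ) * T)) := by
      have h4 := Real.add_one_le_exp (min 1 μ * ((n : ℝ) * T))
      linarith
    rw [Real.exp_neg]
    calc Real.sqrt 3 * (Real.exp (min 1 μ * ((n : ℝ) * T)))⁻¹
        < Real.exp (min 1 μ * ((n : ℝ) * T)) * (Real.exp (min 1 μ * ((n : ℝ) * T)))⁻¹ :=
          mul_lt_mul_of_pos_right (by linarith) (inv_pos.2 hEx)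
      _ = 1 := mul_inv_cancel₀ (ne_of_gt hEx)
  have hcontr : ContractingWith
      (Real.sqrt 3 * Real.exp (-(min 1 μ * ((n : ℝ) * T)))).toNNReal (Φ^[n]) := by
    constructor
    · rw [← NNReal.coe_lt_coe, Real.coe_toNNReal _ hθ0, NNReal.coe_one]
      exact hθ1
    · apply LipschitzWith.of_dist_le_mul
      intro x y
      rw [Real.coe_toNNReal _ hθ0, Subtype.dist_eq, Subtype.dist_eq, hΦk n x, hΦk n y]
      have hV := hVest (x : ℝ × ℝ) x.2 (y : ℝ × ℝ) y.2 n
      have hdd := dist_sq_le_V (P^[n] (x : ℝ × ℝ)) (P^[n] (y : ℝ × ℝ))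
      have hdd2 := V_le_three_dist_sq (x : ℝ × ℝ) (y : ℝ × ℝ)
      have hexp2 : (Real.exp (-(min 1 μ * ((n : ℝ) * T)))) ^ 2
          = Real.exp (-(2 * min 1 μ) * ((n : ℝ) * T)) := by
        rw [sq, ← Real.exp_add]
        congr 1
        ring
      have e3 : (Real.sqrt 3 * Real.exp (-(min 1 μ * ((n : ℝ) * T))) *
            dist (x : ℝ × ℝ) (y : ℝ × ℝ)) ^ 2
          = Real.exp (-(2 * min 1 μ) * ((n : ℝ) * T)) *
              (3 * dist (x : ℝ × ℝ) (y : ℝ × ℝ) ^ 2) := by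
        have hs3 : Real.sqrt 3 ^ 2 = 3 := Real.sq_sqrt (by norm_num)
        calc (Real.sqrt 3 * Real.exp (-(min 1 μ * ((n : ℝ) * T))) *
              dist (x : ℝ × ℝ) (y : ℝ × ℝ)) ^ 2
            = Real.sqrt 3 ^ 2 * (Real.exp (-(min 1 μ * ((n : ℝ) * T)))) ^ 2 *
                dist (x : ℝ × ℝ) (y : ℝ × ℝ) ^ 2 := by ring
          _ = Real.exp (-(2 * min 1 μ) * ((n : ℝ) * T)) *
                (3 * dist (x : ℝ × ℝ) (y : ℝ × ℝ) ^ 2) := by rw [hs3, hexp2]; ring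
      have key : dist (P^[n] (x : ℝ × ℝ)) (P^[n] (y : ℝ × ℝ)) ^ 2 ≤
          (Real.sqrt 3 * Real.exp (-(min 1 μ * ((n : ℝ) * T))) *
            dist (x : ℝ × ℝ) (y : ℝ × ℝ)) ^ 2 := by
        calc dist (P^[n] (x : ℝ × ℝ)) (P^[n] (y : ℝ × ℝ)) ^ 2
            ≤ ((P^[n] (x : ℝ × ℝ)).1 - (P^[n] (y : ℝ × ℝ)).1) ^ 2 +
              2 * ((P^[n] (x : ℝ × ℝ)).2 - (P^[n] (y : ℝ × ℝ)).2) ^ 2 := hdd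
          _ ≤ Real.exp (-(2 * min 1 μ) * ((n : ℝ) * T)) *
                (((x : ℝ × ℝ).1 - (y : ℝ × ℝ).1) ^ 2 + 2 * ((x : ℝ × ℝ).2 - (y : ℝ × ℝ).2) ^ 2) := hV
          _ ≤ Real.exp (-(2 * min 1 μ) * ((n : ℝ) * T)) *
                (3 * dist (x : ℝ × ℝ) (y : ℝ × ℝ) ^ 2) :=
              mul_le_mul_of_nonneg_left hdd2 (Real.exp_pos _).le
          _ = _ := e3.symm
      have hs := Real.sqrt_le_sqrt key
      rw [Real.sqrt_sq dist_nonneg, Real.sqrt_sq (mul_nonneg hθ0 dist_nonneg)] at hs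
      exact hs
  have hfix : Function.IsFixedPt Φ (hcontr.fixedPoint (Φ^[n])) :=
    hcontr.isFixedPt_fixedPoint_iterate
  set xstar := hcontr.fixedPoint (Φ^[n]) with hxstar
  have hfixP : P (xstar : ℝ × ℝ) = (xstar : ℝ × ℝ) := congrArg Subtype.val hfix
  have hFd : ∀ t, HasDerivAt (sol (xstar : ℝ × ℝ)) (vfF μ M l t (sol (xstar : ℝ × ℝ) t)) t :=
    hsolD _
  have hper : ∀ t, sol (xstar : ℝ × ℝ) (t + T) = sol (xstar : ℝ × ℝ) t := by
    intro t
    have h1 := hflow (xstar : ℝ × ℝ)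
    rw [hfixP] at h1
    exact (congrFun h1 t).symm
  have hperk : ∀ (k : ℕ) (t : ℝ), sol (xstar : ℝ × ℝ) (t + (k : ℝ) * T) = sol (xstar : ℝ × ℝ) t := by
    intro k
    induction k with
    | zero => intro t; simp
    | succ k ih =>
      intro t
      have he : t + ((k : ℕ) + 1 : ℕ) * T = (t + (k : ℝ) * T) + T := by push_cast; ring
      rw [he, hper, ih]
  have hmemD : ∀ t, sol (xstar : ℝ × ℝ) t ∈ boxD M := by
    intro t
    have h1 : (-t) / T ≤ ((⌈(-t) / T⌉₊ + 1 : ℕ) : ℝ) := by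
      calc (-t) / T ≤ (⌈(-t) / T⌉₊ : ℝ) := Nat.le_ceil _
        _ ≤ ((⌈(-t) / T⌉₊ + 1 : ℕ) : ℝ) := by push_cast; linarith
    have h2 : -t ≤ ((⌈(-t) / T⌉₊ + 1 : ℕ) : ℝ) * T := by
      have := (div_le_iff₀ hT).1 h1
      linarith
    have h3 : 0 ≤ t + ((⌈(-t) / T⌉₊ + 1 : ℕ) : ℝ) * T := by linarith
    have h4 := hinv (xstar : ℝ × ℝ) xstar.2 (t + ((⌈(-t) / T⌉₊ + 1 : ℕ) : ℝ) * T) h3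
    rwa [hperk (⌈(-t) / T⌉₊ + 1) t] at h4
  refine ⟨fun t => (sol (xstar : ℝ × ℝ) t).1, fun t => (sol (xstar : ℝ × ℝ) t).2, ?_, ?_, ?_, ?_⟩
  · intro τ
    have h := fst_deriv (hFd τ)
    rw [vfF_eq_of_mem μ M l τ (hmemD τ)] at h
    simpa using h
  · intro τ
    have h := snd_deriv (hFd τ)
    rw [vfF_eq_of_mem μ M l τ (hmemD τ)] at h
    simpa using h
  · intro τ
    exact ⟨congrArg Prod.fst (hper τ), congrArg Prod.snd (hper τ)⟩
  · intro τ
    obtain ⟨⟨h1, h2⟩, h3, h4⟩ := hmemD τ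
    exact ⟨h1, h2, abs_le.2 ⟨h3, h4⟩⟩
end
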